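/- arXiv:2603.15576 — 8 statements merged into one kernel-verified Lean document; each statement's English description precedes it below -/
import Mathlib

section
/- Let η > 0 and γ > 0 be real numbers and let x⋆, x, y, y⁺, e, w, ŵ be vectors in ℝ^p satisfying x = y − η·ŵ and y⁺ = y − η·(w + e). Then ‖y⁺ − x⋆‖² ≤ ‖y − x⋆‖² − 2η⟨w, x − x⋆⟩ − ‖y − x‖² + (η/γ)‖w − ŵ‖² − (1 − γη)‖y⁺ − x‖² − 2η⟨e, y − x⋆⟩ + 2η²⟨e, w⟩ + 2η²‖e‖². (This is the key one-iteration estimate of the inexact forward-reflected-backward splitting scheme, Lemma 2.1, where w − ŵ plays the role of Gx_k − Gx_{k−1}.) -/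
open scoped RealInnerProductSpace

/-- Key one-iteration estimate of the inexact forward-reflected-backward splitting scheme
(Lemma 2.1). -/
theorem stmt_0 {p : ℕ} (η γ : ℝ) (hη : 0 < η) (hγ : 0 < γ)
    (xstar x y yplus e w what : EuclideanSpace ℝ (Fin p))
    (hx : x = y - η • what)
    (hyplus : yplus = y - η • (w + e)) :
    ‖yplus - xstar‖ ^ 2 ≤
      ‖y - xstar‖ ^ 2 - 2 * η * ⟪w, x - xstar⟫ - ‖y - x‖ ^ 2
        + (η / γ) * ‖w - what‖ ^ 2 - (1 - γ * η) * ‖yplus - x‖ ^ 2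
        - 2 * η * ⟪e, y - xstar⟫ + 2 * η ^ 2 * ⟪e, w⟫ + 2 * η ^ 2 * ‖e‖ ^ 2 := by
  have key : (0:ℝ) ≤ (η / γ) * ‖(w - what) + γ • (yplus - x)‖ ^ 2 :=
    mul_nonneg (div_pos hη hγ).le (by positivity)
  have hγ' : γ ≠ 0 := ne_of_gt hγ
  have main : ‖yplus - xstar‖ ^ 2 + (η / γ) * ‖(w - what) + γ • (yplus - x)‖ ^ 2 =
      ‖y - xstar‖ ^ 2 - 2 * η * ⟪w, x - xstar⟫ - ‖y - x‖ ^ 2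
        + (η / γ) * ‖w - what‖ ^ 2 - (1 - γ * η) * ‖yplus - x‖ ^ 2
        - 2 * η * ⟪e, y - xstar⟫ + 2 * η ^ 2 * ⟪e, w⟫ + 2 * η ^ 2 * ‖e‖ ^ 2 := by
    subst hx hyplus
    simp only [← real_inner_self_eq_norm_sq]
    simp only [inner_sub_left, inner_sub_right, inner_add_left, inner_add_right,
      real_inner_smul_left, real_inner_smul_right]
    simp only [real_inner_comm]
    ring_nf
    field_simp
    ring
  linarith
end

section
/- Under the VrFRBS recursion, the unbiased variance-reduced estimator condition (Definition 1), and the definition of P_k with a parameter γ > 0, for every k ≥ 0 and every real c > 0 the following holds almost surely: μ[P_{k+1} | ℱ_k] ≤ P_k − [1 − 4ρ/η − 2L²η(4ρ + 1/γ + c)]·‖y_k − x_k‖² − [1 − γη − 2L²η(4ρ + 1/γ + c)]·‖y_k − x_{k−1}‖² − (η(cκL² − 2η(Θ + Θ̂))/κ)·‖x_k − x_{k−1}‖² + 2η²δ_k/κ. (Lemma 3.3.) -/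
set_option maxHeartbeats 1000000
open MeasureTheory Filter
open scoped RealInnerProductSpace


lemma aux_abs_apply_le_norm {p : ℕ} (v : EuclideanSpace ℝ (Fin p)) (i : Fin p) :
    |v i| ≤ ‖v‖ := by
  have h1 : v i = ⟪EuclideanSpace.single i (1:ℝ), v⟫ := by
    simp [EuclideanSpace.inner_single_left]
  have h2 := abs_real_inner_le_norm (EuclideanSpace.single i (1:ℝ)) v
  rw [EuclideanSpace.norm_single] at h2
  rw [h1]
  simpa using h2

lemma aux_integrable_mul_L2 {Ω : Type*} {m0 : MeasurableSpace Ω} {μ : Measure Ω}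
    {f g : Ω → ℝ} (hf : MemLp f 2 μ) (hg : MemLp g 2 μ) :
    Integrable (fun a => f a * g a) μ := by
  have h := hg.smul (φ := f) hf (r := 1) (hpqr := ⟨by
    rw [inv_one]
    exact ENNReal.inv_two_add_inv_two⟩)
  rw [memLp_one_iff_integrable] at h
  exact h

lemma aux_integrable_inner_L2 {Ω : Type*} {m0 : MeasurableSpace Ω} {μ : Measure Ω}
    {V : Type*} [NormedAddCommGroup V] [InnerProductSpace ℝ V]
    {f g : Ω → V} (hf : MemLp f 2 μ) (hg : MemLp g 2 μ) :
    Integrable (fun a => ⟪f a, g a⟫) μ := by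
  have hb : Integrable (fun a => ‖f a‖ * ‖g a‖) μ :=
    aux_integrable_mul_L2 hf.norm hg.norm
  refine hb.mono' (AEStronglyMeasurable.inner hf.aestronglyMeasurable hg.aestronglyMeasurable) ?_
  filter_upwards with a
  simpa [Real.norm_eq_abs] using abs_real_inner_le_norm (f a) (g a)

lemma aux_condexp_clm_zero {Ω : Type*} {m m0 : MeasurableSpace Ω} (hm : m ≤ m0)
    {μ : Measure Ω} [IsFiniteMeasure μ]
    {V W : Type*} [NormedAddCommGroup V] [NormedSpace ℝ V] [CompleteSpace V]
    [NormedAddCommGroup W] [NormedSpace ℝ W] [CompleteSpace W]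
    (T : V →L[ℝ] W) {f : Ω → V} (hf : Integrable f μ)
    (h0 : μ[f|m] =ᵐ[μ] 0) :
    μ[fun a => T (f a)|m] =ᵐ[μ] 0 := by
  refine (ae_eq_condExp_of_forall_setIntegral_eq hm (T.integrable_comp hf)
    (fun s _ _ => (integrable_zero _ _ _).integrableOn) (fun s hs hμs => ?_)
    (StronglyMeasurable.aestronglyMeasurable stronglyMeasurable_zero)).symm
  have h1 : ∫ a in s, T (f a) ∂μ = T (∫ a in s, f a ∂μ) :=
    T.integral_comp_comm hf.integrableOn
  have h2 : ∫ a in s, f a ∂μ = ∫ a in s, (μ[f|m]) a ∂μ :=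
    (setIntegral_condExp hm hf hs).symm
  have h3 : ∫ a in s, (μ[f|m]) a ∂μ = 0 := by
    rw [setIntegral_congr_ae (hm s hs) (h0.mono fun a ha _ => ha)]
    simp
  simp [h1, h2, h3]


lemma key_ineq {p : ℕ} (η L ρ γ c κ Θ Θh δk Dm : ℝ)
    (Y X Xm Xmm W Wh xs : EuclideanSpace ℝ (Fin p))
    (hη : 0 < η) (hγ : 0 < γ) (hL : 0 ≤ L) (hρ : 0 ≤ ρ) (hc : 0 < c)
    (hκ0 : 0 < κ) (hΘ : 0 ≤ Θ) (hΘh : 0 ≤ Θh) (hδk : 0 ≤ δk)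
    (hX : X = Y - η • Wh)
    (hLip : ‖W - Wh‖ ≤ L * ‖X - Xm‖)
    (hM : ⟪W, X - xs⟫ ≥ -ρ * ‖W‖ ^ 2) :
    ‖(Y - xs) - η • W‖ ^ 2 + (1 - γ * η) * ‖η • (Wh - W)‖ ^ 2
        + (2 * η ^ 2 * Θh / κ) * ‖X - Xm‖ ^ 2
        + (2 * η ^ 2 / κ) *
          ((1 - κ) * Dm + Θ * ‖X - Xm‖ ^ 2 + Θh * ‖Xm - Xmm‖ ^ 2 + δk) ≤
      (‖Y - xs‖ ^ 2 + (1 - γ * η) * ‖Y - Xm‖ ^ 2 + (2 * η ^ 2 * (1 - κ) / κ) * Dm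
          + (2 * η ^ 2 * Θh / κ) * ‖Xm - Xmm‖ ^ 2)
        - (1 - 4 * ρ / η - 2 * L ^ 2 * η * (4 * ρ + 1 / γ + c)) * ‖Y - X‖ ^ 2
        - (1 - γ * η - 2 * L ^ 2 * η * (4 * ρ + 1 / γ + c)) * ‖Y - Xm‖ ^ 2
        - (η * (c * κ * L ^ 2 - 2 * η * (Θ + Θh)) / κ) * ‖X - Xm‖ ^ 2
        + 2 * η ^ 2 * δk / κ := by
  have hη' : η ≠ 0 := ne_of_gt hη
  have hγ' : γ ≠ 0 := ne_of_gt hγ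
  have hκ' : κ ≠ 0 := ne_of_gt hκ0
  have hsm : ∀ z : EuclideanSpace ℝ (Fin p), ‖η • z‖ ^ 2 = η ^ 2 * ‖z‖ ^ 2 := fun z => by
    rw [norm_smul, mul_pow, Real.norm_eq_abs, sq_abs]
  -- expansions
  have f1 : ‖(Y - xs) - η • W‖ ^ 2
      = ‖Y - xs‖ ^ 2 - 2 * η * ⟪Y - xs, W⟫ + η ^ 2 * ‖W‖ ^ 2 := by
    rw [norm_sub_sq_real, real_inner_smul_right, hsm]; ring
  have f2 : ‖η • (Wh - W)‖ ^ 2 = η ^ 2 * ‖W - Wh‖ ^ 2 := by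
    rw [hsm, norm_sub_rev]
  have hYrw : Y - xs = (X - xs) + η • Wh := by rw [hX]; abel
  have f3 : ⟪Y - xs, W⟫ = ⟪W, X - xs⟫ + η * ⟪W, Wh⟫ := by
    rw [hYrw, inner_add_left, real_inner_smul_left, real_inner_comm (X - xs) W,
      real_inner_comm Wh W]
  have f4 : ‖W - Wh‖ ^ 2 = ‖W‖ ^ 2 - 2 * ⟪W, Wh⟫ + ‖Wh‖ ^ 2 := norm_sub_sq_real W Wh
  have f7 : ‖W‖ ≤ ‖Wh‖ + ‖W - Wh‖ := by
    calc ‖W‖ = ‖Wh + (W - Wh)‖ := by rw [add_sub_cancel]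
    _ ≤ ‖Wh‖ + ‖W - Wh‖ := norm_add_le _ _
  have hYX : Y - X = η • Wh := by rw [hX]; abel
  have hr1 : ‖Y - X‖ ^ 2 = η ^ 2 * ‖Wh‖ ^ 2 := by rw [hYX, hsm]
  have f9 : ‖X - Xm‖ ≤ ‖Y - X‖ + ‖Y - Xm‖ := by
    calc ‖X - Xm‖ = ‖(X - Y) + (Y - Xm)‖ := by rw [sub_add_sub_cancel]
    _ ≤ ‖X - Y‖ + ‖Y - Xm‖ := norm_add_le _ _
    _ = ‖Y - X‖ + ‖Y - Xm‖ := by rw [norm_sub_rev]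
  set d := ‖W - Wh‖ with hd
  set q := ‖X - Xm‖ with hq
  set r1 := ‖Y - X‖ with hr1d
  set r2 := ‖Y - Xm‖ with hr2d
  set nW := ‖W‖ with hnW
  set nWh := ‖Wh‖ with hnWh
  have hd0 : 0 ≤ d := norm_nonneg _
  have hq0 : 0 ≤ q := norm_nonneg _
  -- basic numeric facts
  have hd2 : d ^ 2 ≤ L ^ 2 * q ^ 2 := by
    have h := pow_le_pow_left₀ hd0 hLip 2
    calc d ^ 2 ≤ (L * q) ^ 2 := h
    _ = L ^ 2 * q ^ 2 := by ring
  have hq2 : q ^ 2 ≤ 2 * r1 ^ 2 + 2 * r2 ^ 2 := by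
    nlinarith [mul_self_le_mul_self hq0 f9, sq_nonneg (r1 - r2)]
  have e1 : -2 * η * ⟪W, X - xs⟫ ≤ 2 * η * ρ * nW ^ 2 := by
    have h0 : (0:ℝ) ≤ 2 * η * (⟪W, X - xs⟫ + ρ * nW ^ 2) :=
      mul_nonneg (by positivity) (by linarith [hM])
    linarith [h0]
  have e2 : nW ^ 2 ≤ 2 * nWh ^ 2 + 2 * d ^ 2 := by
    nlinarith [mul_self_le_mul_self (norm_nonneg W) f7, sq_nonneg (nWh - d)]
  have e3 : 2 * η * ρ * nW ^ 2 ≤ 4 * η * ρ * nWh ^ 2 + 4 * η * ρ * d ^ 2 := by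
    have h := mul_le_mul_of_nonneg_left e2 (mul_nonneg (by positivity : (0:ℝ) ≤ 2 * η) hρ)
    linarith [h]
  have hb : 2 * η - γ * η ^ 2 ≤ 1 / γ := by
    rw [le_div_iff₀ hγ]
    nlinarith [sq_nonneg (1 - γ * η)]
  have hsum : (0:ℝ) ≤ 4 * ρ + 1 / γ := by positivity
  have ha : 4 * η * ρ * d ^ 2 + (2 - γ * η) * η ^ 2 * d ^ 2
      ≤ η * (4 * ρ + 1 / γ) * (L ^ 2 * q ^ 2) := by
    have h1 := mul_le_mul_of_nonneg_left hd2 (mul_nonneg hη.le hsum)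
    have h2 : (0:ℝ) ≤ η * d ^ 2 * (1 / γ - (2 * η - γ * η ^ 2)) :=
      mul_nonneg (mul_nonneg hη.le (sq_nonneg d)) (by linarith)
    linarith [h1, h2]
  have hcoef : (0:ℝ) ≤ η * L ^ 2 * (4 * ρ + 1 / γ + c) := by positivity
  have hb2 : η * (4 * ρ + 1 / γ) * (L ^ 2 * q ^ 2) + η * c * L ^ 2 * q ^ 2
      ≤ 2 * L ^ 2 * η * (4 * ρ + 1 / γ + c) * (r1 ^ 2 + r2 ^ 2) := by
    have h := mul_le_mul_of_nonneg_left hq2 hcoef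
    linarith [h]
  have hdiv : (4 * ρ / η - 1) * r1 ^ 2 = (4 * ρ * η - η ^ 2) * nWh ^ 2 := by
    rw [hr1]; field_simp
  have key : -2 * η * ⟪Y - xs, W⟫ + η ^ 2 * nW ^ 2 + (1 - γ * η) * (η ^ 2 * d ^ 2)
      ≤ (4 * ρ / η - 1) * r1 ^ 2
        + 2 * L ^ 2 * η * (4 * ρ + 1 / γ + c) * (r1 ^ 2 + r2 ^ 2)
        - η * c * L ^ 2 * q ^ 2 := by
    have eq1 : -2 * η * ⟪Y - xs, W⟫ + η ^ 2 * nW ^ 2 + (1 - γ * η) * (η ^ 2 * d ^ 2)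
        = -2 * η * ⟪W, X - xs⟫ + (2 - γ * η) * η ^ 2 * d ^ 2 - η ^ 2 * nWh ^ 2 := by
      rw [f3]; linear_combination (-η^2) * f4
    linarith [eq1, e1, e3, ha, hb2, hdiv]
  -- bridge for the κ-division term
  have hκc : (η * (c * κ * L ^ 2 - 2 * η * (Θ + Θh)) / κ) * q ^ 2
      = η * c * L ^ 2 * q ^ 2 - (2 * η ^ 2 * (Θ + Θh) / κ) * q ^ 2 := by
    field_simp
  have hexp : (2 * η ^ 2 / κ) * ((1 - κ) * Dm + Θ * q ^ 2 + Θh * ‖Xm - Xmm‖ ^ 2 + δk)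
      = (2 * η ^ 2 * (1 - κ) / κ) * Dm + (2 * η ^ 2 * Θ / κ) * q ^ 2
        + (2 * η ^ 2 * Θh / κ) * ‖Xm - Xmm‖ ^ 2 + 2 * η ^ 2 * δk / κ := by
    field_simp
  have hΘdiv : (2 * η ^ 2 * (Θ + Θh) / κ) * q ^ 2
      = (2 * η ^ 2 * Θ / κ) * q ^ 2 + (2 * η ^ 2 * Θh / κ) * q ^ 2 := by
    field_simp
  rw [f1, f2]
  linarith [key, hκc, hexp, hΘdiv]

/-- Lemma 3.3: one-iteration descent property of the Lyapunov function `P_k` for the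
VrFRBS recursion with an unbiased variance-reduced estimator (Definition 1). -/
theorem stmt_3 {p : ℕ} {Ω : Type*} {𝔉 : MeasurableSpace Ω} (μ : Measure Ω)
    [IsProbabilityMeasure μ] (ℱ : Filtration ℕ 𝔉)
    (η L ρ γ κ Θ Θhat : ℝ) (δ : ℕ → ℝ)
    (xstar : EuclideanSpace ℝ (Fin p))
    (x y w what e : ℕ → Ω → EuclideanSpace ℝ (Fin p))
    (Δ : ℕ → Ω → ℝ)
    (hη : 0 < η) (hγ : 0 < γ) (hL : 0 ≤ L) (hρ : 0 ≤ ρ)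
    (hκ0 : 0 < κ) (hκ1 : κ ≤ 1) (hΘ : 0 ≤ Θ) (hΘhat : 0 ≤ Θhat)
    (hδ : ∀ k, 0 ≤ δ k)
    -- measurability
    (hx_meas : ∀ k, StronglyMeasurable[ℱ k] (x k))
    (hy_meas : ∀ k, StronglyMeasurable[ℱ k] (y k))
    (hw_meas : ∀ k, StronglyMeasurable[ℱ k] (w k))
    (hwhat_meas : ∀ k, StronglyMeasurable[ℱ k] (what k))
    (he_meas : ∀ k, StronglyMeasurable[ℱ (k + 1)] (e k))
    (hΔ_meas : ∀ k, StronglyMeasurable[ℱ (k + 1)] (Δ k))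
    -- integrability
    (hx_L2 : ∀ k, MemLp (x k) 2 μ) (hy_L2 : ∀ k, MemLp (y k) 2 μ)
    (hw_L2 : ∀ k, MemLp (w k) 2 μ) (hwhat_L2 : ∀ k, MemLp (what k) 2 μ)
    (he_L2 : ∀ k, MemLp (e k) 2 μ)
    (hΔ_int : ∀ k, Integrable (Δ k) μ) (hΔ_nonneg : ∀ k ω, 0 ≤ Δ k ω)
    -- VrFRBS recursion (with the convention `x (−1) = x (−2) = x 0` via truncated subtraction)
    (hrec_x : ∀ k ω, x k ω = y k ω - η • what k ω)
    (hrec_y : ∀ k ω, y (k + 1) ω = y k ω - η • (w k ω + e k ω))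
    (hLip : ∀ k ω, ‖w k ω - what k ω‖ ≤ L * ‖x k ω - x (k - 1) ω‖)
    (hMinty : ∀ k ω, ⟪w k ω, x k ω - xstar⟫ ≥ -ρ * ‖w k ω‖ ^ 2)
    -- Definition 1: unbiased variance-reduced estimator (with `Δ (−1) = 0`)
    (hunbiased : ∀ k, μ[e k | ℱ k] =ᵐ[μ] 0)
    (hvar : ∀ k, ∀ᵐ ω ∂μ, (μ[fun a => ‖e k a‖ ^ 2 | ℱ k]) ω ≤ (μ[Δ k | ℱ k]) ω)
    (hΔrec : ∀ k, ∀ᵐ ω ∂μ, (μ[Δ k | ℱ k]) ω ≤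
      (1 - κ) * (if k = 0 then 0 else Δ (k - 1) ω)
        + Θ * ‖x k ω - x (k - 1) ω‖ ^ 2 + Θhat * ‖x (k - 1) ω - x (k - 2) ω‖ ^ 2 + δ k) :
    ∀ (k : ℕ) (c : ℝ), 0 < c →
      ∀ᵐ ω ∂μ,
        (μ[fun a =>
            ‖y (k + 1) a - xstar‖ ^ 2 + (1 - γ * η) * ‖y (k + 1) a - x k a‖ ^ 2
              + (2 * η ^ 2 * (1 - κ) / κ) * Δ k a
              + (2 * η ^ 2 * Θhat / κ) * ‖x k a - x (k - 1) a‖ ^ 2 | ℱ k]) ω ≤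
          (‖y k ω - xstar‖ ^ 2 + (1 - γ * η) * ‖y k ω - x (k - 1) ω‖ ^ 2
              + (2 * η ^ 2 * (1 - κ) / κ) * (if k = 0 then 0 else Δ (k - 1) ω)
              + (2 * η ^ 2 * Θhat / κ) * ‖x (k - 1) ω - x (k - 2) ω‖ ^ 2)
            - (1 - 4 * ρ / η - 2 * L ^ 2 * η * (4 * ρ + 1 / γ + c)) * ‖y k ω - x k ω‖ ^ 2
            - (1 - γ * η - 2 * L ^ 2 * η * (4 * ρ + 1 / γ + c)) * ‖y k ω - x (k - 1) ω‖ ^ 2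
            - (η * (c * κ * L ^ 2 - 2 * η * (Θ + Θhat)) / κ) * ‖x k ω - x (k - 1) ω‖ ^ 2
            + 2 * η ^ 2 * δ k / κ := by
  intro k c hc
  have hle : ℱ k ≤ 𝔉 := ℱ.le k
  have hη' : η ≠ 0 := ne_of_gt hη
  have hκ' : κ ≠ 0 := ne_of_gt hκ0
  have hsm : ∀ z : EuclideanSpace ℝ (Fin p), ‖η • z‖ ^ 2 = η ^ 2 * ‖z‖ ^ 2 := fun z => by
    rw [norm_smul, mul_pow, Real.norm_eq_abs, sq_abs]
  set vv : Ω → EuclideanSpace ℝ (Fin p) := fun a => (y k a - xstar) - η • w k a with hvv_def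
  set uu : Ω → EuclideanSpace ℝ (Fin p) := fun a => η • (what k a - w k a) with huu_def
  set hh : Ω → EuclideanSpace ℝ (Fin p) := fun a => vv a + (1 - γ * η) • uu a with hhh_def
  -- L² facts
  have hvvL2 : MemLp vv 2 μ :=
    ((hy_L2 k).sub (memLp_const xstar)).sub ((hw_L2 k).const_smul η)
  have huuL2 : MemLp uu 2 μ := ((hwhat_L2 k).sub (hw_L2 k)).const_smul η
  have hhhL2 : MemLp hh 2 μ := hvvL2.add (huuL2.const_smul (1 - γ * η))
  -- measurability facts
  have hvvSM : StronglyMeasurable[ℱ k] vv :=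
    ((hy_meas k).sub stronglyMeasurable_const).sub ((hw_meas k).const_smul η)
  have huuSM : StronglyMeasurable[ℱ k] uu := ((hwhat_meas k).sub (hw_meas k)).const_smul η
  have hhhSM : StronglyMeasurable[ℱ k] hh := hvvSM.add (huuSM.const_smul (1 - γ * η))
  have hxmSM : StronglyMeasurable[ℱ k] (x (k - 1)) := (hx_meas (k - 1)).mono (ℱ.mono (Nat.sub_le k 1))
  have heInt : Integrable (e k) μ := (he_L2 k).integrable one_le_two
  -- integrability of squared norms
  have hvvsq : Integrable (fun a => ‖vv a‖ ^ 2) μ := hvvL2.norm.integrable_sq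
  have huusq : Integrable (fun a => ‖uu a‖ ^ 2) μ := huuL2.norm.integrable_sq
  have hxsq : Integrable (fun a => ‖x k a - x (k - 1) a‖ ^ 2) μ :=
    ((hx_L2 k).sub (hx_L2 (k - 1))).norm.integrable_sq
  have hesq : Integrable (fun a => ‖e k a‖ ^ 2) μ := (he_L2 k).norm.integrable_sq
  set gg : Ω → ℝ := fun a => ‖vv a‖ ^ 2 + (1 - γ * η) * ‖uu a‖ ^ 2
      + (2 * η ^ 2 * Θhat / κ) * ‖x k a - x (k - 1) a‖ ^ 2 with hgg_def
  have hggInt : Integrable gg μ := (hvvsq.add (huusq.const_mul _)).add (hxsq.const_mul _)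
  have hsqSM : ∀ {f : Ω → EuclideanSpace ℝ (Fin p)}, StronglyMeasurable[ℱ k] f →
      StronglyMeasurable[ℱ k] (fun a => ‖f a‖ ^ 2) := fun hf => by
    simp only [pow_two]; exact hf.norm.mul hf.norm
  have hggSM : StronglyMeasurable[ℱ k] gg :=
    ((hsqSM hvvSM).add ((hsqSM huuSM).const_mul _)).add
      ((hsqSM ((hx_meas k).sub hxmSM)).const_mul _)
  -- conditional expectation of the inner-product term vanishes
  have hinnerInt : Integrable (fun a => ⟪hh a, e k a⟫) μ := aux_integrable_inner_L2 hhhL2 (he_L2 k)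
  have hinner0 : μ[fun a => ⟪hh a, e k a⟫|ℱ k] =ᵐ[μ] 0 := by
    have hcompei : ∀ i : Fin p, μ[fun a => e k a i|ℱ k] =ᵐ[μ] 0 := fun i => by
      have h := aux_condexp_clm_zero hle (EuclideanSpace.proj i) heInt (hunbiased k)
      simpa using h
    have hHi : ∀ i : Fin p, StronglyMeasurable[ℱ k] (fun a => hh a i) := fun i =>
      (EuclideanSpace.proj (𝕜 := ℝ) i).continuous.comp_stronglyMeasurable hhhSM
    have hHiL2 : ∀ i : Fin p, MemLp (fun a => hh a i) 2 μ := fun i => by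
      refine MemLp.of_le_mul (c := 1) hhhL2.norm
        ((hHi i).mono hle).aestronglyMeasurable ?_
      filter_upwards with a
      simpa [Real.norm_eq_abs, abs_norm] using aux_abs_apply_le_norm (hh a) i
    have hEiL2 : ∀ i : Fin p, MemLp (fun a => e k a i) 2 μ := fun i => by
      refine MemLp.of_le_mul (c := 1) (he_L2 k).norm
        (((EuclideanSpace.proj (𝕜 := ℝ) i).continuous.comp_aestronglyMeasurable
          (he_L2 k).aestronglyMeasurable)) ?_
      filter_upwards with a
      simpa [Real.norm_eq_abs, abs_norm] using aux_abs_apply_le_norm (e k a) i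
    have hmulInt : ∀ i : Fin p, Integrable (fun a => hh a i * e k a i) μ := fun i =>
      aux_integrable_mul_L2 (hHiL2 i) (hEiL2 i)
    have hmul : ∀ i : Fin p, μ[fun a => hh a i * e k a i|ℱ k] =ᵐ[μ] 0 := fun i => by
      have h1 : μ[(fun a => hh a i) * (fun a => e k a i)|ℱ k]
          =ᵐ[μ] (fun a => hh a i) * μ[fun a => e k a i|ℱ k] :=
        condExp_mul_of_stronglyMeasurable_left (hHi i) (hmulInt i) ((hEiL2 i).integrable one_le_two)
      refine h1.trans ?_
      filter_upwards [hcompei i] with a ha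
      simp only [Pi.mul_apply, ha, Pi.zero_apply, mul_zero]
    have hfun : (fun a => ⟪hh a, e k a⟫) = ∑ i : Fin p, (fun a => hh a i * e k a i) := by
      funext a
      rw [Finset.sum_apply]
      simp [PiLp.inner_apply, RCLike.inner_apply, mul_comm]
    rw [hfun]
    refine (condExp_finset_sum (fun i _ => hmulInt i) (ℱ k)).trans ?_
    have hall : ∀ᵐ a ∂μ, ∀ i : Fin p, (μ[fun a => hh a i * e k a i|ℱ k]) a = 0 :=
      (ae_all_iff).mpr fun i => hmul i
    filter_upwards [hall] with a ha
    simp [Finset.sum_apply, ha]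
  -- pointwise decomposition of the Lyapunov integrand
  have hptw : (fun a =>
        ‖y (k + 1) a - xstar‖ ^ 2 + (1 - γ * η) * ‖y (k + 1) a - x k a‖ ^ 2
          + (2 * η ^ 2 * (1 - κ) / κ) * Δ k a
          + (2 * η ^ 2 * Θhat / κ) * ‖x k a - x (k - 1) a‖ ^ 2)
      = gg + ((-(2 * η)) • (fun a => ⟪hh a, e k a⟫)
          + (((2 - γ * η) * η ^ 2) • (fun a => ‖e k a‖ ^ 2)
            + (2 * η ^ 2 * (1 - κ) / κ) • (Δ k))) := by
    funext a
    have h1 : y (k + 1) a - xstar = vv a - η • e k a := by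
      rw [hrec_y k a, hvv_def]
      simp only [smul_add]
      abel
    have h2 : y (k + 1) a - x k a = uu a - η • e k a := by
      rw [hrec_y k a, hrec_x k a, huu_def]
      simp only [smul_add, smul_sub]
      abel
    have e1 : ‖vv a - η • e k a‖ ^ 2
        = ‖vv a‖ ^ 2 - 2 * η * ⟪vv a, e k a⟫ + η ^ 2 * ‖e k a‖ ^ 2 := by
      rw [norm_sub_sq_real, real_inner_smul_right, hsm (e k a)]; ring
    have e2 : ‖uu a - η • e k a‖ ^ 2
        = ‖uu a‖ ^ 2 - 2 * η * ⟪uu a, e k a⟫ + η ^ 2 * ‖e k a‖ ^ 2 := by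
      rw [norm_sub_sq_real, real_inner_smul_right, hsm (e k a)]; ring
    have e3 : ⟪hh a, e k a⟫ = ⟪vv a, e k a⟫ + (1 - γ * η) * ⟪uu a, e k a⟫ := by
      rw [hhh_def]
      simp only []
      rw [inner_add_left, real_inner_smul_left]
    simp only [Pi.add_apply, Pi.smul_apply, smul_eq_mul, hgg_def]
    rw [h1, h2, e1, e2, e3]
    ring
  -- integrability of the pieces
  have hs1Int : Integrable ((-(2 * η)) • (fun a => ⟪hh a, e k a⟫)) μ := hinnerInt.smul _
  have hs2Int : Integrable (((2 - γ * η) * η ^ 2) • (fun a => ‖e k a‖ ^ 2)) μ := hesq.smul _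
  have hs3Int : Integrable ((2 * η ^ 2 * (1 - κ) / κ) • (Δ k)) μ := (hΔ_int k).smul _
  have hs23Int := hs2Int.add hs3Int
  have hsInt := hs1Int.add hs23Int
  have hgeq : μ[gg|ℱ k] = gg := condExp_of_stronglyMeasurable hle hggSM hggInt
  have hc1 := condExp_add (μ := μ) (m := ℱ k) hggInt hsInt
  have hc2 := condExp_add (μ := μ) (m := ℱ k) hs1Int hs23Int
  have hc3 := condExp_add (μ := μ) (m := ℱ k) hs2Int hs3Int
  have hs1eval : μ[(-(2 * η)) • (fun a => ⟪hh a, e k a⟫)|ℱ k] =ᵐ[μ] 0 := by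
    refine (condExp_smul (-(2 * η)) _ (ℱ k)).trans ?_
    filter_upwards [hinner0] with a ha
    rw [Pi.smul_apply, ha]
    simp
  have hs2eval := condExp_smul (μ := μ) (m := ℱ k) ((2 - γ * η) * η ^ 2) (fun a => ‖e k a‖ ^ 2)
  have hs3eval := condExp_smul (μ := μ) (m := ℱ k) (2 * η ^ 2 * (1 - κ) / κ) (Δ k)
  have hce0 : (0 : Ω → ℝ) ≤ᵐ[μ] μ[fun a => ‖e k a‖ ^ 2|ℱ k] :=
    condExp_nonneg (Eventually.of_forall fun a => by positivity)
  -- put everything together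
  rw [hptw]
  filter_upwards [hc1, hc2, hc3, hs1eval, hs2eval, hs3eval, hvar k, hΔrec k, hce0]
    with ω h₁ h₂ h₃ h₄ h₅ h₆ h₇ h₈ h₉
  have hval : (μ[gg + ((-(2 * η)) • (fun a => ⟪hh a, e k a⟫)
      + (((2 - γ * η) * η ^ 2) • (fun a => ‖e k a‖ ^ 2)
        + (2 * η ^ 2 * (1 - κ) / κ) • (Δ k)))|ℱ k]) ω
      = gg ω + (((2 - γ * η) * η ^ 2) * (μ[fun a => ‖e k a‖ ^ 2|ℱ k]) ω
        + (2 * η ^ 2 * (1 - κ) / κ) * (μ[Δ k|ℱ k]) ω) := by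
    rw [h₁, Pi.add_apply, hgeq, h₂, Pi.add_apply, h₃, Pi.add_apply, h₄, h₅, h₆,
      Pi.zero_apply, Pi.smul_apply, Pi.smul_apply, smul_eq_mul, smul_eq_mul]
    ring
  rw [hval]
  -- numeric bound on the variance terms
  set ce := (μ[fun a => ‖e k a‖ ^ 2|ℱ k]) ω with hce_def
  set cd := (μ[Δ k|ℱ k]) ω with hcd_def
  have h₉' : (0:ℝ) ≤ ce := h₉
  have t1 : ((2 - γ * η) * η ^ 2) * ce ≤ 2 * η ^ 2 * cd := by
    have a1 := mul_le_mul_of_nonneg_left h₇ (show (0:ℝ) ≤ 2 * η ^ 2 by positivity)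
    have a2 : (0:ℝ) ≤ γ * η ^ 3 * ce := mul_nonneg (by positivity) h₉'
    nlinarith [a1, a2]
  have t2 : 2 * η ^ 2 * cd + (2 * η ^ 2 * (1 - κ) / κ) * cd = (2 * η ^ 2 / κ) * cd := by
    field_simp; ring
  have t3 : (2 * η ^ 2 / κ) * cd ≤ (2 * η ^ 2 / κ) *
      ((1 - κ) * (if k = 0 then 0 else Δ (k - 1) ω)
        + Θ * ‖x k ω - x (k - 1) ω‖ ^ 2 + Θhat * ‖x (k - 1) ω - x (k - 2) ω‖ ^ 2 + δ k) :=
    mul_le_mul_of_nonneg_left h₈ (by positivity)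
  have hkey := key_ineq η L ρ γ c κ Θ Θhat (δ k) (if k = 0 then 0 else Δ (k - 1) ω)
    (y k ω) (x k ω) (x (k - 1) ω) (x (k - 2) ω) (w k ω) (what k ω) xstar
    hη hγ hL hρ hc hκ0 hΘ hΘhat (hδ k) (hrec_x k ω) (hLip k ω) (hMinty k ω)
  simp only [hgg_def, hvv_def, huu_def]
  linarith [hkey, t1, t2, t3]
end

section
/- Under the VrFRBS recursion and the unbiased variance-reduced estimator condition (Definition 1), suppose L > 0, Lρ < 1/(24√2), 8ρ ≤ η < 1/(3√2·L), and κL² ≥ Θ + Θ̂, and set C := 1 − 18L²η² (so C > 0). Assume x_0 and w_0 are deterministic and ŵ_0 = w_0 (so y_0 = x_0 + η·w_0). Then for every K ≥ 0, (1/(K+1))·Σ_{k=0}^K 𝔼[‖w_k‖²] ≤ (13/(3C(K+1)))·[(2/η²)·‖x_0 − x⋆‖² + (5/2)·‖w_0‖²] + (26/(3κC(K+1)))·S_K, where S_K := Σ_{k=0}^K δ_k. (Rate bound of Theorem 3.4.) -/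
open MeasureTheory Filter
open scoped RealInnerProductSpace


section Young
variable {E : Type*} [NormedAddCommGroup E] [InnerProductSpace ℝ E]

lemma young2 (a b : E) : ‖a + b‖ ^ 2 ≤ (3/2) * ‖a‖ ^ 2 + 3 * ‖b‖ ^ 2 := by
  have h := norm_add_sq_real a b
  have h2 := real_inner_le_norm a b
  nlinarith [sq_nonneg (‖a‖ - 2 * ‖b‖), norm_nonneg a, norm_nonneg b]

lemma younginit (a b : E) : ‖a + b‖ ^ 2 ≤ (9/5) * ‖a‖ ^ 2 + (9/4) * ‖b‖ ^ 2 := by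
  have h := norm_add_sq_real a b
  have h2 := real_inner_le_norm a b
  nlinarith [sq_nonneg (2 * ‖a‖ - (5/2) * ‖b‖), norm_nonneg a, norm_nonneg b]

lemma young3 (a b c : E) :
    ‖a + b + c‖ ^ 2 ≤ (11/2) * ‖a‖ ^ 2 + (11/2) * ‖b‖ ^ 2 + (11/7) * ‖c‖ ^ 2 := by
  have h1 := norm_add_sq_real (a + b) c
  have h2 := norm_add_sq_real a b
  have h3 := real_inner_le_norm a b
  have h4 := real_inner_le_norm (a + b) c
  have h5 : ‖a + b‖ ≤ ‖a‖ + ‖b‖ := norm_add_le a b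
  have h6 : ⟪a + b, c⟫ ≤ (‖a‖ + ‖b‖) * ‖c‖ :=
    h4.trans (by nlinarith [norm_nonneg c])
  nlinarith [sq_nonneg (‖a‖ - ‖b‖), sq_nonneg (7 * ‖a‖ - 2 * ‖c‖),
    sq_nonneg (7 * ‖b‖ - 2 * ‖c‖), norm_nonneg a, norm_nonneg b, norm_nonneg c]

lemma star_ineq (η L ρ : ℝ) (hη : 0 < η) (hρ : 0 ≤ ρ) (hL0 : 0 ≤ L) (hηρ : 8 * ρ ≤ η)
    (Y W Wh D : E) (hM : ⟪W, Y - η • Wh⟫ ≥ -ρ * ‖W‖ ^ 2) (hLip : ‖W - Wh‖ ≤ L * ‖D‖) :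
    ‖Y - η • W‖ ^ 2 ≤ ‖Y‖ ^ 2 + (η ^ 2 / 4) * ‖W‖ ^ 2 - ‖η • Wh‖ ^ 2
      + η ^ 2 * L ^ 2 * ‖D‖ ^ 2 := by
  have e1 : ‖Y - η • W‖ ^ 2 = ‖Y‖ ^ 2 - 2 * (η * ⟪Y, W⟫) + η ^ 2 * ‖W‖ ^ 2 := by
    rw [norm_sub_sq_real, real_inner_smul_right, norm_smul, Real.norm_eq_abs, abs_of_pos hη]
    ring
  have e2 : ⟪Y, W⟫ = ⟪W, Y - η • Wh⟫ + η * ⟪W, Wh⟫ := by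
    rw [inner_sub_right, real_inner_smul_right, real_inner_comm]
    ring
  have e3 : ‖W - Wh‖ ^ 2 = ‖W‖ ^ 2 - 2 * ⟪W, Wh⟫ + ‖Wh‖ ^ 2 := norm_sub_sq_real W Wh
  have e4 : ‖W - Wh‖ ^ 2 ≤ L ^ 2 * ‖D‖ ^ 2 := by
    nlinarith [norm_nonneg (W - Wh), norm_nonneg D, mul_nonneg hL0 (norm_nonneg D)]
  have e5 : ‖η • Wh‖ ^ 2 = η ^ 2 * ‖Wh‖ ^ 2 := by
    rw [norm_smul, Real.norm_eq_abs, abs_of_pos hη]; ring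
  have h7 : -(2 * η) * ⟪W, Y - η • Wh⟫ ≤ 2 * η * ρ * ‖W‖ ^ 2 := by nlinarith [hM]
  have h8 : 2 * η * ρ * ‖W‖ ^ 2 ≤ (η ^ 2 / 4) * ‖W‖ ^ 2 := by
    nlinarith [mul_nonneg (mul_nonneg hη.le (by linarith : (0:ℝ) ≤ η - 8*ρ)) (sq_nonneg ‖W‖)]
  nlinarith [mul_le_mul_of_nonneg_left e4 (sq_nonneg η)]

end Young

set_option maxHeartbeats 1000000 in
lemma alg (ε T M X E S a0 : ℝ) (hε0 : 0 ≤ ε) (hε1 : ε ≤ 1/18)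
    (hT : 0 ≤ T) (hM : 0 ≤ M) (hX : 0 ≤ X) (hE : 0 ≤ E) (hS : 0 ≤ S) (ha0 : 0 ≤ a0)
    (h1 : M ≤ a0 + T/4 + ε*X + E)
    (h2 : X ≤ (11/2)*(ε*X) + (11/2)*E + (11/7)*M)
    (h3 : T ≤ (3/2)*M + 3*(ε*X))
    (h4 : E ≤ ε*X + S) :
    3*(1-18*ε)*T ≤ (130/9)*a0 + 26*S := by
  have ht : (0:ℝ) ≤ 1/18 - ε := by linarith
  have hu : (0:ℝ) < 1 - 11*ε := by linarith
  have hv : (0:ℝ) < 1 - (99/7)*ε := by linarith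
  have hX1 : (1 - 11*ε)*X ≤ (11/7)*M + (11/2)*S := by nlinarith
  have hM1 : (1 - (99/7)*ε)*M ≤ (1 - 11*ε)*(a0 + T/4 + S) + 11*ε*S := by
    have hA : M ≤ a0 + T/4 + 2*(ε*X) + S := by linarith
    have hB := mul_le_mul_of_nonneg_left hA hu.le
    have hC := mul_le_mul_of_nonneg_left hX1 (by linarith : (0:ℝ) ≤ 2*ε)
    nlinarith
  have hXuv : (1 - 11*ε)*(1 - (99/7)*ε)*X
      ≤ (11/7)*((1 - 11*ε)*(a0+T/4+S) + 11*ε*S) + (11/2)*((1 - (99/7)*ε)*S) := by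
    have hB := mul_le_mul_of_nonneg_left hX1 hv.le
    nlinarith [mul_le_mul_of_nonneg_left hM1 (by positivity : (0:ℝ) ≤ 11/7)]
  have hKEY : (1 - 11*ε)*(1 - (99/7)*ε)*T
      ≤ ((3/2)*(1 - 11*ε)^2 + (33/7)*(ε*(1 - 11*ε))) * (a0+T/4+S)
      + ((33/2)*(ε*(1 - 11*ε)) + (363/7)*ε^2 + (33/2)*(ε*(1 - (99/7)*ε))) * S := by
    have hB := mul_le_mul_of_nonneg_left h3
      (by positivity : (0:ℝ) ≤ (1 - 11*ε)*(1 - (99/7)*ε))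
    have hC := mul_le_mul_of_nonneg_left hM1 (by nlinarith : (0:ℝ) ≤ (3/2)*(1 - 11*ε))
    have hD := mul_le_mul_of_nonneg_left hXuv (by positivity : (0:ℝ) ≤ 3*ε)
    nlinarith
  have hd : (0:ℝ) < (1 - 11*ε)*(1 - (99/7)*ε)
      - ((3/2)*(1 - 11*ε)^2 + (33/7)*(ε*(1 - 11*ε)))/4 := by
    nlinarith [sq_nonneg (1/18 - ε), ht]
  have hP1 : 3*(1-18*ε)*((3/2)*(1 - 11*ε)^2 + (33/7)*(ε*(1 - 11*ε)))
      ≤ (130/9)*((1 - 11*ε)*(1 - (99/7)*ε)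
        - ((3/2)*(1 - 11*ε)^2 + (33/7)*(ε*(1 - 11*ε)))/4) := by
    nlinarith [ht, sq_nonneg (1/18 - ε), mul_nonneg (sq_nonneg (1/18 - ε)) hε0,
      mul_nonneg (sq_nonneg (1/18 - ε)) ht]
  have hP2 : 3*(1-18*ε)*(((3/2)*(1 - 11*ε)^2 + (33/7)*(ε*(1 - 11*ε)))
        + ((33/2)*(ε*(1 - 11*ε)) + (363/7)*ε^2 + (33/2)*(ε*(1 - (99/7)*ε))))
      ≤ 26*((1 - 11*ε)*(1 - (99/7)*ε)
        - ((3/2)*(1 - 11*ε)^2 + (33/7)*(ε*(1 - 11*ε)))/4) := by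
    nlinarith [ht, sq_nonneg (1/18 - ε), mul_nonneg (sq_nonneg (1/18 - ε)) hε0,
      mul_nonneg (sq_nonneg (1/18 - ε)) ht]
  have hfin : (3*(1-18*ε)*T) * ((1 - 11*ε)*(1 - (99/7)*ε)
        - ((3/2)*(1 - 11*ε)^2 + (33/7)*(ε*(1 - 11*ε)))/4)
      ≤ ((130/9)*a0 + 26*S) * ((1 - 11*ε)*(1 - (99/7)*ε)
        - ((3/2)*(1 - 11*ε)^2 + (33/7)*(ε*(1 - 11*ε)))/4) := by
    have h3C : (0:ℝ) ≤ 3*(1-18*ε) := by linarith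
    have hKEY2 := mul_le_mul_of_nonneg_left hKEY h3C
    nlinarith [mul_le_mul_of_nonneg_right hP1 ha0, mul_le_mul_of_nonneg_right hP2 hS,
      mul_nonneg h3C hT]
  exact le_of_mul_le_mul_right hfin hd


lemma int_norm_sq {Ω : Type*} {m0 : MeasurableSpace Ω} {μ : Measure Ω}
    {E : Type*} [NormedAddCommGroup E] {f : Ω → E} (hf : MemLp f 2 μ) :
    Integrable (fun ω => ‖f ω‖ ^ 2) μ :=
  (memLp_two_iff_integrable_sq_norm hf.aestronglyMeasurable).1 hf

lemma int_inner {Ω : Type*} {m0 : MeasurableSpace Ω} {μ : Measure Ω}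
    {E : Type*} [NormedAddCommGroup E] [InnerProductSpace ℝ E] {f g : Ω → E}
    (hf : MemLp f 2 μ) (hg : MemLp g 2 μ) :
    Integrable (fun ω => ⟪f ω, g ω⟫) μ := by
  have hb : Integrable (fun ω => (‖f ω‖ ^ 2 + ‖g ω‖ ^ 2) / 2) μ :=
    ((int_norm_sq hf).add (int_norm_sq hg)).div_const 2
  refine hb.mono' (hf.aestronglyMeasurable.inner hg.aestronglyMeasurable) ?_
  filter_upwards with ω
  have h1 := abs_real_inner_le_norm (f ω) (g ω)
  rw [Real.norm_eq_abs]
  nlinarith [sq_nonneg (‖f ω‖ - ‖g ω‖), norm_nonneg (f ω), norm_nonneg (g ω)]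

lemma integral_inner_condexp_zero {Ω : Type*} {m m0 : MeasurableSpace Ω} (hm : m ≤ m0)
    {μ : @MeasureTheory.Measure Ω m0} [IsProbabilityMeasure μ] {q : ℕ}
    {v g : Ω → EuclideanSpace ℝ (Fin q)} (hvm : StronglyMeasurable[m] v)
    (hv : MemLp v 2 μ) (hg : MemLp g 2 μ) (hg0 : μ[g|m] =ᵐ[μ] 0) :
    ∫ ω, ⟪v ω, g ω⟫ ∂μ = 0 := by
  have hgi : Integrable g μ := hg.integrable one_le_two
  have hcoord : ∀ i : Fin q, Integrable (fun ω => v ω i * g ω i) μ ∧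
      ∫ ω, v ω i * g ω i ∂μ = 0 := by
    intro i
    have hgiL2 : MemLp (fun ω => g ω i) 2 μ := by
      have h := (EuclideanSpace.proj (𝕜 := ℝ) i).comp_memLp' hg
      exact h
    have hviL2 : MemLp (fun ω => v ω i) 2 μ := by
      have h := (EuclideanSpace.proj (𝕜 := ℝ) i).comp_memLp' hv
      exact h
    have hgii : Integrable (fun ω => g ω i) μ := hgiL2.integrable one_le_two
    have hvim : StronglyMeasurable[m] (fun ω => v ω i) :=
      (EuclideanSpace.proj (𝕜 := ℝ) i).continuous.comp_stronglyMeasurable hvm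
    have hgi0 : (0 : Ω → ℝ) =ᵐ[μ] μ[fun ω => g ω i|m] := by
      refine ae_eq_condExp_of_forall_setIntegral_eq hm hgii ?_ ?_ ?_
      · intro s _ _
        exact (integrable_zero _ _ _).integrableOn
      · intro s hs _
        have h1 : ∫ ω in s, g ω i ∂μ = (EuclideanSpace.proj (𝕜 := ℝ) i)
            (∫ ω in s, g ω ∂μ) := by
          rw [← ContinuousLinearMap.integral_comp_comm _ hgi.integrableOn]
          simp
        have h2 : ∫ ω in s, g ω ∂μ = ∫ ω in s, (μ[g|m]) ω ∂μ :=
          (setIntegral_condExp hm hgi hs).symm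
        have h3 : ∫ ω in s, (μ[g|m]) ω ∂μ = 0 := by
          rw [integral_congr_ae (ae_restrict_of_ae hg0)]
          simp
        simp [h1, h2, h3]
      · exact stronglyMeasurable_const.aestronglyMeasurable
    have hprod : Integrable (fun ω => v ω i * g ω i) μ := by
      have h := int_inner (μ := μ) hviL2 hgiL2
      simpa [RCLike.inner_apply, mul_comm] using h
    have hpull := condExp_mul_of_stronglyMeasurable_left hvim
      hprod hgii
    have hz : μ[(fun ω => v ω i) * (fun ω => g ω i)|m] =ᵐ[μ] 0 := by
      refine hpull.trans ?_
      filter_upwards [hgi0.symm] with ω hω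
      simp [Pi.mul_apply, hω]
    refine ⟨hprod, ?_⟩
    have h3 : ∫ ω, v ω i * g ω i ∂μ
        = ∫ ω, (μ[(fun ω => v ω i) * (fun ω => g ω i)|m]) ω ∂μ :=
      (integral_condExp (μ := μ) (f := (fun ω => v ω i) * (fun ω => g ω i)) hm).symm
    rw [h3, integral_congr_ae hz]
    simp
  have hsum : ∀ ω, ⟪v ω, g ω⟫ = ∑ i, v ω i * g ω i := by
    intro ω
    simp [PiLp.inner_apply, RCLike.inner_apply, mul_comm]
  calc ∫ ω, ⟪v ω, g ω⟫ ∂μ = ∫ ω, ∑ i, v ω i * g ω i ∂μ := by simp_rw [hsum]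
    _ = ∑ i, ∫ ω, v ω i * g ω i ∂μ := integral_finset_sum _ (fun i _ => (hcoord i).1)
    _ = 0 := by simp [fun i => (hcoord i).2]

set_option maxHeartbeats 2000000 in
/-- Rate bound of Theorem 3.4 for VrFRBS with an unbiased variance-reduced estimator
(Definition 1). -/
theorem stmt_4 {p : ℕ} {Ω : Type*} {𝔉 : MeasurableSpace Ω} (μ : Measure Ω)
    [IsProbabilityMeasure μ] (ℱ : Filtration ℕ 𝔉)
    (η L ρ κ Θ Θhat : ℝ) (δ : ℕ → ℝ)
    (xstar x0 w0 : EuclideanSpace ℝ (Fin p))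
    (x y w what e : ℕ → Ω → EuclideanSpace ℝ (Fin p))
    (Δ : ℕ → Ω → ℝ)
    (hη : 0 < η) (hL : 0 < L) (hρ : 0 ≤ ρ)
    (hκ0 : 0 < κ) (hκ1 : κ ≤ 1) (hΘ : 0 ≤ Θ) (hΘhat : 0 ≤ Θhat)
    (hδ : ∀ k, 0 ≤ δ k)
    -- measurability
    (hx_meas : ∀ k, StronglyMeasurable[ℱ k] (x k))
    (hy_meas : ∀ k, StronglyMeasurable[ℱ k] (y k))
    (hw_meas : ∀ k, StronglyMeasurable[ℱ k] (w k))
    (hwhat_meas : ∀ k, StronglyMeasurable[ℱ k] (what k))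
    (he_meas : ∀ k, StronglyMeasurable[ℱ (k + 1)] (e k))
    (hΔ_meas : ∀ k, StronglyMeasurable[ℱ (k + 1)] (Δ k))
    -- integrability
    (hx_L2 : ∀ k, MemLp (x k) 2 μ) (hy_L2 : ∀ k, MemLp (y k) 2 μ)
    (hw_L2 : ∀ k, MemLp (w k) 2 μ) (hwhat_L2 : ∀ k, MemLp (what k) 2 μ)
    (he_L2 : ∀ k, MemLp (e k) 2 μ)
    (hΔ_int : ∀ k, Integrable (Δ k) μ) (hΔ_nonneg : ∀ k ω, 0 ≤ Δ k ω)
    -- VrFRBS recursion (with the convention `x (−1) = x (−2) = x 0` via truncated subtraction)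
    (hrec_x : ∀ k ω, x k ω = y k ω - η • what k ω)
    (hrec_y : ∀ k ω, y (k + 1) ω = y k ω - η • (w k ω + e k ω))
    (hLip : ∀ k ω, ‖w k ω - what k ω‖ ≤ L * ‖x k ω - x (k - 1) ω‖)
    (hMinty : ∀ k ω, ⟪w k ω, x k ω - xstar⟫ ≥ -ρ * ‖w k ω‖ ^ 2)
    -- Definition 1: unbiased variance-reduced estimator (with `Δ (−1) = 0`)
    (hunbiased : ∀ k, μ[e k | ℱ k] =ᵐ[μ] 0)
    (hvar : ∀ k, ∀ᵐ ω ∂μ, (μ[fun a => ‖e k a‖ ^ 2 | ℱ k]) ω ≤ (μ[Δ k | ℱ k]) ω)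
    (hΔrec : ∀ k, ∀ᵐ ω ∂μ, (μ[Δ k | ℱ k]) ω ≤
      (1 - κ) * (if k = 0 then 0 else Δ (k - 1) ω)
        + Θ * ‖x k ω - x (k - 1) ω‖ ^ 2 + Θhat * ‖x (k - 1) ω - x (k - 2) ω‖ ^ 2 + δ k)
    -- parameter conditions of Theorem 3.4
    (hLρ : L * ρ < 1 / (24 * Real.sqrt 2))
    (hηlow : 8 * ρ ≤ η) (hηup : η < 1 / (3 * Real.sqrt 2 * L))
    (hκΘ : κ * L ^ 2 ≥ Θ + Θhat)
    -- deterministic initialization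
    (hx0 : ∀ ω, x 0 ω = x0) (hw0 : ∀ ω, w 0 ω = w0)
    (hwhat0 : ∀ ω, what 0 ω = w 0 ω) :
    ∀ K : ℕ,
      (1 / ((K : ℝ) + 1)) * ∑ k ∈ Finset.range (K + 1), ∫ ω, ‖w k ω‖ ^ 2 ∂μ ≤
        (13 / (3 * (1 - 18 * L ^ 2 * η ^ 2) * ((K : ℝ) + 1)))
            * ((2 / η ^ 2) * ‖x0 - xstar‖ ^ 2 + (5 / 2) * ‖w0‖ ^ 2)
          + (26 / (3 * κ * (1 - 18 * L ^ 2 * η ^ 2) * ((K : ℝ) + 1)))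
            * ∑ k ∈ Finset.range (K + 1), δ k := by
  -- basic facts
  have hη2 : (0:ℝ) < η ^ 2 := by positivity
  have hLη : 18 * L ^ 2 * η ^ 2 < 1 := by
    have h2 : (0:ℝ) < 3 * Real.sqrt 2 * L := by
      have := Real.sqrt_pos.2 (by norm_num : (0:ℝ) < 2); positivity
    have h1 : η * (3 * Real.sqrt 2 * L) < 1 := by
      rw [← lt_div_iff₀ h2]; exact hηup
    have hs2 : Real.sqrt 2 ^ 2 = 2 := Real.sq_sqrt (by norm_num)
    have h3 : (0:ℝ) ≤ η * (3 * Real.sqrt 2 * L) := by positivity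
    nlinarith [h1, h3, hs2]
  -- L2 memberships
  have hyx : ∀ k, MemLp (fun ω => y k ω - xstar) 2 μ :=
    fun k => (hy_L2 k).sub (memLp_const xstar)
  have hyxk : ∀ k, MemLp (fun ω => y k ω - x k ω) 2 μ :=
    fun k => (hy_L2 k).sub (hx_L2 k)
  have hxx : ∀ k j, MemLp (fun ω => x k ω - x j ω) 2 μ :=
    fun k j => (hx_L2 k).sub (hx_L2 j)
  have hvL2 : ∀ k, MemLp (fun ω => (y k ω - xstar) - η • w k ω) 2 μ :=
    fun k => (hyx k).sub ((hw_L2 k).const_smul η)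
  -- integrability
  have iA : ∀ k, Integrable (fun ω => ‖y k ω - xstar‖ ^ 2) μ := fun k => int_norm_sq (hyx k)
  have iT : ∀ k, Integrable (fun ω => ‖w k ω‖ ^ 2) μ := fun k => int_norm_sq (hw_L2 k)
  have iM : ∀ k, Integrable (fun ω => ‖y k ω - x k ω‖ ^ 2) μ := fun k => int_norm_sq (hyxk k)
  have iS : ∀ k j, Integrable (fun ω => ‖x k ω - x j ω‖ ^ 2) μ := fun k j => int_norm_sq (hxx k j)
  have iE : ∀ k, Integrable (fun ω => ‖e k ω‖ ^ 2) μ := fun k => int_norm_sq (he_L2 k)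
  -- Step 1 : descent inequality
  have step1 : ∀ k, (∫ ω, ‖y (k+1) ω - xstar‖ ^ 2 ∂μ)
      ≤ (∫ ω, ‖y k ω - xstar‖ ^ 2 ∂μ) + (η^2/4) * (∫ ω, ‖w k ω‖ ^ 2 ∂μ)
        - (∫ ω, ‖y k ω - x k ω‖ ^ 2 ∂μ)
        + η^2*L^2 * (∫ ω, ‖x k ω - x (k-1) ω‖ ^ 2 ∂μ)
        + η^2 * (∫ ω, ‖e k ω‖ ^ 2 ∂μ) := by
    intro k
    have hpt : ∀ ω, ‖y (k+1) ω - xstar‖ ^ 2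
          + (2*η) * ⟪(y k ω - xstar) - η • w k ω, e k ω⟫
        ≤ ‖y k ω - xstar‖ ^ 2 + (η^2/4) * ‖w k ω‖ ^ 2 - ‖y k ω - x k ω‖ ^ 2
          + η^2*L^2 * ‖x k ω - x (k-1) ω‖ ^ 2 + η^2 * ‖e k ω‖ ^ 2 := by
      intro ω
      have hyy : y (k+1) ω - xstar = ((y k ω - xstar) - η • w k ω) - η • e k ω := by
        rw [hrec_y k ω, smul_add]; abel
      have hxy : x k ω - xstar = (y k ω - xstar) - η • what k ω := by
        rw [hrec_x k ω]; abel
      have hyxw : y k ω - x k ω = η • what k ω := by rw [hrec_x k ω]; abel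
      have hstar := star_ineq η L ρ hη hρ hL.le hηlow (y k ω - xstar) (w k ω) (what k ω)
        (x k ω - x (k-1) ω) (by rw [← hxy]; exact hMinty k ω) (hLip k ω)
      have hexp : ‖((y k ω - xstar) - η • w k ω) - η • e k ω‖ ^ 2
          = ‖(y k ω - xstar) - η • w k ω‖ ^ 2
            - 2*(η * ⟪(y k ω - xstar) - η • w k ω, e k ω⟫) + η^2*‖e k ω‖ ^ 2 := by
        rw [norm_sub_sq_real, real_inner_smul_right, norm_smul, Real.norm_eq_abs,
          abs_of_pos hη]
        ring
      rw [hyy, hexp]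
      have h2 : ‖y k ω - x k ω‖ ^ 2 = ‖η • what k ω‖ ^ 2 := by rw [hyxw]
      linarith [hstar, h2]
    have iInn : Integrable (fun ω => (2*η) * ⟪(y k ω - xstar) - η • w k ω, e k ω⟫) μ :=
      (int_inner (hvL2 k) (he_L2 k)).const_mul (2*η)
    have i2 : Integrable (fun ω => (η^2/4) * ‖w k ω‖ ^ 2) μ := (iT k).const_mul _
    have i4 : Integrable (fun ω => η^2*L^2 * ‖x k ω - x (k-1) ω‖ ^ 2) μ :=
      (iS k (k-1)).const_mul _
    have i5 : Integrable (fun ω => η^2 * ‖e k ω‖ ^ 2) μ := (iE k).const_mul _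
    have i12 : Integrable (fun ω => ‖y k ω - xstar‖ ^ 2 + (η^2/4) * ‖w k ω‖ ^ 2) μ :=
      (iA k).add i2
    have i123 : Integrable (fun ω => ‖y k ω - xstar‖ ^ 2 + (η^2/4) * ‖w k ω‖ ^ 2
        - ‖y k ω - x k ω‖ ^ 2) μ := i12.sub (iM k)
    have i1234 : Integrable (fun ω => ‖y k ω - xstar‖ ^ 2 + (η^2/4) * ‖w k ω‖ ^ 2
        - ‖y k ω - x k ω‖ ^ 2 + η^2*L^2 * ‖x k ω - x (k-1) ω‖ ^ 2) μ := i123.add i4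
    have hintL : Integrable (fun ω => ‖y (k+1) ω - xstar‖ ^ 2
        + (2*η) * ⟪(y k ω - xstar) - η • w k ω, e k ω⟫) μ := (iA (k+1)).add iInn
    have hintR : Integrable (fun ω => ‖y k ω - xstar‖ ^ 2 + (η^2/4) * ‖w k ω‖ ^ 2
        - ‖y k ω - x k ω‖ ^ 2 + η^2*L^2 * ‖x k ω - x (k-1) ω‖ ^ 2
        + η^2 * ‖e k ω‖ ^ 2) μ := i1234.add i5
    have hmono := integral_mono hintL hintR hpt
    have hzero : ∫ ω, ⟪(y k ω - xstar) - η • w k ω, e k ω⟫ ∂μ = 0 :=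
      integral_inner_condexp_zero (ℱ.le k)
        (((hy_meas k).sub stronglyMeasurable_const).sub ((hw_meas k).const_smul η))
        (hvL2 k) (he_L2 k) (hunbiased k)
    rw [integral_add (iA (k+1)) iInn, integral_const_mul, hzero, mul_zero, add_zero,
      integral_add i1234 i5, integral_add i123 i4, integral_sub i12 (iM k),
      integral_add (iA k) i2, integral_const_mul, integral_const_mul, integral_const_mul] at hmono
    exact hmono
  -- Step 3 : bound on ‖w‖²
  have step3 : ∀ k, η^2 * (∫ ω, ‖w k ω‖ ^ 2 ∂μ)
      ≤ (3/2) * (∫ ω, ‖y k ω - x k ω‖ ^ 2 ∂μ)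
        + 3*L^2*η^2 * (∫ ω, ‖x k ω - x (k-1) ω‖ ^ 2 ∂μ) := by
    intro k
    have hpt : ∀ ω, η^2 * ‖w k ω‖ ^ 2
        ≤ (3/2) * ‖y k ω - x k ω‖ ^ 2 + 3*L^2*η^2 * ‖x k ω - x (k-1) ω‖ ^ 2 := by
      intro ω
      have hid : η • w k ω = (y k ω - x k ω) + η • (w k ω - what k ω) := by
        rw [hrec_x k ω, smul_sub]; abel
      have h1 := young2 (y k ω - x k ω) (η • (w k ω - what k ω))
      rw [← hid] at h1
      have hn1 : ‖η • w k ω‖ ^ 2 = η^2 * ‖w k ω‖ ^ 2 := by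
        rw [norm_smul, Real.norm_eq_abs, abs_of_pos hη]; ring
      have hn2 : ‖η • (w k ω - what k ω)‖ ^ 2 = η^2 * ‖w k ω - what k ω‖ ^ 2 := by
        rw [norm_smul, Real.norm_eq_abs, abs_of_pos hη]; ring
      have hlip2 : ‖w k ω - what k ω‖ ^ 2 ≤ L^2 * ‖x k ω - x (k-1) ω‖ ^ 2 := by
        nlinarith [hLip k ω, norm_nonneg (w k ω - what k ω), norm_nonneg (x k ω - x (k-1) ω),
          mul_nonneg hL.le (norm_nonneg (x k ω - x (k-1) ω))]
      nlinarith [h1, mul_le_mul_of_nonneg_left hlip2 (by positivity : (0:ℝ) ≤ 3*η^2)]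
    have i1 : Integrable (fun ω => (3/2) * ‖y k ω - x k ω‖ ^ 2) μ := (iM k).const_mul _
    have i2 : Integrable (fun ω => 3*L^2*η^2 * ‖x k ω - x (k-1) ω‖ ^ 2) μ :=
      (iS k (k-1)).const_mul _
    have i12 : Integrable (fun ω => (3/2) * ‖y k ω - x k ω‖ ^ 2
        + 3*L^2*η^2 * ‖x k ω - x (k-1) ω‖ ^ 2) μ := i1.add i2
    have hmono := integral_mono ((iT k).const_mul (η^2)) i12 hpt
    rw [integral_add i1 i2, integral_const_mul, integral_const_mul, integral_const_mul] at hmono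
    exact hmono
  -- Step 4 : recursion for the displacement
  have step4 : ∀ k, (∫ ω, ‖x (k+1) ω - x k ω‖ ^ 2 ∂μ)
      ≤ (11/2)*L^2*η^2 * (∫ ω, ‖x k ω - x (k-1) ω‖ ^ 2 ∂μ)
        + (11/2)*η^2 * (∫ ω, ‖e k ω‖ ^ 2 ∂μ)
        + (11/7) * (∫ ω, ‖y (k+1) ω - x (k+1) ω‖ ^ 2 ∂μ) := by
    intro k
    have hpt : ∀ ω, ‖x (k+1) ω - x k ω‖ ^ 2
        ≤ (11/2)*L^2*η^2 * ‖x k ω - x (k-1) ω‖ ^ 2 + (11/2)*η^2 * ‖e k ω‖ ^ 2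
          + (11/7) * ‖y (k+1) ω - x (k+1) ω‖ ^ 2 := by
      intro ω
      have hid : x (k+1) ω - x k ω
          = η • (what k ω - w k ω) + (-η) • e k ω + -(y (k+1) ω - x (k+1) ω) := by
        rw [hrec_x (k+1) ω, hrec_y k ω, hrec_x k ω, smul_sub, smul_add, neg_smul]
        abel
      have h1 := young3 (η • (what k ω - w k ω)) ((-η) • e k ω) (-(y (k+1) ω - x (k+1) ω))
      rw [← hid] at h1
      have hn1 : ‖η • (what k ω - w k ω)‖ ^ 2 = η^2 * ‖what k ω - w k ω‖ ^ 2 := by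
        rw [norm_smul, Real.norm_eq_abs, abs_of_pos hη]; ring
      have hn2 : ‖(-η) • e k ω‖ ^ 2 = η^2 * ‖e k ω‖ ^ 2 := by
        rw [norm_smul, Real.norm_eq_abs, abs_of_neg (by linarith : -η < 0)]; ring
      have hn3 : ‖-(y (k+1) ω - x (k+1) ω)‖ ^ 2 = ‖y (k+1) ω - x (k+1) ω‖ ^ 2 := by
        rw [norm_neg]
      have hrev : ‖what k ω - w k ω‖ = ‖w k ω - what k ω‖ := norm_sub_rev _ _
      have hlip2 : ‖what k ω - w k ω‖ ^ 2 ≤ L^2 * ‖x k ω - x (k-1) ω‖ ^ 2 := by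
        rw [hrev]
        nlinarith [hLip k ω, norm_nonneg (w k ω - what k ω), norm_nonneg (x k ω - x (k-1) ω),
          mul_nonneg hL.le (norm_nonneg (x k ω - x (k-1) ω))]
      nlinarith [h1, mul_le_mul_of_nonneg_left hlip2 (by positivity : (0:ℝ) ≤ (11/2)*η^2)]
    have i1 : Integrable (fun ω => (11/2)*L^2*η^2 * ‖x k ω - x (k-1) ω‖ ^ 2) μ :=
      (iS k (k-1)).const_mul _
    have i2 : Integrable (fun ω => (11/2)*η^2 * ‖e k ω‖ ^ 2) μ := (iE k).const_mul _
    have i3 : Integrable (fun ω => (11/7) * ‖y (k+1) ω - x (k+1) ω‖ ^ 2) μ :=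
      (iM (k+1)).const_mul _
    have i12 : Integrable (fun ω => (11/2)*L^2*η^2 * ‖x k ω - x (k-1) ω‖ ^ 2
        + (11/2)*η^2 * ‖e k ω‖ ^ 2) μ := i1.add i2
    have i123 : Integrable (fun ω => (11/2)*L^2*η^2 * ‖x k ω - x (k-1) ω‖ ^ 2
        + (11/2)*η^2 * ‖e k ω‖ ^ 2 + (11/7) * ‖y (k+1) ω - x (k+1) ω‖ ^ 2) μ := i12.add i3
    have hmono := integral_mono (iS (k+1) k) i123 hpt
    rw [integral_add i12 i3, integral_add i1 i2, integral_const_mul, integral_const_mul,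
      integral_const_mul] at hmono
    exact hmono
  -- Step 5 : variance bounds
  have hRHSint : ∀ k, Integrable (fun ω => (1-κ) * (if k = 0 then 0 else Δ (k-1) ω)
      + Θ * ‖x k ω - x (k-1) ω‖ ^ 2 + Θhat * ‖x (k-1) ω - x (k-2) ω‖ ^ 2 + δ k) μ := by
    intro k
    have hIf : Integrable (fun ω => (1-κ) * (if k = 0 then 0 else Δ (k-1) ω)) μ := by
      by_cases hk : k = 0
      · simpa [hk] using integrable_const (0:ℝ)
      · simpa [hk] using (hΔ_int (k-1)).const_mul (1-κ)
    exact ((hIf.add ((iS k (k-1)).const_mul Θ)).add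
      ((iS (k-1) (k-2)).const_mul Θhat)).add (integrable_const (δ k))
  have hRHSval : ∀ k, (∫ ω, ((1-κ) * (if k = 0 then 0 else Δ (k-1) ω)
        + Θ * ‖x k ω - x (k-1) ω‖ ^ 2 + Θhat * ‖x (k-1) ω - x (k-2) ω‖ ^ 2 + δ k) ∂μ)
      = (1-κ) * (if k = 0 then 0 else ∫ ω, Δ (k-1) ω ∂μ)
        + Θ * (∫ ω, ‖x k ω - x (k-1) ω‖ ^ 2 ∂μ)
        + Θhat * (∫ ω, ‖x (k-1) ω - x (k-2) ω‖ ^ 2 ∂μ) + δ k := by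
    intro k
    have hIf : Integrable (fun ω => (1-κ) * (if k = 0 then 0 else Δ (k-1) ω)) μ := by
      by_cases hk : k = 0
      · simpa [hk] using integrable_const (0:ℝ)
      · simpa [hk] using (hΔ_int (k-1)).const_mul (1-κ)
    have hIfval : (∫ ω, (1-κ) * (if k = 0 then 0 else Δ (k-1) ω) ∂μ)
        = (1-κ) * (if k = 0 then 0 else ∫ ω, Δ (k-1) ω ∂μ) := by
      by_cases hk : k = 0
      · simp [hk]
      · simp only [hk, if_false]
        exact integral_const_mul _ _
    have i2 : Integrable (fun ω => Θ * ‖x k ω - x (k-1) ω‖ ^ 2) μ := (iS k (k-1)).const_mul Θ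
    have i3 : Integrable (fun ω => Θhat * ‖x (k-1) ω - x (k-2) ω‖ ^ 2) μ :=
      (iS (k-1) (k-2)).const_mul Θhat
    have i12 : Integrable (fun ω => (1-κ) * (if k = 0 then 0 else Δ (k-1) ω)
        + Θ * ‖x k ω - x (k-1) ω‖ ^ 2) μ := hIf.add i2
    have i123 : Integrable (fun ω => (1-κ) * (if k = 0 then 0 else Δ (k-1) ω)
        + Θ * ‖x k ω - x (k-1) ω‖ ^ 2 + Θhat * ‖x (k-1) ω - x (k-2) ω‖ ^ 2) μ := i12.add i3
    rw [integral_add i123 (integrable_const (δ k)), integral_add i12 i3, integral_add hIf i2,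
      hIfval, integral_const_mul, integral_const_mul, integral_const]
    simp
  have step5 : ∀ k, (∫ ω, ‖e k ω‖ ^ 2 ∂μ)
      ≤ (1-κ) * (if k = 0 then 0 else ∫ ω, Δ (k-1) ω ∂μ)
        + Θ * (∫ ω, ‖x k ω - x (k-1) ω‖ ^ 2 ∂μ)
        + Θhat * (∫ ω, ‖x (k-1) ω - x (k-2) ω‖ ^ 2 ∂μ) + δ k := by
    intro k
    have h1 : (∫ ω, ‖e k ω‖ ^ 2 ∂μ) = ∫ ω, (μ[fun a => ‖e k a‖ ^ 2|ℱ k]) ω ∂μ :=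
      (integral_condExp (μ := μ) (f := fun a => ‖e k a‖ ^ 2) (ℱ.le k)).symm
    rw [h1, ← hRHSval k]
    calc ∫ ω, (μ[fun a => ‖e k a‖ ^ 2|ℱ k]) ω ∂μ
        ≤ ∫ ω, (μ[Δ k|ℱ k]) ω ∂μ :=
          integral_mono_ae integrable_condExp integrable_condExp (hvar k)
      _ ≤ _ := integral_mono_ae integrable_condExp (hRHSint k) (hΔrec k)
  have step5' : ∀ k, (∫ ω, Δ k ω ∂μ)
      ≤ (1-κ) * (if k = 0 then 0 else ∫ ω, Δ (k-1) ω ∂μ)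
        + Θ * (∫ ω, ‖x k ω - x (k-1) ω‖ ^ 2 ∂μ)
        + Θhat * (∫ ω, ‖x (k-1) ω - x (k-2) ω‖ ^ 2 ∂μ) + δ k := by
    intro k
    have h1 : (∫ ω, Δ k ω ∂μ) = ∫ ω, (μ[Δ k|ℱ k]) ω ∂μ :=
      (integral_condExp (μ := μ) (f := Δ k) (ℱ.le k)).symm
    rw [h1, ← hRHSval k]
    exact integral_mono_ae integrable_condExp (hRHSint k) (hΔrec k)
  -- now sum everything up
  intro K
  have hKp : (0:ℝ) < (K:ℝ) + 1 := by positivity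
  have hCpos : (0:ℝ) < 1 - 18*L^2*η^2 := by linarith
  -- nonnegativity of all summands
  have hTnn : ∀ k, (0:ℝ) ≤ ∫ ω, ‖w k ω‖ ^ 2 ∂μ :=
    fun k => integral_nonneg fun ω => by positivity
  have hMnn : ∀ k, (0:ℝ) ≤ ∫ ω, ‖y k ω - x k ω‖ ^ 2 ∂μ :=
    fun k => integral_nonneg fun ω => by positivity
  have hSnn : ∀ k j, (0:ℝ) ≤ ∫ ω, ‖x k ω - x j ω‖ ^ 2 ∂μ :=
    fun k j => integral_nonneg fun ω => by positivity
  have hEnn : ∀ k, (0:ℝ) ≤ ∫ ω, ‖e k ω‖ ^ 2 ∂μ :=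
    fun k => integral_nonneg fun ω => by positivity
  have hAnn : ∀ k, (0:ℝ) ≤ ∫ ω, ‖y k ω - xstar‖ ^ 2 ∂μ :=
    fun k => integral_nonneg fun ω => by positivity
  have hDnn : ∀ k, (0:ℝ) ≤ ∫ ω, Δ k ω ∂μ :=
    fun k => integral_nonneg fun ω => hΔ_nonneg k ω
  have hST0 : (0:ℝ) ≤ ∑ k ∈ Finset.range (K+1), ∫ ω, ‖w k ω‖ ^ 2 ∂μ :=
    Finset.sum_nonneg fun k _ => hTnn k
  have hSM0 : (0:ℝ) ≤ ∑ k ∈ Finset.range (K+1), ∫ ω, ‖y k ω - x k ω‖ ^ 2 ∂μ :=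
    Finset.sum_nonneg fun k _ => hMnn k
  have hSS0 : (0:ℝ) ≤ ∑ k ∈ Finset.range (K+1), ∫ ω, ‖x k ω - x (k-1) ω‖ ^ 2 ∂μ :=
    Finset.sum_nonneg fun k _ => hSnn k (k-1)
  have hSE0 : (0:ℝ) ≤ ∑ k ∈ Finset.range (K+1), ∫ ω, ‖e k ω‖ ^ 2 ∂μ :=
    Finset.sum_nonneg fun k _ => hEnn k
  have hSd0 : (0:ℝ) ≤ ∑ k ∈ Finset.range (K+1), δ k := Finset.sum_nonneg fun k _ => hδ k
  -- telescoped descent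
  have hMrec : ∀ N : ℕ, (∑ k ∈ Finset.range (N+1), ∫ ω, ‖y k ω - x k ω‖ ^ 2 ∂μ)
      + (∫ ω, ‖y (N+1) ω - xstar‖ ^ 2 ∂μ)
      ≤ (∫ ω, ‖y 0 ω - xstar‖ ^ 2 ∂μ)
        + ∑ k ∈ Finset.range (N+1), ((η^2/4) * (∫ ω, ‖w k ω‖ ^ 2 ∂μ)
          + η^2*L^2 * (∫ ω, ‖x k ω - x (k-1) ω‖ ^ 2 ∂μ)
          + η^2 * (∫ ω, ‖e k ω‖ ^ 2 ∂μ)) := by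
    intro N
    induction N with
    | zero =>
      rw [Finset.sum_range_succ (fun k => ∫ ω, ‖y k ω - x k ω‖ ^ 2 ∂μ) 0,
        Finset.sum_range_succ (fun k => (η^2/4) * (∫ ω, ‖w k ω‖ ^ 2 ∂μ)
          + η^2*L^2 * (∫ ω, ‖x k ω - x (k-1) ω‖ ^ 2 ∂μ)
          + η^2 * (∫ ω, ‖e k ω‖ ^ 2 ∂μ)) 0, Finset.sum_range_zero, Finset.sum_range_zero]
      simp only [zero_add]
      linarith [step1 0]
    | succ n ih =>
      rw [Finset.sum_range_succ (fun k => ∫ ω, ‖y k ω - x k ω‖ ^ 2 ∂μ) (n+1),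
        Finset.sum_range_succ (fun k => (η^2/4) * (∫ ω, ‖w k ω‖ ^ 2 ∂μ)
          + η^2*L^2 * (∫ ω, ‖x k ω - x (k-1) ω‖ ^ 2 ∂μ)
          + η^2 * (∫ ω, ‖e k ω‖ ^ 2 ∂μ)) (n+1)]
      linarith [step1 (n+1)]
  have hM1 : (∑ k ∈ Finset.range (K+1), ∫ ω, ‖y k ω - x k ω‖ ^ 2 ∂μ)
      ≤ (∫ ω, ‖y 0 ω - xstar‖ ^ 2 ∂μ)
        + (η^2/4) * (∑ k ∈ Finset.range (K+1), ∫ ω, ‖w k ω‖ ^ 2 ∂μ)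
        + η^2*L^2 * (∑ k ∈ Finset.range (K+1), ∫ ω, ‖x k ω - x (k-1) ω‖ ^ 2 ∂μ)
        + η^2 * (∑ k ∈ Finset.range (K+1), ∫ ω, ‖e k ω‖ ^ 2 ∂μ) := by
    have h := hMrec K
    rw [Finset.sum_add_distrib, Finset.sum_add_distrib, ← Finset.mul_sum, ← Finset.mul_sum,
      ← Finset.mul_sum] at h
    linarith [hAnn (K+1)]
  -- summed bound on ‖w‖²
  have hT1 : η^2 * (∑ k ∈ Finset.range (K+1), ∫ ω, ‖w k ω‖ ^ 2 ∂μ)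
      ≤ (3/2) * (∑ k ∈ Finset.range (K+1), ∫ ω, ‖y k ω - x k ω‖ ^ 2 ∂μ)
        + 3*L^2*η^2 * (∑ k ∈ Finset.range (K+1), ∫ ω, ‖x k ω - x (k-1) ω‖ ^ 2 ∂μ) := by
    calc η^2 * (∑ k ∈ Finset.range (K+1), ∫ ω, ‖w k ω‖ ^ 2 ∂μ)
        = ∑ k ∈ Finset.range (K+1), η^2 * (∫ ω, ‖w k ω‖ ^ 2 ∂μ) := Finset.mul_sum _ _ _
      _ ≤ ∑ k ∈ Finset.range (K+1), ((3/2) * (∫ ω, ‖y k ω - x k ω‖ ^ 2 ∂μ)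
            + 3*L^2*η^2 * (∫ ω, ‖x k ω - x (k-1) ω‖ ^ 2 ∂μ)) :=
          Finset.sum_le_sum fun k _ => step3 k
      _ = _ := by
          rw [Finset.sum_add_distrib, ← Finset.mul_sum, ← Finset.mul_sum]
  -- summed recursion on displacements
  have hX1 : (∑ k ∈ Finset.range (K+1), ∫ ω, ‖x k ω - x (k-1) ω‖ ^ 2 ∂μ)
      ≤ (11/2)*L^2*η^2 * (∑ k ∈ Finset.range (K+1), ∫ ω, ‖x k ω - x (k-1) ω‖ ^ 2 ∂μ)
        + (11/2)*η^2 * (∑ k ∈ Finset.range (K+1), ∫ ω, ‖e k ω‖ ^ 2 ∂μ)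
        + (11/7) * (∑ k ∈ Finset.range (K+1), ∫ ω, ‖y k ω - x k ω‖ ^ 2 ∂μ) := by
    have hS0 : (∫ ω, ‖x 0 ω - x (0-1) ω‖ ^ 2 ∂μ) = 0 := by simp
    have hre : (∑ k ∈ Finset.range (K+1), ∫ ω, ‖x k ω - x (k-1) ω‖ ^ 2 ∂μ)
        = ∑ i ∈ Finset.range K, ∫ ω, ‖x (i+1) ω - x i ω‖ ^ 2 ∂μ := by
      rw [Finset.sum_range_succ' (fun k => ∫ ω, ‖x k ω - x (k-1) ω‖ ^ 2 ∂μ) K, hS0, add_zero]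
      simp [Nat.add_sub_cancel]
    have hSsub : (∑ i ∈ Finset.range K, ∫ ω, ‖x i ω - x (i-1) ω‖ ^ 2 ∂μ)
        ≤ ∑ k ∈ Finset.range (K+1), ∫ ω, ‖x k ω - x (k-1) ω‖ ^ 2 ∂μ :=
      Finset.sum_le_sum_of_subset_of_nonneg
        (Finset.range_subset_range.2 (Nat.le_succ K)) (fun k _ _ => hSnn k (k-1))
    have hEsub : (∑ i ∈ Finset.range K, ∫ ω, ‖e i ω‖ ^ 2 ∂μ)
        ≤ ∑ k ∈ Finset.range (K+1), ∫ ω, ‖e k ω‖ ^ 2 ∂μ :=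
      Finset.sum_le_sum_of_subset_of_nonneg
        (Finset.range_subset_range.2 (Nat.le_succ K)) (fun k _ _ => hEnn k)
    have hMsub : (∑ i ∈ Finset.range K, ∫ ω, ‖y (i+1) ω - x (i+1) ω‖ ^ 2 ∂μ)
        ≤ ∑ k ∈ Finset.range (K+1), ∫ ω, ‖y k ω - x k ω‖ ^ 2 ∂μ := by
      rw [Finset.sum_range_succ' (fun k => ∫ ω, ‖y k ω - x k ω‖ ^ 2 ∂μ) K]
      linarith [hMnn 0]
    calc (∑ k ∈ Finset.range (K+1), ∫ ω, ‖x k ω - x (k-1) ω‖ ^ 2 ∂μ)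
        = ∑ i ∈ Finset.range K, ∫ ω, ‖x (i+1) ω - x i ω‖ ^ 2 ∂μ := hre
      _ ≤ ∑ i ∈ Finset.range K, ((11/2)*L^2*η^2 * (∫ ω, ‖x i ω - x (i-1) ω‖ ^ 2 ∂μ)
            + (11/2)*η^2 * (∫ ω, ‖e i ω‖ ^ 2 ∂μ)
            + (11/7) * (∫ ω, ‖y (i+1) ω - x (i+1) ω‖ ^ 2 ∂μ)) :=
          Finset.sum_le_sum fun i _ => step4 i
      _ = (11/2)*L^2*η^2 * (∑ i ∈ Finset.range K, ∫ ω, ‖x i ω - x (i-1) ω‖ ^ 2 ∂μ)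
            + (11/2)*η^2 * (∑ i ∈ Finset.range K, ∫ ω, ‖e i ω‖ ^ 2 ∂μ)
            + (11/7) * (∑ i ∈ Finset.range K, ∫ ω, ‖y (i+1) ω - x (i+1) ω‖ ^ 2 ∂μ) := by
          rw [Finset.sum_add_distrib, Finset.sum_add_distrib, ← Finset.mul_sum, ← Finset.mul_sum,
            ← Finset.mul_sum]
      _ ≤ _ := by
          have h1 := mul_le_mul_of_nonneg_left hSsub (by positivity : (0:ℝ) ≤ (11/2)*L^2*η^2)
          have h2 := mul_le_mul_of_nonneg_left hEsub (by positivity : (0:ℝ) ≤ (11/2)*η^2)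
          have h3 := mul_le_mul_of_nonneg_left hMsub (by positivity : (0:ℝ) ≤ (11/7))
          linarith
  -- sums of the variance recursion
  have hIfsum : (∑ k ∈ Finset.range (K+1),
        (if k = 0 then 0 else ∫ ω, Δ (k-1) ω ∂μ))
      ≤ ∑ k ∈ Finset.range (K+1), ∫ ω, Δ k ω ∂μ := by
    rw [Finset.sum_range_succ' (fun k => (if k = 0 then 0 else ∫ ω, Δ (k-1) ω ∂μ)) K]
    simp only [Nat.succ_ne_zero, if_false, eq_self_iff_true, if_true, Nat.add_sub_cancel,
      add_zero]
    exact Finset.sum_le_sum_of_subset_of_nonneg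
      (Finset.range_subset_range.2 (Nat.le_succ K)) (fun k _ _ => hDnn k)
  have hSsPsum : (∑ k ∈ Finset.range (K+1), ∫ ω, ‖x (k-1) ω - x (k-2) ω‖ ^ 2 ∂μ)
      ≤ ∑ k ∈ Finset.range (K+1), ∫ ω, ‖x k ω - x (k-1) ω‖ ^ 2 ∂μ := by
    rw [Finset.sum_range_succ' (fun k => ∫ ω, ‖x (k-1) ω - x (k-2) ω‖ ^ 2 ∂μ) K]
    have h0 : (∫ ω, ‖x (0-1) ω - x (0-2) ω‖ ^ 2 ∂μ) = 0 := by simp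
    rw [h0, add_zero]
    have heq : (∑ i ∈ Finset.range K, ∫ ω, ‖x (i+1-1) ω - x (i+1-2) ω‖ ^ 2 ∂μ)
        = ∑ i ∈ Finset.range K, ∫ ω, ‖x i ω - x (i-1) ω‖ ^ 2 ∂μ := rfl
    rw [heq]
    exact Finset.sum_le_sum_of_subset_of_nonneg
      (Finset.range_subset_range.2 (Nat.le_succ K)) (fun k _ _ => hSnn k (k-1))
  have hsum5 : ∀ (g : ℕ → ℝ), (∀ k, g k
        ≤ (1-κ) * (if k = 0 then 0 else ∫ ω, Δ (k-1) ω ∂μ)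
          + Θ * (∫ ω, ‖x k ω - x (k-1) ω‖ ^ 2 ∂μ)
          + Θhat * (∫ ω, ‖x (k-1) ω - x (k-2) ω‖ ^ 2 ∂μ) + δ k) →
      (∑ k ∈ Finset.range (K+1), g k)
      ≤ (1-κ) * (∑ k ∈ Finset.range (K+1), ∫ ω, Δ k ω ∂μ)
        + Θ * (∑ k ∈ Finset.range (K+1), ∫ ω, ‖x k ω - x (k-1) ω‖ ^ 2 ∂μ)
        + Θhat * (∑ k ∈ Finset.range (K+1), ∫ ω, ‖x k ω - x (k-1) ω‖ ^ 2 ∂μ)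
        + (∑ k ∈ Finset.range (K+1), δ k) := by
    intro g hg
    have h1 : (∑ k ∈ Finset.range (K+1), g k)
        ≤ ∑ k ∈ Finset.range (K+1), ((1-κ) * (if k = 0 then 0 else ∫ ω, Δ (k-1) ω ∂μ)
          + Θ * (∫ ω, ‖x k ω - x (k-1) ω‖ ^ 2 ∂μ)
          + Θhat * (∫ ω, ‖x (k-1) ω - x (k-2) ω‖ ^ 2 ∂μ) + δ k) :=
      Finset.sum_le_sum fun k _ => hg k
    rw [Finset.sum_add_distrib, Finset.sum_add_distrib, Finset.sum_add_distrib,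
      ← Finset.mul_sum, ← Finset.mul_sum, ← Finset.mul_sum] at h1
    have h2 := mul_le_mul_of_nonneg_left hSsPsum hΘhat
    have hκ' : (0:ℝ) ≤ 1-κ := by linarith
    have h3 := mul_le_mul_of_nonneg_left hIfsum hκ'
    linarith
  have hSDb : κ * (∑ k ∈ Finset.range (K+1), ∫ ω, Δ k ω ∂μ)
      ≤ (Θ + Θhat) * (∑ k ∈ Finset.range (K+1), ∫ ω, ‖x k ω - x (k-1) ω‖ ^ 2 ∂μ)
        + (∑ k ∈ Finset.range (K+1), δ k) := by
    have h := hsum5 (fun k => ∫ ω, Δ k ω ∂μ) step5'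
    nlinarith
  have hSEb : κ * (∑ k ∈ Finset.range (K+1), ∫ ω, ‖e k ω‖ ^ 2 ∂μ)
      ≤ (Θ + Θhat) * (∑ k ∈ Finset.range (K+1), ∫ ω, ‖x k ω - x (k-1) ω‖ ^ 2 ∂μ)
        + (∑ k ∈ Finset.range (K+1), δ k) := by
    have h := hsum5 (fun k => ∫ ω, ‖e k ω‖ ^ 2 ∂μ) step5
    have hSD0 : (0:ℝ) ≤ ∑ k ∈ Finset.range (K+1), ∫ ω, Δ k ω ∂μ :=
      Finset.sum_nonneg fun k _ => hDnn k
    have hκ' : (0:ℝ) ≤ 1-κ := by linarith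
    nlinarith [mul_le_mul_of_nonneg_left hSDb hκ']
  have h4 : η^2 * (∑ k ∈ Finset.range (K+1), ∫ ω, ‖e k ω‖ ^ 2 ∂μ)
      ≤ L^2*η^2 * (∑ k ∈ Finset.range (K+1), ∫ ω, ‖x k ω - x (k-1) ω‖ ^ 2 ∂μ)
        + η^2 * (∑ k ∈ Finset.range (K+1), δ k) / κ := by
    have hdiv : η^2 * (∑ k ∈ Finset.range (K+1), ∫ ω, ‖e k ω‖ ^ 2 ∂μ)
        - L^2*η^2 * (∑ k ∈ Finset.range (K+1), ∫ ω, ‖x k ω - x (k-1) ω‖ ^ 2 ∂μ)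
        ≤ η^2 * (∑ k ∈ Finset.range (K+1), δ k) / κ := by
      rw [le_div_iff₀ hκ0]
      nlinarith [mul_le_mul_of_nonneg_left hSEb (sq_nonneg η), hκΘ,
        mul_nonneg (sq_nonneg η) hSS0, mul_le_mul_of_nonneg_right hκΘ.le hSS0]
    linarith
  -- apply the algebraic lemma
  have halg := alg (L^2*η^2)
    (η^2 * (∑ k ∈ Finset.range (K+1), ∫ ω, ‖w k ω‖ ^ 2 ∂μ))
    (∑ k ∈ Finset.range (K+1), ∫ ω, ‖y k ω - x k ω‖ ^ 2 ∂μ)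
    (∑ k ∈ Finset.range (K+1), ∫ ω, ‖x k ω - x (k-1) ω‖ ^ 2 ∂μ)
    (η^2 * (∑ k ∈ Finset.range (K+1), ∫ ω, ‖e k ω‖ ^ 2 ∂μ))
    (η^2 * (∑ k ∈ Finset.range (K+1), δ k) / κ)
    (∫ ω, ‖y 0 ω - xstar‖ ^ 2 ∂μ)
    (by positivity) (by nlinarith)
    (mul_nonneg (sq_nonneg η) hST0) hSM0 hSS0 (mul_nonneg (sq_nonneg η) hSE0)
    (div_nonneg (mul_nonneg (sq_nonneg η) hSd0) hκ0.le) (hAnn 0)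
    (by nlinarith [hM1]) (by nlinarith [hX1]) (by nlinarith [hT1]) (by nlinarith [h4])
  -- initial value bound
  have hy0 : ∀ ω, y 0 ω - xstar = (x0 - xstar) + η • w0 := by
    intro ω
    have h := hrec_x 0 ω
    rw [hx0 ω, hwhat0 ω, hw0 ω] at h
    have h2 : y 0 ω = x0 + η • w0 := by rw [h]; abel
    rw [h2]; abel
  have hA0 : (∫ ω, ‖y 0 ω - xstar‖ ^ 2 ∂μ)
      ≤ (9/5)*‖x0 - xstar‖^2 + (9/4)*(η^2*‖w0‖^2) := by
    have hval : (∫ ω, ‖y 0 ω - xstar‖ ^ 2 ∂μ) = ‖(x0 - xstar) + η • w0‖^2 := by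
      calc (∫ ω, ‖y 0 ω - xstar‖ ^ 2 ∂μ)
          = ∫ _ω, ‖(x0 - xstar) + η • w0‖^2 ∂μ := by
            apply integral_congr_ae
            filter_upwards with ω
            rw [hy0 ω]
        _ = ‖(x0 - xstar) + η • w0‖^2 := by simp
    rw [hval]
    have h := younginit (x0 - xstar) (η • w0)
    have hn : ‖η • w0‖^2 = η^2 * ‖w0‖^2 := by
      rw [norm_smul, Real.norm_eq_abs, abs_of_pos hη]; ring
    nlinarith [h]
  have hkey : 3*(1 - 18*L^2*η^2)*(η^2 * (∑ k ∈ Finset.range (K+1), ∫ ω, ‖w k ω‖ ^ 2 ∂μ))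
      ≤ 26*‖x0 - xstar‖^2 + (65/2)*η^2*‖w0‖^2
        + 26*(η^2 * (∑ k ∈ Finset.range (K+1), δ k) / κ) := by
    nlinarith [halg, mul_le_mul_of_nonneg_left hA0 (by norm_num : (0:ℝ) ≤ 130/9)]
  -- final conversion
  have hκne : κ ≠ 0 := ne_of_gt hκ0
  have hηne : η ≠ 0 := ne_of_gt hη
  have hCne : (1 - 18*L^2*η^2) ≠ 0 := ne_of_gt hCpos
  have hKne : ((K:ℝ)+1) ≠ 0 := ne_of_gt hKp
  have hT2 : (∑ k ∈ Finset.range (K+1), ∫ ω, ‖w k ω‖ ^ 2 ∂μ)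
      ≤ 13/(3*(1 - 18*L^2*η^2))*((2/η^2)*‖x0 - xstar‖^2 + (5/2)*‖w0‖^2)
        + 26/(3*κ*(1 - 18*L^2*η^2))*(∑ k ∈ Finset.range (K+1), δ k) := by
    have hpos : (0:ℝ) < 3*(1 - 18*L^2*η^2)*η^2 :=
      mul_pos (mul_pos (by norm_num) hCpos) hη2
    refine le_of_mul_le_mul_right ?_ hpos
    have heq : (13/(3*(1 - 18*L^2*η^2))*((2/η^2)*‖x0 - xstar‖^2 + (5/2)*‖w0‖^2)
          + 26/(3*κ*(1 - 18*L^2*η^2))*(∑ k ∈ Finset.range (K+1), δ k))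
          * (3*(1 - 18*L^2*η^2)*η^2)
        = 26*‖x0 - xstar‖^2 + (65/2)*η^2*‖w0‖^2
          + 26*(η^2 * (∑ k ∈ Finset.range (K+1), δ k) / κ) := by
      field_simp
      ring
    rw [heq]
    nlinarith [hkey]
  have hfinal := mul_le_mul_of_nonneg_left hT2 (by positivity : (0:ℝ) ≤ 1/((K:ℝ)+1))
  calc (1/((K:ℝ)+1)) * ∑ k ∈ Finset.range (K+1), ∫ ω, ‖w k ω‖ ^ 2 ∂μ
      ≤ (1/((K:ℝ)+1)) * (13/(3*(1 - 18*L^2*η^2))*((2/η^2)*‖x0 - xstar‖^2 + (5/2)*‖w0‖^2)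
          + 26/(3*κ*(1 - 18*L^2*η^2))*(∑ k ∈ Finset.range (K+1), δ k)) := hfinal
    _ = _ := by
        field_simp
end

section
/- Let (Ξ, ν) be a probability space and 𝐆 : ℝ^p × Ξ → ℝ^p be L-Lipschitz in expectation, i.e. ∫‖𝐆(x,ξ) − 𝐆(y,ξ)‖² dν(ξ) ≤ L²‖x − y‖² for all x, y ∈ ℝ^p, with each ξ ↦ 𝐆(x,ξ) square-integrable. Then for every p̂ ∈ (0,1) and all points u, u′, u″, v ∈ ℝ^p: (1 − p̂)·∫‖2𝐆(u,ξ) − 𝐆(u′,ξ) − 𝐆(v,ξ)‖² dν + 4p̂·∫‖𝐆(u,ξ) − 𝐆(u′,ξ)‖² dν ≤ (1 − p̂/2)·∫‖2𝐆(u′,ξ) − 𝐆(u″,ξ) − 𝐆(v,ξ)‖² dν + (4(4 − 6p̂ + 3p̂²)L²/p̂)·‖u − u′‖² + (2(2 − 3p̂ + p̂²)L²/p̂)·‖u′ − u″‖². (Core recursion in the proof of Lemma 3.1 for the L-SVRG estimator, with u = x_k, u′ = x_{k−1}, u″ = x_{k−2}, v = w_{k−1} and snapshot-update probability p̂.) 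-/
open MeasureTheory
open scoped RealInnerProductSpace

lemma int_sq {Ξ : Type*} [MeasurableSpace Ξ] {ν : Measure Ξ} {E : Type*}
    [NormedAddCommGroup E] {f : Ξ → E} (hf : MemLp f 2 ν) :
    Integrable (fun ξ => ‖f ξ‖ ^ 2) ν := by
  have h := hf.integrable_norm_rpow (by norm_num) (by norm_num)
  simpa [ENNReal.toReal_ofNat, Real.rpow_natCast] using h

lemma ptwise {E : Type*} [NormedAddCommGroup E] [NormedSpace ℝ E]
    (B a b : E) (p : ℝ) (hp1 : 0 < p) (hp2 : p < 1) :
    (1 - p) * ‖B + (2:ℝ) • a - b‖ ^ 2 + 4 * p * ‖a‖ ^ 2 ≤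
      (1 - p / 2) * ‖B‖ ^ 2 + (4 * (4 - 6 * p + 3 * p ^ 2) / p) * ‖a‖ ^ 2
        + (2 * (2 - 3 * p + p ^ 2) / p) * ‖b‖ ^ 2 := by
  have hA : ‖B + (2:ℝ) • a - b‖ ≤ ‖B‖ + (2 * ‖a‖ + ‖b‖) := by
    calc ‖B + (2:ℝ) • a - b‖ ≤ ‖B + (2:ℝ) • a‖ + ‖b‖ := norm_sub_le _ _
    _ ≤ ‖B‖ + ‖(2:ℝ) • a‖ + ‖b‖ := by
        have := norm_add_le B ((2:ℝ) • a); linarith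
    _ = ‖B‖ + (2 * ‖a‖ + ‖b‖) := by
        rw [norm_smul]; simp [Real.norm_ofNat]; ring
  set nA := ‖B + (2:ℝ) • a - b‖ with hnA
  have hA0 : 0 ≤ nA := norm_nonneg _
  have hB0 : 0 ≤ ‖B‖ := norm_nonneg _
  have ha0 : 0 ≤ ‖a‖ := norm_nonneg _
  have hb0 : 0 ≤ ‖b‖ := norm_nonneg _
  have hp0 : p ≠ 0 := ne_of_gt hp1
  have hmain : p * ((1 - p) * nA ^ 2 + 4 * p * ‖a‖ ^ 2) ≤
      p * ((1 - p / 2) * ‖B‖ ^ 2) + 4 * (4 - 6 * p + 3 * p ^ 2) * ‖a‖ ^ 2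
        + 2 * (2 - 3 * p + p ^ 2) * ‖b‖ ^ 2 := by
    nlinarith [sq_nonneg (p * ‖B‖ - 2 * (1 - p) * (2 * ‖a‖ + ‖b‖)),
      mul_nonneg (mul_nonneg (by linarith : (0:ℝ) ≤ 1 - p) (by linarith : (0:ℝ) ≤ 2 - p))
        (sq_nonneg (2 * ‖a‖ - ‖b‖)),
      mul_nonneg (mul_nonneg hp1.le (by linarith : (0:ℝ) ≤ 1 - p))
        (mul_nonneg (sub_nonneg.2 hA) (by linarith : (0:ℝ) ≤ nA + (‖B‖ + (2 * ‖a‖ + ‖b‖)))),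
      sq_nonneg (nA - ‖B‖), sq_nonneg nA, mul_pos hp1 hp1]
  have el : (1 - p) * nA ^ 2 + 4 * p * ‖a‖ ^ 2
      = p * ((1 - p) * nA ^ 2 + 4 * p * ‖a‖ ^ 2) / p := by field_simp
  have er : (1 - p / 2) * ‖B‖ ^ 2 + (4 * (4 - 6 * p + 3 * p ^ 2) / p) * ‖a‖ ^ 2
        + (2 * (2 - 3 * p + p ^ 2) / p) * ‖b‖ ^ 2
      = (p * ((1 - p / 2) * ‖B‖ ^ 2) + 4 * (4 - 6 * p + 3 * p ^ 2) * ‖a‖ ^ 2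
        + 2 * (2 - 3 * p + p ^ 2) * ‖b‖ ^ 2) / p := by field_simp
  rw [el, er]
  exact div_le_div_of_nonneg_right hmain hp1.le

/-- Core recursion in the proof of Lemma 3.1 for the L-SVRG estimator. -/
theorem stmt_6 {p : ℕ} {Ξ : Type*} [MeasurableSpace Ξ] (ν : Measure Ξ)
    [IsProbabilityMeasure ν] (L : ℝ)
    (G : EuclideanSpace ℝ (Fin p) → Ξ → EuclideanSpace ℝ (Fin p))
    (hG : ∀ x, MemLp (G x) 2 ν)
    (hLip : ∀ x y, ∫ ξ, ‖G x ξ - G y ξ‖ ^ 2 ∂ν ≤ L ^ 2 * ‖x - y‖ ^ 2)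
    (phat : ℝ) (hp1 : 0 < phat) (hp2 : phat < 1)
    (u u' u'' v : EuclideanSpace ℝ (Fin p)) :
    (1 - phat) * ∫ ξ, ‖(2 : ℝ) • G u ξ - G u' ξ - G v ξ‖ ^ 2 ∂ν
      + 4 * phat * ∫ ξ, ‖G u ξ - G u' ξ‖ ^ 2 ∂ν ≤
    (1 - phat / 2) * ∫ ξ, ‖(2 : ℝ) • G u' ξ - G u'' ξ - G v ξ‖ ^ 2 ∂ν
      + (4 * (4 - 6 * phat + 3 * phat ^ 2) * L ^ 2 / phat) * ‖u - u'‖ ^ 2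
      + (2 * (2 - 3 * phat + phat ^ 2) * L ^ 2 / phat) * ‖u' - u''‖ ^ 2 := by
  have mA : MemLp (fun ξ => (2:ℝ) • G u ξ - G u' ξ - G v ξ) 2 ν :=
    (((hG u).const_smul (2:ℝ)).sub (hG u')).sub (hG v)
  have mB : MemLp (fun ξ => (2:ℝ) • G u' ξ - G u'' ξ - G v ξ) 2 ν :=
    (((hG u').const_smul (2:ℝ)).sub (hG u'')).sub (hG v)
  have ma : MemLp (fun ξ => G u ξ - G u' ξ) 2 ν := (hG u).sub (hG u')
  have mb : MemLp (fun ξ => G u' ξ - G u'' ξ) 2 ν := (hG u').sub (hG u'')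
  have iA := int_sq mA
  have iB := int_sq mB
  have ia := int_sq ma
  have ib := int_sq mb
  have key : ∫ ξ, ((1 - phat) * ‖(2:ℝ) • G u ξ - G u' ξ - G v ξ‖ ^ 2
        + 4 * phat * ‖G u ξ - G u' ξ‖ ^ 2) ∂ν ≤
      ∫ ξ, ((1 - phat / 2) * ‖(2:ℝ) • G u' ξ - G u'' ξ - G v ξ‖ ^ 2
        + (4 * (4 - 6 * phat + 3 * phat ^ 2) / phat) * ‖G u ξ - G u' ξ‖ ^ 2
        + (2 * (2 - 3 * phat + phat ^ 2) / phat) * ‖G u' ξ - G u'' ξ‖ ^ 2) ∂ν := by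
    refine integral_mono ((iA.const_mul _).add (ia.const_mul _))
      (((iB.const_mul _).add (ia.const_mul _)).add (ib.const_mul _)) (fun ξ => ?_)
    have eA : (2:ℝ) • G u ξ - G u' ξ - G v ξ =
        ((2:ℝ) • G u' ξ - G u'' ξ - G v ξ) + (2:ℝ) • (G u ξ - G u' ξ)
          - (G u' ξ - G u'' ξ) := by module
    rw [eA]
    exact ptwise _ _ _ phat hp1 hp2
  have i1 : Integrable (fun ξ => (1 - phat / 2) * ‖(2:ℝ) • G u' ξ - G u'' ξ - G v ξ‖ ^ 2
      + (4 * (4 - 6 * phat + 3 * phat ^ 2) / phat) * ‖G u ξ - G u' ξ‖ ^ 2) ν :=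
    (iB.const_mul _).add (ia.const_mul _)
  rw [integral_add (iA.const_mul _) (ia.const_mul _),
    integral_add i1 (ib.const_mul _),
    integral_add (iB.const_mul _) (ia.const_mul _),
    integral_const_mul, integral_const_mul, integral_const_mul, integral_const_mul,
    integral_const_mul] at key
  have hca : (0:ℝ) ≤ 4 * (4 - 6 * phat + 3 * phat ^ 2) / phat := by
    apply div_nonneg _ hp1.le; nlinarith [sq_nonneg (phat - 1)]
  have hcb : (0:ℝ) ≤ 2 * (2 - 3 * phat + phat ^ 2) / phat := by
    apply div_nonneg _ hp1.le; nlinarith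
  have h1 := mul_le_mul_of_nonneg_left (hLip u u') hca
  have h2 := mul_le_mul_of_nonneg_left (hLip u' u'') hcb
  have e1 : 4 * (4 - 6 * phat + 3 * phat ^ 2) / phat * (L ^ 2 * ‖u - u'‖ ^ 2)
      = 4 * (4 - 6 * phat + 3 * phat ^ 2) * L ^ 2 / phat * ‖u - u'‖ ^ 2 := by ring
  have e2 : 2 * (2 - 3 * phat + phat ^ 2) / phat * (L ^ 2 * ‖u' - u''‖ ^ 2)
      = 2 * (2 - 3 * phat + phat ^ 2) * L ^ 2 / phat * ‖u' - u''‖ ^ 2 := by ring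
  linarith
end

section
/- Let (Ξ, ν) be a probability space and 𝐆 : ℝ^p × Ξ → ℝ^p be L-Lipschitz in expectation, i.e. ∫‖𝐆(x,ξ) − 𝐆(y,ξ)‖² dν(ξ) ≤ L²‖x − y‖² for all x, y ∈ ℝ^p, with each ξ ↦ 𝐆(x,ξ) square-integrable, and set Gx := ∫𝐆(x,ξ) dν(ξ). Then for every integer b ≥ 1 and all points u, u′, u″ ∈ ℝ^p, integrating over the product measure ν^{⊗b} on Ξ^b (which models an i.i.d. mini-batch of size b): ∫ ‖(1/b)·Σ_{i=1}^b (2𝐆(u,ξ_i) − 3𝐆(u′,ξ_i) + 𝐆(u″,ξ_i)) − (2Gu − 3Gu′ + Gu″)‖² dν^{⊗b}(ξ₁,…,ξ_b) ≤ (8L²/b)·‖u − u′‖² + (2L²/b)·‖u′ − u″‖². (Mini-batch variance bound at the core of Lemma 4.1 for the SARAH estimator.) -/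
open MeasureTheory
open scoped RealInnerProductSpace

section aux

variable {Ξ : Type*} [MeasurableSpace Ξ] {ν : Measure Ξ} [IsProbabilityMeasure ν]
variable {E : Type*} [NormedAddCommGroup E] [InnerProductSpace ℝ E] [CompleteSpace E]

lemma my_mp_eval {n : ℕ} (ν : Measure Ξ) [IsProbabilityMeasure ν] (i : Fin n) :
    MeasurePreserving (fun g : Fin n → Ξ => g i) (Measure.pi fun _ => ν) ν := by
  refine ⟨measurable_pi_apply i, ?_⟩
  ext s hs
  rw [Measure.map_apply (measurable_pi_apply i) hs]
  have h : (fun g : Fin n → Ξ => g i) ⁻¹' s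
      = Set.pi Set.univ (fun j => if j = i then s else Set.univ) := by
    ext g
    simp only [Set.mem_preimage, Set.mem_univ_pi]
    constructor
    · intro hg j
      by_cases hj : j = i <;> simp [hj, hg]
    · intro hg
      have := hg i
      simpa using this
  rw [h, Measure.pi_pi]
  rw [Finset.prod_eq_single i (by intro j _ hj; simp [hj]) (by simp)]
  simp

lemma my_mp_fst {α β : Type*} [MeasurableSpace α] [MeasurableSpace β] {μ : Measure α}
    {κ : Measure β} [SigmaFinite κ] [IsProbabilityMeasure κ] :
    MeasurePreserving (Prod.fst : α × β → α) (μ.prod κ) μ :=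
  ⟨measurable_fst, by simp [Measure.map_fst_prod]⟩

lemma my_mp_snd {α β : Type*} [MeasurableSpace α] [MeasurableSpace β] {μ : Measure α}
    {κ : Measure β} [SigmaFinite κ] [IsProbabilityMeasure μ] :
    MeasurePreserving (Prod.snd : α × β → β) (μ.prod κ) κ :=
  ⟨measurable_snd, by simp [Measure.map_snd_prod]⟩

omit [IsProbabilityMeasure ν] [InnerProductSpace ℝ E] [CompleteSpace E] in
lemma my_sq_int {f : Ξ → E} (hf : MemLp f 2 ν) :
    Integrable (fun ξ => ‖f ξ‖ ^ 2) ν :=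
  hf.norm.integrable_sq

lemma my_var_le {f : Ξ → E} (hf : MemLp f 2 ν) :
    ∫ ξ, ‖f ξ - ∫ x, f x ∂ν‖ ^ 2 ∂ν ≤ ∫ ξ, ‖f ξ‖ ^ 2 ∂ν := by
  set m := ∫ x, f x ∂ν with hm
  have hfint : Integrable f ν := hf.integrable one_le_two
  have h1 : ∀ ξ, ‖f ξ - m‖ ^ 2 = ‖f ξ‖ ^ 2 - 2 * ⟪m, f ξ⟫ + ‖m‖ ^ 2 := by
    intro ξ
    rw [norm_sub_sq_real, real_inner_comm]
  have hint1 : Integrable (fun ξ => ‖f ξ‖ ^ 2) ν := my_sq_int hf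
  have hint2 : Integrable (fun ξ => (2 : ℝ) * ⟪m, f ξ⟫) ν :=
    (hfint.const_inner m).const_mul 2
  have hint12 : Integrable (fun ξ => ‖f ξ‖ ^ 2 - (2 : ℝ) * ⟪m, f ξ⟫) ν := hint1.sub hint2
  calc ∫ ξ, ‖f ξ - m‖ ^ 2 ∂ν
      = ∫ ξ, (‖f ξ‖ ^ 2 - 2 * ⟪m, f ξ⟫ + ‖m‖ ^ 2) ∂ν :=
        integral_congr_ae (Filter.Eventually.of_forall h1)
    _ = (∫ ξ, (‖f ξ‖ ^ 2 - 2 * ⟪m, f ξ⟫) ∂ν) + ∫ _, ‖m‖ ^ 2 ∂ν :=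
        integral_add hint12 (integrable_const _)
    _ = (∫ ξ, ‖f ξ‖ ^ 2 ∂ν) - (∫ ξ, 2 * ⟪m, f ξ⟫ ∂ν) + ‖m‖ ^ 2 := by
        rw [integral_sub hint1 hint2, integral_const]
        simp
    _ = (∫ ξ, ‖f ξ‖ ^ 2 ∂ν) - 2 * ‖m‖ ^ 2 + ‖m‖ ^ 2 := by
        rw [integral_const_mul, integral_inner hfint, ← hm, real_inner_self_eq_norm_sq]
    _ ≤ ∫ ξ, ‖f ξ‖ ^ 2 ∂ν := by nlinarith [sq_nonneg ‖m‖]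

lemma my_key (ν : Measure Ξ) [IsProbabilityMeasure ν] {Y : Ξ → E} (hY : MemLp Y 2 ν)
    (h0 : ∫ ξ, Y ξ ∂ν = 0) :
    ∀ n : ℕ, ∫ g : Fin n → Ξ, ‖∑ i : Fin n, Y (g i)‖ ^ 2 ∂(Measure.pi fun _ : Fin n => ν)
      = n * ∫ ξ, ‖Y ξ‖ ^ 2 ∂ν := by
  intro n
  induction n with
  | zero => simp
  | succ n ih =>
    set μn : Measure (Fin n → Ξ) := Measure.pi fun _ : Fin n => ν with hμn
    have hYev : ∀ i : Fin n, MemLp (fun xs : Fin n → Ξ => Y (xs i)) 2 μn := fun i =>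
      hY.comp_measurePreserving (my_mp_eval ν i)
    set S : (Fin n → Ξ) → E := fun xs => ∑ i : Fin n, Y (xs i) with hSdef
    have hS : MemLp S 2 μn := by
      have h := memLp_finset_sum' (μ := μn) Finset.univ (fun i (_ : i ∈ Finset.univ) => hYev i)
      have hfe : (∑ i : Fin n, fun xs : Fin n → Ξ => Y (xs i)) = S := by
        funext xs; simp [hSdef]
      rwa [hfe] at h
    have hS0 : ∫ xs, S xs ∂μn = 0 := by
      rw [hSdef]
      rw [integral_finset_sum Finset.univ (fun i _ => (hYev i).integrable one_le_two)]
      have he : ∀ i : Fin n, ∫ xs : Fin n → Ξ, Y (xs i) ∂μn = 0 := by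
        intro i
        rw [← h0, ← (my_mp_eval ν i).map_eq]
        exact (integral_map (measurable_pi_apply i).aemeasurable
          (by rw [(my_mp_eval ν i).map_eq]; exact hY.aestronglyMeasurable)).symm
      simp [he]
    have h1 : AEStronglyMeasurable (fun z : Ξ × (Fin n → Ξ) => Y z.1) (ν.prod μn) :=
      hY.aestronglyMeasurable.comp_measurePreserving my_mp_fst
    have h2 : AEStronglyMeasurable (fun z : Ξ × (Fin n → Ξ) => S z.2) (ν.prod μn) :=
      hS.aestronglyMeasurable.comp_measurePreserving my_mp_snd
    -- transfer to the product measure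
    have mp := measurePreserving_piFinSuccAbove (fun _ : Fin (n + 1) => ν) 0
    have hz : ∫ g : Fin (n + 1) → Ξ, ‖∑ i : Fin (n + 1), Y (g i)‖ ^ 2
          ∂(Measure.pi fun _ : Fin (n + 1) => ν)
        = ∫ z : Ξ × (Fin n → Ξ), ‖Y z.1 + S z.2‖ ^ 2 ∂(ν.prod μn) := by
      rw [← mp.map_eq]
      rw [integral_map mp.measurable.aemeasurable]
      · apply integral_congr_ae
        refine Filter.Eventually.of_forall fun g => ?_
        have hsum : ∑ i : Fin (n + 1), Y (g i) = Y (g 0) + ∑ i : Fin n, Y (g i.succ) :=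
          Fin.sum_univ_succ _
        simp only [MeasurableEquiv.piFinSuccAbove, MeasurableEquiv.coe_mk,
          Equiv.coe_fn_mk, Fin.insertNthEquiv, hSdef, Fin.removeNth_zero]
        rw [hsum]
        rfl
      · rw [mp.map_eq]
        exact (h1.add h2).norm.pow 2
    rw [hz]
    -- expand the square
    have hYn : Integrable (fun ξ => ‖Y ξ‖ ^ 2) ν := my_sq_int hY
    have hSn : Integrable (fun xs => ‖S xs‖ ^ 2) μn := my_sq_int hS
    have I1 : Integrable (fun z : Ξ × (Fin n → Ξ) => ‖Y z.1‖ ^ 2) (ν.prod μn) := by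
      have := hYn.mul_prod (integrable_const (1 : ℝ) (μ := μn))
      simpa using this
    have I3 : Integrable (fun z : Ξ × (Fin n → Ξ) => ‖S z.2‖ ^ 2) (ν.prod μn) := by
      have := (integrable_const (1 : ℝ) (μ := ν)).mul_prod hSn
      simpa using this
    have I2 : Integrable (fun z : Ξ × (Fin n → Ξ) => (2 : ℝ) * ⟪Y z.1, S z.2⟫) (ν.prod μn) := by
      have hbd : Integrable (fun z : Ξ × (Fin n → Ξ) => 2 * (‖Y z.1‖ * ‖S z.2‖)) (ν.prod μn) :=
        ((hY.integrable one_le_two).norm.mul_prod (hS.integrable one_le_two).norm).const_mul 2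
      refine hbd.mono' ((h1.inner h2).const_mul (2 : ℝ)) ?_
      refine Filter.Eventually.of_forall fun z => ?_
      rw [Real.norm_eq_abs, abs_mul, abs_two]
      gcongr
      exact abs_real_inner_le_norm _ _
    have I12 : Integrable
        (fun z : Ξ × (Fin n → Ξ) => ‖Y z.1‖ ^ 2 + (2 : ℝ) * ⟪Y z.1, S z.2⟫) (ν.prod μn) :=
      I1.add I2
    have expand : ∀ z : Ξ × (Fin n → Ξ),
        ‖Y z.1 + S z.2‖ ^ 2 = ‖Y z.1‖ ^ 2 + 2 * ⟪Y z.1, S z.2⟫ + ‖S z.2‖ ^ 2 := fun z =>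
      norm_add_sq_real _ _
    have cross : ∫ z : Ξ × (Fin n → Ξ), 2 * ⟪Y z.1, S z.2⟫ ∂(ν.prod μn) = 0 := by
      rw [integral_prod _ I2]
      have hin : ∀ x : Ξ, ∫ xs, 2 * ⟪Y x, S xs⟫ ∂μn = 0 := by
        intro x
        rw [integral_const_mul, integral_inner (hS.integrable one_le_two), hS0]
        simp
      simp [hin]
    have e1 : ∫ z : Ξ × (Fin n → Ξ), ‖Y z.1‖ ^ 2 ∂(ν.prod μn) = ∫ ξ, ‖Y ξ‖ ^ 2 ∂ν := by
      have := integral_prod_mul (μ := ν) (ν := μn) (fun ξ => ‖Y ξ‖ ^ 2) (fun _ => (1 : ℝ))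
      simpa using this
    have e2 : ∫ z : Ξ × (Fin n → Ξ), ‖S z.2‖ ^ 2 ∂(ν.prod μn) = ∫ xs, ‖S xs‖ ^ 2 ∂μn := by
      have := integral_prod_mul (μ := ν) (ν := μn) (fun _ : Ξ => (1 : ℝ)) (fun xs => ‖S xs‖ ^ 2)
      simpa using this
    calc ∫ z : Ξ × (Fin n → Ξ), ‖Y z.1 + S z.2‖ ^ 2 ∂(ν.prod μn)
        = ∫ z : Ξ × (Fin n → Ξ),
            (‖Y z.1‖ ^ 2 + 2 * ⟪Y z.1, S z.2⟫ + ‖S z.2‖ ^ 2) ∂(ν.prod μn) :=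
          integral_congr_ae (Filter.Eventually.of_forall expand)
      _ = (∫ z : Ξ × (Fin n → Ξ), (‖Y z.1‖ ^ 2 + 2 * ⟪Y z.1, S z.2⟫) ∂(ν.prod μn))
            + ∫ z : Ξ × (Fin n → Ξ), ‖S z.2‖ ^ 2 ∂(ν.prod μn) :=
          integral_add I12 I3
      _ = (∫ z : Ξ × (Fin n → Ξ), ‖Y z.1‖ ^ 2 ∂(ν.prod μn))
            + (∫ z : Ξ × (Fin n → Ξ), 2 * ⟪Y z.1, S z.2⟫ ∂(ν.prod μn))
            + ∫ z : Ξ × (Fin n → Ξ), ‖S z.2‖ ^ 2 ∂(ν.prod μn) := by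
          rw [integral_add I1 I2]
      _ = (n + 1 : ℕ) * ∫ ξ, ‖Y ξ‖ ^ 2 ∂ν := by
          rw [cross, e1, e2, ih]
          push_cast
          ring

end aux

/-- Mini-batch variance bound at the core of Lemma 4.1 for the SARAH estimator. -/
theorem stmt_7 {p : ℕ} {Ξ : Type*} [MeasurableSpace Ξ] (ν : Measure Ξ)
    [IsProbabilityMeasure ν] (L : ℝ)
    (G : EuclideanSpace ℝ (Fin p) → Ξ → EuclideanSpace ℝ (Fin p))
    (hG : ∀ x, MemLp (G x) 2 ν)
    (hLip : ∀ x y, ∫ ξ, ‖G x ξ - G y ξ‖ ^ 2 ∂ν ≤ L ^ 2 * ‖x - y‖ ^ 2)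
    (b : ℕ) (hb : 1 ≤ b) (u u' u'' : EuclideanSpace ℝ (Fin p)) :
    ∫ ξs : Fin b → Ξ,
        ‖(1 / (b : ℝ)) • (∑ i : Fin b,
              ((2 : ℝ) • G u (ξs i) - (3 : ℝ) • G u' (ξs i) + G u'' (ξs i)))
            - ((2 : ℝ) • (∫ ξ, G u ξ ∂ν) - (3 : ℝ) • (∫ ξ, G u' ξ ∂ν) + ∫ ξ, G u'' ξ ∂ν)‖ ^ 2
        ∂(Measure.pi fun _ : Fin b => ν) ≤
      (8 * L ^ 2 / b) * ‖u - u'‖ ^ 2 + (2 * L ^ 2 / b) * ‖u' - u''‖ ^ 2 := by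
  have hbpos : (0 : ℝ) < (b : ℝ) := by exact_mod_cast hb
  set H : Ξ → EuclideanSpace ℝ (Fin p) :=
    fun ξ => (2 : ℝ) • G u ξ - (3 : ℝ) • G u' ξ + G u'' ξ with hHdef
  have hH : MemLp H 2 ν :=
    (((hG u).const_smul (2 : ℝ)).sub ((hG u').const_smul (3 : ℝ))).add (hG u'')
  set m := ∫ ξ, H ξ ∂ν with hmdef
  have hm : m = (2 : ℝ) • (∫ ξ, G u ξ ∂ν) - (3 : ℝ) • (∫ ξ, G u' ξ ∂ν) + ∫ ξ, G u'' ξ ∂ν := by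
    have i1 : Integrable (fun ξ => (2 : ℝ) • G u ξ) ν := ((hG u).integrable one_le_two).smul (2 : ℝ)
    have i2 : Integrable (fun ξ => (3 : ℝ) • G u' ξ) ν := ((hG u').integrable one_le_two).smul (3 : ℝ)
    have i12 : Integrable (fun ξ => (2 : ℝ) • G u ξ - (3 : ℝ) • G u' ξ) ν := i1.sub i2
    rw [hmdef]
    rw [integral_add i12 ((hG u'').integrable one_le_two), integral_sub i1 i2,
      integral_smul, integral_smul]
  set Y : Ξ → EuclideanSpace ℝ (Fin p) := fun ξ => H ξ - m with hYdef
  have hY : MemLp Y 2 ν := hH.sub (memLp_const m)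
  have hY0 : ∫ ξ, Y ξ ∂ν = 0 := by
    rw [hYdef]
    rw [integral_sub (hH.integrable one_le_two) (integrable_const m), integral_const]
    simp [hmdef]
  have key := my_key ν hY hY0 b
  -- pointwise rewriting of the integrand
  have hpt : ∀ g : Fin b → Ξ,
      (1 / (b : ℝ)) • (∑ i : Fin b, H (g i))
          - ((2 : ℝ) • (∫ ξ, G u ξ ∂ν) - (3 : ℝ) • (∫ ξ, G u' ξ ∂ν) + ∫ ξ, G u'' ξ ∂ν)
        = (1 / (b : ℝ)) • ∑ i : Fin b, Y (g i) := by
    intro g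
    rw [← hm]
    have hsum : ∑ i : Fin b, Y (g i) = (∑ i : Fin b, H (g i)) - (b : ℝ) • m := by
      rw [hYdef]
      rw [Finset.sum_sub_distrib, Finset.sum_const, Finset.card_univ, Fintype.card_fin,
        Nat.cast_smul_eq_nsmul]
    rw [hsum, smul_sub, smul_smul, one_div, inv_mul_cancel₀ (ne_of_gt hbpos), one_smul]
  have hLHS : ∫ ξs : Fin b → Ξ,
        ‖(1 / (b : ℝ)) • (∑ i : Fin b, H (ξs i))
            - ((2 : ℝ) • (∫ ξ, G u ξ ∂ν) - (3 : ℝ) • (∫ ξ, G u' ξ ∂ν) + ∫ ξ, G u'' ξ ∂ν)‖ ^ 2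
        ∂(Measure.pi fun _ : Fin b => ν)
      = (1 / (b : ℝ)) * ∫ ξ, ‖Y ξ‖ ^ 2 ∂ν := by
    have : ∀ g : Fin b → Ξ,
        ‖(1 / (b : ℝ)) • (∑ i : Fin b, H (g i))
            - ((2 : ℝ) • (∫ ξ, G u ξ ∂ν) - (3 : ℝ) • (∫ ξ, G u' ξ ∂ν) + ∫ ξ, G u'' ξ ∂ν)‖ ^ 2
          = (1 / (b : ℝ)) ^ 2 * ‖∑ i : Fin b, Y (g i)‖ ^ 2 := by
      intro g
      rw [hpt g, norm_smul, mul_pow, Real.norm_eq_abs, abs_of_pos (by positivity)]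
    rw [integral_congr_ae (Filter.Eventually.of_forall this), integral_const_mul, key]
    field_simp
  rw [hLHS]
  -- bound the variance term
  set A : Ξ → EuclideanSpace ℝ (Fin p) := fun ξ => G u ξ - G u' ξ with hAdef
  set B : Ξ → EuclideanSpace ℝ (Fin p) := fun ξ => G u' ξ - G u'' ξ with hBdef
  have hA : MemLp A 2 ν := (hG u).sub (hG u')
  have hB : MemLp B 2 ν := (hG u').sub (hG u'')
  set a := ∫ ξ, A ξ ∂ν with hadef
  set c := ∫ ξ, B ξ ∂ν with hcdef
  have hac : m = (2 : ℝ) • a - c := by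
    rw [hadef, hcdef, integral_sub ((hG u).integrable one_le_two) ((hG u').integrable one_le_two),
      integral_sub ((hG u').integrable one_le_two) ((hG u'').integrable one_le_two), hm]
    module
  have hptY : ∀ ξ, Y ξ = (2 : ℝ) • (A ξ - a) - (B ξ - c) := by
    intro ξ
    rw [hYdef, hac, hHdef, hAdef, hBdef]
    simp only
    module
  have hsq : ∀ x y : EuclideanSpace ℝ (Fin p),
      ‖(2 : ℝ) • x - y‖ ^ 2 ≤ 8 * ‖x‖ ^ 2 + 2 * ‖y‖ ^ 2 := by
    intro x y
    have h1 : ‖(2 : ℝ) • x - y‖ ≤ 2 * ‖x‖ + ‖y‖ := by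
      refine (norm_sub_le _ _).trans ?_
      rw [norm_smul, Real.norm_eq_abs]
      simp
    nlinarith [norm_nonneg ((2 : ℝ) • x - y), norm_nonneg x, norm_nonneg y,
      sq_nonneg (2 * ‖x‖ - ‖y‖)]
  have hvar : ∫ ξ, ‖Y ξ‖ ^ 2 ∂ν
      ≤ 8 * (L ^ 2 * ‖u - u'‖ ^ 2) + 2 * (L ^ 2 * ‖u' - u''‖ ^ 2) := by
    have hAc : MemLp (fun ξ => A ξ - a) 2 ν := hA.sub (memLp_const a)
    have hBc : MemLp (fun ξ => B ξ - c) 2 ν := hB.sub (memLp_const c)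
    have step1 : ∫ ξ, ‖Y ξ‖ ^ 2 ∂ν
        ≤ ∫ ξ, (8 * ‖A ξ - a‖ ^ 2 + 2 * ‖B ξ - c‖ ^ 2) ∂ν := by
      refine integral_mono (my_sq_int hY)
        (((my_sq_int hAc).const_mul 8).add ((my_sq_int hBc).const_mul 2)) fun ξ => ?_
      rw [hptY ξ]
      exact hsq _ _
    have step2 : ∫ ξ, (8 * ‖A ξ - a‖ ^ 2 + 2 * ‖B ξ - c‖ ^ 2) ∂ν
        = 8 * (∫ ξ, ‖A ξ - a‖ ^ 2 ∂ν) + 2 * ∫ ξ, ‖B ξ - c‖ ^ 2 ∂ν := by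
      rw [integral_add ((my_sq_int hAc).const_mul 8) ((my_sq_int hBc).const_mul 2),
        integral_const_mul, integral_const_mul]
    have step3 : ∫ ξ, ‖A ξ - a‖ ^ 2 ∂ν ≤ L ^ 2 * ‖u - u'‖ ^ 2 :=
      (my_var_le hA).trans (hLip u u')
    have step4 : ∫ ξ, ‖B ξ - c‖ ^ 2 ∂ν ≤ L ^ 2 * ‖u' - u''‖ ^ 2 :=
      (my_var_le hB).trans (hLip u' u'')
    calc ∫ ξ, ‖Y ξ‖ ^ 2 ∂ν ≤ _ := step1
      _ = _ := step2
      _ ≤ 8 * (L ^ 2 * ‖u - u'‖ ^ 2) + 2 * (L ^ 2 * ‖u' - u''‖ ^ 2) := by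
          gcongr
  calc (1 / (b : ℝ)) * ∫ ξ, ‖Y ξ‖ ^ 2 ∂ν
      ≤ (1 / (b : ℝ)) * (8 * (L ^ 2 * ‖u - u'‖ ^ 2) + 2 * (L ^ 2 * ‖u' - u''‖ ^ 2)) := by
        have h1b : (0:ℝ) ≤ 1 / (b:ℝ) := by positivity
        exact mul_le_mul_of_nonneg_left hvar h1b
    _ = (8 * L ^ 2 / b) * ‖u - u'‖ ^ 2 + (2 * L ^ 2 / b) * ‖u' - u''‖ ^ 2 := by
        field_simp
end

section
/- Let (Ω, 𝔉, μ) be a probability space, 𝒢 ⊆ 𝔉 a sub-σ-algebra, constants ω ∈ (0,1], p̂ ∈ (0,1], L ≥ 0, b > 0, b̂ > 0, a ≥ 0, d ≥ 0. Let x, x′, x″ be 𝒢-measurable square-integrable random vectors in ℝ^p, let e be a 𝒢-measurable square-integrable random vector, let D′ ≥ 0 be an integrable 𝒢-measurable random variable, let D ≥ 0 be integrable, and let X, Y be square-integrable random vectors with (almost everywhere): μ[X | 𝒢] = 0, μ[‖X‖² | 𝒢] ≤ (8L²/b)‖x − x′‖² + (2L²/b)‖x′ − x″‖², μ[Y | 𝒢]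 = 0, μ[⟨X, Y⟩ | 𝒢] = 0, μ[‖Y‖² | 𝒢] ≤ μ[D | 𝒢], and μ[D | 𝒢] ≤ (1 − p̂/2)D′ + (16(1+a)L²/(b̂p̂))‖x − x′‖² + (4(1+a)L²/(b̂p̂))‖x′ − x″‖² + d. Set e⁺ := (1 − ω)e + (1 − ω)X + ωY and κ := min{ω(2 − ω), p̂/4}. Then, almost everywhere, μ[‖e⁺‖² + (4/p̂ − 1)ω²·D | 𝒢] ≤ (1 − κ)·(‖e‖² + (4/p̂ − 1)ω²·D′) + 8L²[(1 − ω)²/b + 8(1+a)ω²/(b̂p̂²)]·‖x − x′‖² + 2L²[(1 − ω)²/b + 8(1+a)ω²/(b̂p̂²)]·‖x′ − x″‖² + (4ω²/p̂)·d. (One-step recursion at the core of Lemma 4.3 for the Hybrid-SVRG estimator with independent batches.) -/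
open MeasureTheory
open scoped RealInnerProductSpace

set_option maxHeartbeats 1000000 in
private lemma key_real_aux (om phat L b bhat a d E A B D' CX CY CD : ℝ)
    (hom1 : 0 < om) (hp1 : 0 < phat) (hp2 : phat ≤ 1)
    (hb : 0 < b) (hbhat : 0 < bhat)
    (hE : 0 ≤ E) (hD' : 0 ≤ D')
    (hX : CX ≤ 8 * L ^ 2 / b * A + 2 * L ^ 2 / b * B)
    (hY : CY ≤ CD)
    (hD : CD ≤ (1 - phat / 2) * D' + (16 * (1 + a) * L ^ 2 / (bhat * phat)) * A
      + (4 * (1 + a) * L ^ 2 / (bhat * phat)) * B + d) :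
    (1 - om) ^ 2 * E + (1 - om) ^ 2 * CX + om ^ 2 * CY + (4 / phat - 1) * om ^ 2 * CD ≤
      (1 - min (om * (2 - om)) (phat / 4)) * (E + (4 / phat - 1) * om ^ 2 * D')
        + 8 * L ^ 2 * ((1 - om) ^ 2 / b + 8 * (1 + a) * om ^ 2 / (bhat * phat ^ 2)) * A
        + 2 * L ^ 2 * ((1 - om) ^ 2 / b + 8 * (1 + a) * om ^ 2 / (bhat * phat ^ 2)) * B
        + 4 * om ^ 2 / phat * d := by
  set κ := min (om * (2 - om)) (phat / 4) with hκ
  have hk1 : κ ≤ om * (2 - om) := min_le_left _ _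
  have hk2 : κ ≤ phat / 4 := min_le_right _ _
  have h1 : (1 - om) ^ 2 ≤ 1 - κ := by nlinarith
  have hc : (0:ℝ) ≤ 4 / phat - 1 := by
    rw [sub_nonneg, le_div_iff₀ hp1]; linarith
  have hq : 4 / phat * phat = 4 := by field_simp
  have hq4 : (4:ℝ) ≤ 4 / phat := by rw [le_div_iff₀ hp1]; nlinarith
  have c1 : (1 - om) ^ 2 * CX ≤ (1 - om) ^ 2 * (8 * L ^ 2 / b * A + 2 * L ^ 2 / b * B) :=
    mul_le_mul_of_nonneg_left hX (sq_nonneg _)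
  have c2 : om ^ 2 * CY ≤ om ^ 2 * CD := mul_le_mul_of_nonneg_left hY (sq_nonneg _)
  have hmn : (0:ℝ) ≤ 4 * om ^ 2 / phat := by positivity
  have c3 : (4 * om ^ 2 / phat) * CD ≤ (4 * om ^ 2 / phat) *
      ((1 - phat / 2) * D' + (16 * (1 + a) * L ^ 2 / (bhat * phat)) * A
        + (4 * (1 + a) * L ^ 2 / (bhat * phat)) * B + d) :=
    mul_le_mul_of_nonneg_left hD hmn
  have hcoef : 4 / phat * (1 - phat / 2) ≤ (1 - κ) * (4 / phat - 1) := by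
    nlinarith [mul_nonneg (sub_nonneg.2 hk2) (by linarith : (0:ℝ) ≤ 4 / phat - 1)]
  have iE : (1 - om) ^ 2 * E ≤ (1 - κ) * E := mul_le_mul_of_nonneg_right h1 hE
  have iD' : (4 * om ^ 2 / phat) * ((1 - phat / 2) * D') ≤
      (1 - κ) * ((4 / phat - 1) * om ^ 2 * D') := by
    have h := mul_le_mul_of_nonneg_right hcoef (mul_nonneg (sq_nonneg om) hD')
    calc (4 * om ^ 2 / phat) * ((1 - phat / 2) * D')
        = 4 / phat * (1 - phat / 2) * (om ^ 2 * D') := by ring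
      _ ≤ (1 - κ) * (4 / phat - 1) * (om ^ 2 * D') := h
      _ = (1 - κ) * ((4 / phat - 1) * om ^ 2 * D') := by ring
  have eA : (1 - om) ^ 2 * (8 * L ^ 2 / b) * A
      + (4 * om ^ 2 / phat) * ((16 * (1 + a) * L ^ 2 / (bhat * phat)) * A)
      = 8 * L ^ 2 * ((1 - om) ^ 2 / b + 8 * (1 + a) * om ^ 2 / (bhat * phat ^ 2)) * A := by
    field_simp; ring
  have eB : (1 - om) ^ 2 * (2 * L ^ 2 / b) * B
      + (4 * om ^ 2 / phat) * ((4 * (1 + a) * L ^ 2 / (bhat * phat)) * B)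
      = 2 * L ^ 2 * ((1 - om) ^ 2 / b + 8 * (1 + a) * om ^ 2 / (bhat * phat ^ 2)) * B := by
    field_simp; ring
  have key4' : om ^ 2 * CD + (4 / phat - 1) * om ^ 2 * CD = 4 * om ^ 2 / phat * CD := by
    field_simp; ring
  linarith [c1, c2, c3, iE, iD', eA, eB, key4']

private lemma condexp_component_zero_aux {Ω : Type*} {𝒢 𝔉 : MeasurableSpace Ω}
    {μ : @Measure Ω 𝔉} [IsProbabilityMeasure μ] {p : ℕ} (hle : 𝒢 ≤ 𝔉)
    {g : Ω → EuclideanSpace ℝ (Fin p)}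
    (hg : Integrable g μ) (hgc : μ[g | 𝒢] =ᵐ[μ] 0) (i : Fin p) :
    μ[fun s => g s i | 𝒢] =ᵐ[μ] 0 := by
  have hgi : Integrable (fun s => g s i) μ :=
    (EuclideanSpace.proj (𝕜 := ℝ) i).integrable_comp hg
  refine (ae_eq_condExp_of_forall_setIntegral_eq hle hgi
    (fun s _ _ => (integrableOn_zero)) (fun s hs hμs => ?_) ?_).symm
  · have h1 : ∫ x in s, g x i ∂μ = EuclideanSpace.proj (𝕜 := ℝ) i (∫ x in s, g x ∂μ) :=
      (EuclideanSpace.proj (𝕜 := ℝ) i).integral_comp_comm hg.integrableOn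
    have h2 : ∫ x in s, g x ∂μ = ∫ x in s, (μ[g | 𝒢]) x ∂μ :=
      (setIntegral_condExp hle hg hs).symm
    have h3 : ∫ x in s, (μ[g | 𝒢]) x ∂μ = 0 := by
      rw [setIntegral_congr_ae (hle s hs) (hgc.mono fun x hx _ => hx)]
      simp
    simp [h1, h2, h3]
  · exact stronglyMeasurable_zero.aestronglyMeasurable

private lemma condexp_inner_zero_aux {Ω : Type*} {𝒢 𝔉 : MeasurableSpace Ω}
    {μ : @Measure Ω 𝔉} [IsProbabilityMeasure μ] {p : ℕ} (hle : 𝒢 ≤ 𝔉)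
    {f g : Ω → EuclideanSpace ℝ (Fin p)}
    (hf_meas : StronglyMeasurable[𝒢] f) (hf : MemLp f 2 μ) (hg : MemLp g 2 μ)
    (hgc : μ[g | 𝒢] =ᵐ[μ] 0) :
    μ[fun s => ⟪f s, g s⟫ | 𝒢] =ᵐ[μ] 0 := by
  have hfi : ∀ i : Fin p, MemLp (fun s => f s i) 2 μ := fun i =>
    (EuclideanSpace.proj (𝕜 := ℝ) i).comp_memLp' hf
  have hgi : ∀ i : Fin p, MemLp (fun s => g s i) 2 μ := fun i =>
    (EuclideanSpace.proj (𝕜 := ℝ) i).comp_memLp' hg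
  have hint : ∀ i : Fin p, Integrable (fun s => f s i * g s i) μ := fun i => by
    refine (L2.integrable_inner (𝕜 := ℝ) ((hfi i).toLp _) ((hgi i).toLp _)).congr ?_
    filter_upwards [(hfi i).coeFn_toLp, (hgi i).coeFn_toLp] with s h1 h2
    rw [h1, h2]; simp [RCLike.inner_apply, mul_comm]
  have hinner : (fun s => ⟪f s, g s⟫) = ∑ i : Fin p, (fun s => f s i * g s i) := by
    funext s
    simp [PiLp.inner_apply, RCLike.inner_apply, mul_comm]
  rw [hinner]
  have hsum := condExp_finsetSum (m := 𝒢) (μ := μ) (s := Finset.univ)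
    (f := fun i (s : Ω) => f s i * g s i) (fun i _ => hint i)
  refine hsum.trans ?_
  have hterm : ∀ i : Fin p, μ[fun s => f s i * g s i | 𝒢] =ᵐ[μ]
      (fun s => f s i) * μ[fun s => g s i | 𝒢] :=
    fun i => condExp_mul_of_stronglyMeasurable_left
      ((EuclideanSpace.proj (𝕜 := ℝ) i).continuous.comp_stronglyMeasurable hf_meas)
      (hint i) ((hgi i).integrable (by norm_num))
  have hzero : ∀ i : Fin p, μ[fun s => g s i | 𝒢] =ᵐ[μ] 0 :=
    fun i => condexp_component_zero_aux hle (hg.integrable (by norm_num)) hgc i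
  have hae : ∀ᵐ s ∂μ, ∀ i : Fin p, (μ[fun s => g s i | 𝒢]) s = 0 ∧
      (μ[fun s => f s i * g s i | 𝒢]) s = ((fun s => f s i) * μ[fun s => g s i | 𝒢]) s := by
    rw [ae_all_iff]
    exact fun i => ((hzero i).and (hterm i))
  filter_upwards [hae] with s hs
  simp only [Finset.sum_apply, Pi.zero_apply]
  refine Finset.sum_eq_zero fun i _ => ?_
  rw [(hs i).2]
  simp [(hs i).1]

private lemma norm_expand_aux {E : Type*} [NormedAddCommGroup E] [InnerProductSpace ℝ E]
    (c1 c2 : ℝ) (u v w : E) :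
    ‖c1 • u + c1 • v + c2 • w‖ ^ 2 =
      c1 ^ 2 * ‖u‖ ^ 2 + c1 ^ 2 * ‖v‖ ^ 2 + c2 ^ 2 * ‖w‖ ^ 2
        + (2 * c1 ^ 2) * ⟪u, v⟫ + (2 * (c1 * c2)) * ⟪u, w⟫ + (2 * (c1 * c2)) * ⟪v, w⟫ := by
  simp [norm_add_sq_real, inner_add_left, inner_add_right, real_inner_smul_left,
    real_inner_smul_right, norm_smul, mul_pow]
  ring

private lemma integrable_inner_aux {Ω : Type*} {𝔉 : MeasurableSpace Ω}
    {μ : @Measure Ω 𝔉} {E : Type*} [NormedAddCommGroup E] [InnerProductSpace ℝ E]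
    {f g : Ω → E} (hf : MemLp f 2 μ) (hg : MemLp g 2 μ) :
    Integrable (fun s => ⟪f s, g s⟫) μ := by
  refine (L2.integrable_inner (𝕜 := ℝ) (hf.toLp f) (hg.toLp g)).congr ?_
  filter_upwards [hf.coeFn_toLp, hg.coeFn_toLp] with s h1 h2
  rw [h1, h2]

/-- One-step recursion at the core of Lemma 4.3 for the Hybrid-SVRG estimator with
independent batches. -/
theorem stmt_10 {p : ℕ} {Ω : Type*} {𝒢 𝔉 : MeasurableSpace Ω} (hle : 𝒢 ≤ 𝔉)
    (μ : Measure Ω) [IsProbabilityMeasure μ]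
    (om phat L b bhat a d : ℝ)
    (hom1 : 0 < om) (hom2 : om ≤ 1) (hp1 : 0 < phat) (hp2 : phat ≤ 1)
    (hL : 0 ≤ L) (hb : 0 < b) (hbhat : 0 < bhat) (ha : 0 ≤ a) (hd : 0 ≤ d)
    (x x' x'' e X Y : Ω → EuclideanSpace ℝ (Fin p))
    (D' D : Ω → ℝ)
    (hx_meas : StronglyMeasurable[𝒢] x) (hx'_meas : StronglyMeasurable[𝒢] x')
    (hx''_meas : StronglyMeasurable[𝒢] x'') (he_meas : StronglyMeasurable[𝒢] e)
    (hD'_meas : StronglyMeasurable[𝒢] D')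
    (hx : MemLp x 2 μ) (hx' : MemLp x' 2 μ) (hx'' : MemLp x'' 2 μ)
    (he : MemLp e 2 μ) (hX : MemLp X 2 μ) (hY : MemLp Y 2 μ)
    (hD'_int : Integrable D' μ) (hD'_nonneg : ∀ s, 0 ≤ D' s)
    (hD_int : Integrable D μ) (hD_nonneg : ∀ s, 0 ≤ D s)
    (hXc : μ[X | 𝒢] =ᵐ[μ] 0)
    (hXvar : ∀ᵐ s ∂μ, (μ[fun s => ‖X s‖ ^ 2 | 𝒢]) s ≤
      (8 * L ^ 2 / b) * ‖x s - x' s‖ ^ 2 + (2 * L ^ 2 / b) * ‖x' s - x'' s‖ ^ 2)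
    (hYc : μ[Y | 𝒢] =ᵐ[μ] 0)
    (hXY : μ[fun s => ⟪X s, Y s⟫ | 𝒢] =ᵐ[μ] 0)
    (hYvar : ∀ᵐ s ∂μ, (μ[fun s => ‖Y s‖ ^ 2 | 𝒢]) s ≤ (μ[D | 𝒢]) s)
    (hDrec : ∀ᵐ s ∂μ, (μ[D | 𝒢]) s ≤
      (1 - phat / 2) * D' s + (16 * (1 + a) * L ^ 2 / (bhat * phat)) * ‖x s - x' s‖ ^ 2
        + (4 * (1 + a) * L ^ 2 / (bhat * phat)) * ‖x' s - x'' s‖ ^ 2 + d) :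
    ∀ᵐ s ∂μ,
      (μ[fun s =>
          ‖(1 - om) • e s + (1 - om) • X s + om • Y s‖ ^ 2
            + (4 / phat - 1) * om ^ 2 * D s | 𝒢]) s ≤
        (1 - min (om * (2 - om)) (phat / 4))
            * (‖e s‖ ^ 2 + (4 / phat - 1) * om ^ 2 * D' s)
          + 8 * L ^ 2 * ((1 - om) ^ 2 / b + 8 * (1 + a) * om ^ 2 / (bhat * phat ^ 2))
            * ‖x s - x' s‖ ^ 2
          + 2 * L ^ 2 * ((1 - om) ^ 2 / b + 8 * (1 + a) * om ^ 2 / (bhat * phat ^ 2))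
            * ‖x' s - x'' s‖ ^ 2
          + (4 * om ^ 2 / phat) * d := by
  -- the seven summands
  set E2 : Ω → ℝ := fun s => ‖e s‖ ^ 2 with hE2
  set X2 : Ω → ℝ := fun s => ‖X s‖ ^ 2 with hX2
  set Y2 : Ω → ℝ := fun s => ‖Y s‖ ^ 2 with hY2
  set EX : Ω → ℝ := fun s => ⟪e s, X s⟫ with hEX
  set EY : Ω → ℝ := fun s => ⟪e s, Y s⟫ with hEY
  set XY : Ω → ℝ := fun s => ⟪X s, Y s⟫ with hXYf
  -- integrability
  have IE2 : Integrable E2 μ := he.norm.integrable_sq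
  have IX2 : Integrable X2 μ := hX.norm.integrable_sq
  have IY2 : Integrable Y2 μ := hY.norm.integrable_sq
  have IEX : Integrable EX μ := integrable_inner_aux he hX
  have IEY : Integrable EY μ := integrable_inner_aux he hY
  have IXY : Integrable XY μ := integrable_inner_aux hX hY
  -- pointwise expansion of the squared norm
  have hfun : (fun s =>
      ‖(1 - om) • e s + (1 - om) • X s + om • Y s‖ ^ 2
        + (4 / phat - 1) * om ^ 2 * D s)
      = ((1 - om) ^ 2 • E2) + ((1 - om) ^ 2 • X2) + (om ^ 2 • Y2)
        + ((2 * (1 - om) ^ 2) • EX) + ((2 * ((1 - om) * om)) • EY)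
        + ((2 * ((1 - om) * om)) • XY) + (((4 / phat - 1) * om ^ 2) • D) := by
    funext s
    rw [norm_expand_aux (1 - om) om (e s) (X s) (Y s)]
    simp only [Pi.add_apply, Pi.smul_apply, smul_eq_mul, hE2, hX2, hY2, hEX, hEY, hXYf]
    try ring
  -- conditional expectation splits
  have hadd : μ[((1 - om) ^ 2 • E2) + ((1 - om) ^ 2 • X2) + (om ^ 2 • Y2)
        + ((2 * (1 - om) ^ 2) • EX) + ((2 * ((1 - om) * om)) • EY)
        + ((2 * ((1 - om) * om)) • XY) + (((4 / phat - 1) * om ^ 2) • D) | 𝒢]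
      =ᵐ[μ] μ[(1 - om) ^ 2 • E2 | 𝒢] + μ[(1 - om) ^ 2 • X2 | 𝒢] + μ[om ^ 2 • Y2 | 𝒢]
        + μ[(2 * (1 - om) ^ 2) • EX | 𝒢] + μ[(2 * ((1 - om) * om)) • EY | 𝒢]
        + μ[(2 * ((1 - om) * om)) • XY | 𝒢] + μ[((4 / phat - 1) * om ^ 2) • D | 𝒢] := by
    have i1 := IE2.smul ((1 - om) ^ 2)
    have i2 := IX2.smul ((1 - om) ^ 2)
    have i3 := IY2.smul (om ^ 2)
    have i4 := IEX.smul (2 * (1 - om) ^ 2)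
    have i5 := IEY.smul (2 * ((1 - om) * om))
    have i6 := IXY.smul (2 * ((1 - om) * om))
    have i7 := hD_int.smul ((4 / phat - 1) * om ^ 2)
    refine (condExp_add (((((i1.add i2).add i3).add i4).add i5).add i6) i7 𝒢).trans ?_
    refine Filter.EventuallyEq.add ?_ Filter.EventuallyEq.rfl
    refine (condExp_add ((((i1.add i2).add i3).add i4).add i5) i6 𝒢).trans ?_
    refine Filter.EventuallyEq.add ?_ Filter.EventuallyEq.rfl
    refine (condExp_add (((i1.add i2).add i3).add i4) i5 𝒢).trans ?_
    refine Filter.EventuallyEq.add ?_ Filter.EventuallyEq.rfl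
    refine (condExp_add ((i1.add i2).add i3) i4 𝒢).trans ?_
    refine Filter.EventuallyEq.add ?_ Filter.EventuallyEq.rfl
    refine (condExp_add (i1.add i2) i3 𝒢).trans ?_
    refine Filter.EventuallyEq.add ?_ Filter.EventuallyEq.rfl
    exact condExp_add i1 i2 𝒢
  -- identify each conditional expectation
  have hE2meas : StronglyMeasurable[𝒢] E2 := by
    simpa [hE2, pow_two, Pi.mul_def] using he_meas.norm.mul he_meas.norm
  have e1 : μ[E2 | 𝒢] = E2 := condExp_of_stronglyMeasurable hle hE2meas IE2
  have z4 : μ[EX | 𝒢] =ᵐ[μ] 0 := condexp_inner_zero_aux hle he_meas he hX hXc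
  have z5 : μ[EY | 𝒢] =ᵐ[μ] 0 := condexp_inner_zero_aux hle he_meas he hY hYc
  have z6 : μ[XY | 𝒢] =ᵐ[μ] 0 := hXY
  have s1 := condExp_smul (m := 𝒢) (μ := μ) ((1 - om) ^ 2) E2
  have s2 := condExp_smul (m := 𝒢) (μ := μ) ((1 - om) ^ 2) X2
  have s3 := condExp_smul (m := 𝒢) (μ := μ) (om ^ 2) Y2
  have s4 := condExp_smul (m := 𝒢) (μ := μ) (2 * (1 - om) ^ 2) EX
  have s5 := condExp_smul (m := 𝒢) (μ := μ) (2 * ((1 - om) * om)) EY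
  have s6 := condExp_smul (m := 𝒢) (μ := μ) (2 * ((1 - om) * om)) XY
  have s7 := condExp_smul (m := 𝒢) (μ := μ) ((4 / phat - 1) * om ^ 2) D
  rw [hfun]
  filter_upwards [hadd, s1, s2, s3, s4, s5, s6, s7, z4, z5, z6, hXvar, hYvar, hDrec]
    with s h0 h1 h2 h3 h4 h5 h6 h7 hz4 hz5 hz6 hXv hYv hDr
  have hval : (μ[((1 - om) ^ 2 • E2) + ((1 - om) ^ 2 • X2) + (om ^ 2 • Y2)
        + ((2 * (1 - om) ^ 2) • EX) + ((2 * ((1 - om) * om)) • EY)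
        + ((2 * ((1 - om) * om)) • XY) + (((4 / phat - 1) * om ^ 2) • D) | 𝒢]) s
      = (1 - om) ^ 2 * ‖e s‖ ^ 2 + (1 - om) ^ 2 * (μ[X2 | 𝒢]) s
        + om ^ 2 * (μ[Y2 | 𝒢]) s + (4 / phat - 1) * om ^ 2 * (μ[D | 𝒢]) s := by
    rw [h0]
    simp only [Pi.add_apply, h1, h2, h3, h4, h5, h6, h7, Pi.smul_apply, smul_eq_mul,
      e1, hz4, hz5, hz6, Pi.zero_apply]
    simp [hE2]
    try ring
  rw [hval]
  exact key_real_aux om phat L b bhat a d (‖e s‖ ^ 2) (‖x s - x' s‖ ^ 2)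
    (‖x' s - x'' s‖ ^ 2) (D' s) ((μ[X2 | 𝒢]) s) ((μ[Y2 | 𝒢]) s) ((μ[D | 𝒢]) s)
    hom1 hp1 hp2 hb hbhat (sq_nonneg _) (hD'_nonneg s)
    (by simpa [hX2] using hXv) (by simpa [hY2] using hYv) hDr
end

section
/- Under the VrFRBS recursion, the biased variance-reduced estimator condition (Definition 2), and the definition of Q_k with parameters γ > 0 and c₁ > 0, for every k ≥ 0 and all reals c > 0, c₂ > 0 the following holds almost surely: μ[Q_{k+1} | ℱ_k] ≤ Q_k − [1 − 2η/(c₁τ) − 4ρ/η − 2/c₂ − 2L²η(c + 4ρ + 1/γ + 2η/c₂)]·‖y_k − x_k‖² − [1 − γη − (2η/(c₁τ) + 2L²η(c + 4ρ + 1/γ + 2η/c₂))]·‖y_k − x_{k−1}‖² − cL²η·‖x_k − x_{k−1}‖² + η(2η + c₁/τ + c₂η)·μ[‖e_k‖² | ℱ_k]. (Inequality (6.9) of Lemma C.4.) -/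
open MeasureTheory Filter
open scoped RealInnerProductSpace

section helpers
variable {F : Type*} [NormedAddCommGroup F] [InnerProductSpace ℝ F]

lemma normsq_smul (t : ℝ) (a : F) : ‖t • a‖ ^ 2 = t ^ 2 * ‖a‖ ^ 2 := by
  rw [norm_smul, mul_pow, Real.norm_eq_abs, sq_abs]

lemma youngst (s t : ℝ) (a b : F) :
    2 * (s * (t * ⟪a, b⟫)) ≤ s ^ 2 * ‖a‖ ^ 2 + t ^ 2 * ‖b‖ ^ 2 := by
  have h0 : (0:ℝ) ≤ ‖s • a - t • b‖ ^ 2 := sq_nonneg _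
  have h : ‖s • a - t • b‖ ^ 2
      = s ^ 2 * ‖a‖ ^ 2 - 2 * (s * (t * ⟪a, b⟫)) + t ^ 2 * ‖b‖ ^ 2 := by
    rw [norm_sub_sq_real, real_inner_smul_left, real_inner_smul_right,
      normsq_smul, normsq_smul]
  linarith [h0.trans_eq h]

set_option maxHeartbeats 2000000 in
lemma key_ineq_s12 (η L ρ γ c₁ τ c c₂ S : ℝ)
    (hη : 0 < η) (hγ : 0 < γ) (hc₁ : 0 < c₁) (hL : 0 ≤ L) (hρ : 0 ≤ ρ)
    (hτ0 : 0 < τ) (hc : 0 < c) (hc₂ : 0 < c₂)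
    (Xs Y Xk Xm Yh Eb W Wh : F)
    (hX : Xk = Y - η • Wh)
    (hLip : ‖W - Wh‖ ≤ L * ‖Xk - Xm‖)
    (hM : ⟪W, Xk - Xs⟫ ≥ -ρ * ‖W‖ ^ 2)
    (hS : ‖(1 - τ) • Eb‖ ^ 2 ≤ S) :
    (‖Y - Xs‖ ^ 2 - 2 * η * ⟪Y - Xs, W⟫ + η ^ 2 * ‖W‖ ^ 2
        + (1 - γ * η) * (η ^ 2 * ‖W - Wh‖ ^ 2) + 2 * η / (c₁ * τ) * ‖Y - Xk‖ ^ 2)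
      + ⟪(-(2 * η / τ)) • (Y - Xs) + (2 * η ^ 2) • W
          + (2 * (1 - γ * η) * η ^ 2) • (W - Wh), (1 - τ) • Eb⟫
      + η ^ 2 * (2 - γ * η) * S
    ≤ (‖Y - Xs‖ ^ 2 + (1 - γ * η) * ‖Y - Xm‖ ^ 2
        + 2 * η / (c₁ * τ) * ‖Xm - Yh‖ ^ 2 + 2 * η * (1 - τ) / τ * ⟪Eb, Xs - Yh⟫)
      - (1 - 2 * η / (c₁ * τ) - 4 * ρ / η - 2 / c₂
          - 2 * L ^ 2 * η * (c + 4 * ρ + 1 / γ + 2 * η / c₂)) * ‖Y - Xk‖ ^ 2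
      - (1 - γ * η - (2 * η / (c₁ * τ)
          + 2 * L ^ 2 * η * (c + 4 * ρ + 1 / γ + 2 * η / c₂))) * ‖Y - Xm‖ ^ 2
      - c * L ^ 2 * η * ‖Xk - Xm‖ ^ 2
      + η * (2 * η + c₁ / τ + c₂ * η) * S := by
  set u := Y - Xs with hu
  set v := Y - Xk with hv
  set m := Y - Xm with hm
  set z := Xm - Yh with hz
  set δ := W - Wh with hδ
  rw [show ‖(1 - τ) • Eb‖ ^ 2 = (1 - τ) ^ 2 * ‖Eb‖ ^ 2 from normsq_smul _ _] at hS
  have hveq : η • W = v + η • δ := by rw [hv, hδ, hX, smul_sub]; abel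
  have hM2 : -(ρ * ‖W‖ ^ 2) ≤ ⟪u, W⟫ - ⟪v, W⟫ := by
    have h := hM
    rw [show Xk - Xs = u - v from by rw [hu, hv]; abel, inner_sub_right] at h
    have h1 := real_inner_comm u W
    have h2 := real_inner_comm v W
    linarith
  have eq1 : ‖v‖ ^ 2 - 2 * (η * ⟪v, W⟫) + η ^ 2 * ‖W‖ ^ 2 = η ^ 2 * ‖δ‖ ^ 2 := by
    have h : v - η • W = -(η • δ) := by rw [hveq]; abel
    have h2 := congrArg (fun x : F => ‖x‖ ^ 2) h
    simp only [norm_neg] at h2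
    rw [norm_sub_sq_real, real_inner_smul_right, normsq_smul, normsq_smul] at h2
    linarith
  have s3base : η ^ 2 * ‖W‖ ^ 2 ≤ 2 * ‖v‖ ^ 2 + 2 * (η ^ 2 * ‖δ‖ ^ 2) := by
    have h2 := congrArg (fun x : F => ‖x‖ ^ 2) hveq
    rw [normsq_smul, norm_add_sq_real, real_inner_smul_right, normsq_smul] at h2
    have hy := youngst 1 η v δ
    rw [one_pow, one_mul] at hy
    linarith
  have hD : ‖δ‖ ^ 2 ≤ L ^ 2 * ‖Xk - Xm‖ ^ 2 := by
    calc ‖δ‖ ^ 2 ≤ (L * ‖Xk - Xm‖) ^ 2 := by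
          have := pow_le_pow_left₀ (norm_nonneg δ) hLip 2
          exact this
    _ = L ^ 2 * ‖Xk - Xm‖ ^ 2 := by ring
  have B10 : ‖Xk - Xm‖ ^ 2 ≤ 2 * ‖m‖ ^ 2 + 2 * ‖v‖ ^ 2 := by
    rw [show Xk - Xm = m - v from by rw [hm, hv]; abel, norm_sub_sq_real]
    have hy := youngst (-1) 1 m v
    nlinarith [hy]
  have y4 := youngst 2 (-(c₁ * (1 - τ))) m Eb
  have y5 := youngst 2 (-(c₁ * (1 - τ))) z Eb
  have y6 := youngst 1 (c₂ * (1 - τ)) W Eb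
  have y7 := youngst (1 - γ * η) (γ * η * (1 - τ)) δ Eb
  have hP : (0:ℝ) < η * γ * τ * c₁ * c₂ :=
    mul_pos (mul_pos (mul_pos (mul_pos hη hγ) hτ0) hc₁) hc₂
  have c2pos : (0:ℝ) ≤ 2 * η * (η * γ * τ * c₁ * c₂) :=
    (mul_pos (mul_pos two_pos hη) hP).le
  have c3pos : (0:ℝ) ≤ 2 * ρ * γ * τ * c₁ * c₂ :=
    mul_nonneg (mul_nonneg (mul_nonneg (mul_nonneg
      (by linarith : (0:ℝ) ≤ 2 * ρ) hγ.le) hτ0.le) hc₁.le) hc₂.le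
  have c3bpos : (0:ℝ) ≤ η * γ * τ * c₁ :=
    (mul_pos (mul_pos (mul_pos hη hγ) hτ0) hc₁).le
  have c4pos : (0:ℝ) ≤ η ^ 2 * γ * c₂ / 2 :=
    (div_pos (mul_pos (mul_pos (pow_pos hη 2) hγ) hc₂) two_pos).le
  have c6pos : (0:ℝ) ≤ η ^ 3 * γ * τ * c₁ :=
    (mul_pos (mul_pos (mul_pos (pow_pos hη 3) hγ) hτ0) hc₁).le
  have c7pos : (0:ℝ) ≤ η ^ 2 * τ * c₁ * c₂ :=
    (mul_pos (mul_pos (mul_pos (pow_pos hη 2) hτ0) hc₁) hc₂).le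
  have cSpos : (0:ℝ) ≤ η ^ 2 * γ * c₁ ^ 2 * c₂ + c₂ ^ 2 * η ^ 3 * γ * τ * c₁
      + γ ^ 2 * η ^ 4 * τ * c₁ * c₂ := by
    have h1 : (0:ℝ) < η ^ 2 * γ * c₁ ^ 2 * c₂ :=
      mul_pos (mul_pos (mul_pos (pow_pos hη 2) hγ) (pow_pos hc₁ 2)) hc₂
    have h2 : (0:ℝ) < c₂ ^ 2 * η ^ 3 * γ * τ * c₁ :=
      mul_pos (mul_pos (mul_pos (mul_pos (pow_pos hc₂ 2) (pow_pos hη 3)) hγ) hτ0) hc₁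
    have h3 : (0:ℝ) < γ ^ 2 * η ^ 4 * τ * c₁ * c₂ :=
      mul_pos (mul_pos (mul_pos (mul_pos (pow_pos hγ 2) (pow_pos hη 4)) hτ0) hc₁) hc₂
    linarith
  have cDpos : (0:ℝ) ≤ η ^ 2 * τ * c₁ * c₂ + 4 * ρ * η ^ 2 * γ * τ * c₁ * c₂
      + 2 * η ^ 3 * γ * τ * c₁ := by
    have h2 : (0:ℝ) ≤ 4 * ρ * η ^ 2 * γ * τ * c₁ * c₂ :=
      mul_nonneg (mul_nonneg (mul_nonneg (mul_nonneg (mul_nonneg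
        (by linarith : (0:ℝ) ≤ 4 * ρ) (pow_pos hη 2).le) hγ.le) hτ0.le) hc₁.le) hc₂.le
    have h3 : (0:ℝ) < 2 * η ^ 3 * γ * τ * c₁ :=
      mul_pos (mul_pos (mul_pos (mul_pos two_pos (pow_pos hη 3)) hγ) hτ0) hc₁
    linarith [c7pos]
  have cXpos : (0:ℝ) ≤ L ^ 2 * (c * η ^ 2 * γ * τ * c₁ * c₂ + (η ^ 2 * τ * c₁ * c₂
      + 4 * ρ * η ^ 2 * γ * τ * c₁ * c₂ + 2 * η ^ 3 * γ * τ * c₁)) := by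
    have h1 : (0:ℝ) < c * η ^ 2 * γ * τ * c₁ * c₂ :=
      mul_pos (mul_pos (mul_pos (mul_pos (mul_pos hc (pow_pos hη 2)) hγ) hτ0) hc₁) hc₂
    exact mul_nonneg (sq_nonneg L) (by linarith [cDpos])
  have F1 : η * γ * τ * c₁ * c₂ * (‖v‖ ^ 2 - 2 * (η * ⟪v, W⟫) + η ^ 2 * ‖W‖ ^ 2)
      = η * γ * τ * c₁ * c₂ * (η ^ 2 * ‖δ‖ ^ 2) := by rw [eq1]
  have F2 := mul_le_mul_of_nonneg_left hM2 c2pos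
  have F3 := mul_le_mul_of_nonneg_left s3base c3pos
  have F3b := mul_le_mul_of_nonneg_left s3base c3bpos
  have F4 := mul_le_mul_of_nonneg_left y4 c4pos
  have F5 := mul_le_mul_of_nonneg_left y5 c4pos
  have F6 := mul_le_mul_of_nonneg_left y6 c6pos
  have F7 := mul_le_mul_of_nonneg_left y7 c7pos
  have F8 := mul_le_mul_of_nonneg_left hS cSpos
  have F9 := mul_le_mul_of_nonneg_left hD cDpos
  have F10 := mul_le_mul_of_nonneg_left B10 cXpos
  have hgexp : ⟪(-(2 * η / τ)) • u + (2 * η ^ 2) • W + (2 * (1 - γ * η) * η ^ 2) • δ,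
      (1 - τ) • Eb⟫
      = (1 - τ) * (-(2 * η / τ) * ⟪u, Eb⟫ + 2 * η ^ 2 * ⟪W, Eb⟫
        + 2 * (1 - γ * η) * η ^ 2 * ⟪δ, Eb⟫) := by
    simp only [inner_add_left, real_inner_smul_left, real_inner_smul_right]
    ring
  have hq : ⟪Eb, Xs - Yh⟫ = -⟪u, Eb⟫ + ⟪m, Eb⟫ + ⟪z, Eb⟫ := by
    rw [show Xs - Yh = -u + m + z from by rw [hu, hm, hz]; abel,
      inner_add_right, inner_add_right, inner_neg_right,
      real_inner_comm Eb u, real_inner_comm Eb m, real_inner_comm Eb z]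
  rw [hgexp, hq]
  refine le_of_mul_le_mul_left ?_ hP
  have e1 : η * γ * τ * c₁ * c₂ *
      ((‖u‖ ^ 2 - 2 * η * ⟪u, W⟫ + η ^ 2 * ‖W‖ ^ 2
        + (1 - γ * η) * (η ^ 2 * ‖δ‖ ^ 2) + 2 * η / (c₁ * τ) * ‖v‖ ^ 2)
      + (1 - τ) * (-(2 * η / τ) * ⟪u, Eb⟫ + 2 * η ^ 2 * ⟪W, Eb⟫
        + 2 * (1 - γ * η) * η ^ 2 * ⟪δ, Eb⟫)
      + η ^ 2 * (2 - γ * η) * S)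
      = η * γ * τ * c₁ * c₂ * ‖u‖ ^ 2 - 2 * η * (η * γ * τ * c₁ * c₂) * ⟪u, W⟫
        + η ^ 2 * (η * γ * τ * c₁ * c₂) * ‖W‖ ^ 2
        + (1 - γ * η) * η ^ 2 * (η * γ * τ * c₁ * c₂) * ‖δ‖ ^ 2
        + 2 * η ^ 2 * γ * c₂ * ‖v‖ ^ 2
        - 2 * η ^ 2 * γ * c₁ * c₂ * (1 - τ) * ⟪u, Eb⟫
        + 2 * η ^ 3 * γ * τ * c₁ * c₂ * (1 - τ) * ⟪W, Eb⟫
        + 2 * (1 - γ * η) * η ^ 3 * γ * τ * c₁ * c₂ * (1 - τ) * ⟪δ, Eb⟫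
        + η ^ 2 * (2 - γ * η) * (η * γ * τ * c₁ * c₂) * S := by
    field_simp
    ring
  have e2 : η * γ * τ * c₁ * c₂ *
      ((‖u‖ ^ 2 + (1 - γ * η) * ‖m‖ ^ 2
        + 2 * η / (c₁ * τ) * ‖z‖ ^ 2 + 2 * η * (1 - τ) / τ * (-⟪u, Eb⟫ + ⟪m, Eb⟫ + ⟪z, Eb⟫))
      - (1 - 2 * η / (c₁ * τ) - 4 * ρ / η - 2 / c₂
          - 2 * L ^ 2 * η * (c + 4 * ρ + 1 / γ + 2 * η / c₂)) * ‖v‖ ^ 2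
      - (1 - γ * η - (2 * η / (c₁ * τ)
          + 2 * L ^ 2 * η * (c + 4 * ρ + 1 / γ + 2 * η / c₂))) * ‖m‖ ^ 2
      - c * L ^ 2 * η * ‖Xk - Xm‖ ^ 2
      + η * (2 * η + c₁ / τ + c₂ * η) * S)
      = η * γ * τ * c₁ * c₂ * ‖u‖ ^ 2 + (1 - γ * η) * (η * γ * τ * c₁ * c₂) * ‖m‖ ^ 2
        + 2 * η ^ 2 * γ * c₂ * ‖z‖ ^ 2
        + 2 * η ^ 2 * γ * c₁ * c₂ * (1 - τ) * (-⟪u, Eb⟫ + ⟪m, Eb⟫ + ⟪z, Eb⟫)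
        - (η * γ * τ * c₁ * c₂ - 2 * η ^ 2 * γ * c₂ - 4 * ρ * γ * τ * c₁ * c₂
            - 2 * η * γ * τ * c₁
            - 2 * L ^ 2 * η * (η * γ * τ * c₁ * c₂) * (c + 4 * ρ)
            - 2 * L ^ 2 * η ^ 2 * τ * c₁ * c₂ - 4 * L ^ 2 * η ^ 3 * γ * τ * c₁) * ‖v‖ ^ 2
        - ((1 - γ * η) * (η * γ * τ * c₁ * c₂) - 2 * η ^ 2 * γ * c₂
            - 2 * L ^ 2 * η * (η * γ * τ * c₁ * c₂) * (c + 4 * ρ)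
            - 2 * L ^ 2 * η ^ 2 * τ * c₁ * c₂ - 4 * L ^ 2 * η ^ 3 * γ * τ * c₁) * ‖m‖ ^ 2
        - c * L ^ 2 * η * (η * γ * τ * c₁ * c₂) * ‖Xk - Xm‖ ^ 2
        + (2 * η ^ 2 * (η * γ * τ * c₁ * c₂) + η ^ 2 * γ * c₁ ^ 2 * c₂
            + c₂ * η ^ 2 * (η * γ * τ * c₁ * c₂)) * S := by
    field_simp
    ring
  linarith [e1, e2, F1, F2, F3, F3b, F4, F5, F6, F7, F8, F9, F10]

set_option maxHeartbeats 800000 in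
lemma stepA (η γ c₁ τ : ℝ) (hτ : τ ≠ 0) (Xs Y W Wh Ek : F) :
    ‖Y - η • (W + Ek) - Xs‖ ^ 2 + (1 - γ * η) * ‖Y - η • (W + Ek) - (Y - η • Wh)‖ ^ 2
      + 2 * η / (c₁ * τ) * ‖Y - η • Wh - Y‖ ^ 2
      + 2 * η * (1 - τ) / τ * ⟪Ek, Xs - Y⟫
    = (‖Y - Xs‖ ^ 2 - 2 * η * ⟪Y - Xs, W⟫ + η ^ 2 * ‖W‖ ^ 2
        + (1 - γ * η) * (η ^ 2 * ‖W - Wh‖ ^ 2) + 2 * η / (c₁ * τ) * ‖Y - (Y - η • Wh)‖ ^ 2)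
      + ⟪(-(2 * η / τ)) • (Y - Xs) + (2 * η ^ 2) • W
          + (2 * (1 - γ * η) * η ^ 2) • (W - Wh), Ek⟫
      + η ^ 2 * (2 - γ * η) * ‖Ek‖ ^ 2 := by
  rw [show Y - η • (W + Ek) - Xs = (Y - Xs) - η • (W + Ek) from by abel]
  rw [show Y - η • (W + Ek) - (Y - η • Wh) = -(η • ((W - Wh) + Ek)) from by
    rw [smul_add, smul_add, smul_sub]; abel]
  rw [show Y - η • Wh - Y = -(η • Wh) from by abel]
  rw [show Y - (Y - η • Wh) = η • Wh from by abel]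
  rw [show Xs - Y = -(Y - Xs) from by abel]
  rw [norm_neg, norm_neg, inner_neg_right]
  rw [norm_sub_sq_real (Y - Xs) (η • (W + Ek))]
  rw [normsq_smul η (W + Ek), normsq_smul η ((W - Wh) + Ek), normsq_smul η Wh]
  rw [norm_add_sq_real W Ek, norm_add_sq_real (W - Wh) Ek]
  rw [real_inner_smul_right, inner_add_right]
  rw [inner_add_left, inner_add_left, real_inner_smul_left, real_inner_smul_left,
    real_inner_smul_left]
  rw [real_inner_comm Ek (Y - Xs)]
  field_simp
  ring

end helpers

section condexp
variable {Ω : Type*} {m m0 : MeasurableSpace Ω} {μ : Measure Ω} {n : ℕ}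

local notation "E'" => EuclideanSpace ℝ (Fin n)

lemma integrable_inner2 {f g : Ω → E'} (hf : MemLp f 2 μ) (hg : MemLp g 2 μ) :
    Integrable (fun ω => ⟪f ω, g ω⟫) μ := by
  have h := L2.integrable_inner (𝕜 := ℝ) (hf.toLp f) (hg.toLp g)
  refine h.congr ?_
  filter_upwards [hf.coeFn_toLp, hg.coeFn_toLp] with ω h1 h2
  rw [h1, h2]

lemma integrable_mul2 {f g : Ω → ℝ} (hf : MemLp f 2 μ) (hg : MemLp g 2 μ) :
    Integrable (fun ω => f ω * g ω) μ := by
  have h := L2.integrable_inner (𝕜 := ℝ) (hf.toLp f) (hg.toLp g)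
  refine h.congr ?_
  filter_upwards [hf.coeFn_toLp, hg.coeFn_toLp] with ω h1 h2
  rw [h1, h2]
  simp [RCLike.inner_apply, mul_comm]

lemma integrable_normsq {f : Ω → E'} (hf : MemLp f 2 μ) :
    Integrable (fun ω => ‖f ω‖ ^ 2) μ := by
  refine (integrable_inner2 hf hf).congr ?_
  filter_upwards with ω
  rw [real_inner_self_eq_norm_sq]

lemma condexp_const_inner (hm : m ≤ m0) [SigmaFinite (μ.trim hm)]
    {f : Ω → E'} (hfi : Integrable f μ) (b : E') :
    μ[fun ω => ⟪b, f ω⟫|m] =ᵐ[μ] fun ω => ⟪b, (μ[f|m]) ω⟫ := by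
  refine (ae_eq_condExp_of_forall_setIntegral_eq hm (hfi.const_inner b)
    (fun s _ _ => (integrable_condExp.const_inner b).integrableOn)
    (fun s hs hμs => ?_)
    ((show StronglyMeasurable[m] (fun ω => ⟪b, (μ[f|m]) ω⟫) from
      stronglyMeasurable_const.inner stronglyMeasurable_condExp).aestronglyMeasurable)).symm
  calc ∫ x in s, ⟪b, (μ[f|m]) x⟫ ∂μ
      = ⟪b, ∫ x in s, (μ[f|m]) x ∂μ⟫ := integral_inner integrable_condExp.integrableOn b
    _ = ⟪b, ∫ x in s, f x ∂μ⟫ := by rw [setIntegral_condExp hm hfi hs]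
    _ = ∫ x in s, ⟪b, f x⟫ ∂μ := (integral_inner hfi.integrableOn b).symm

lemma euclid_inner_coord (a b : E') :
    ⟪a, b⟫ = ∑ i, ⟪EuclideanSpace.single i (1:ℝ), a⟫ * ⟪EuclideanSpace.single i (1:ℝ), b⟫ := by
  simp only [EuclideanSpace.inner_single_left, map_one, one_mul]
  rw [PiLp.inner_apply]; exact Finset.sum_congr rfl fun i _ => by simp [mul_comm]

/-- Pull-out property for inner products with an `m`-measurable left factor. -/
lemma condexp_inner_left [IsFiniteMeasure μ] (hm : m ≤ m0)
    {g f : Ω → E'} (hgm : StronglyMeasurable[m] g)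
    (hg : MemLp g 2 μ) (hf : MemLp f 2 μ) :
    μ[fun ω => ⟪g ω, f ω⟫|m] =ᵐ[μ] fun ω => ⟪g ω, (μ[f|m]) ω⟫ := by
  haveI : SigmaFinite (μ.trim hm) := sigmaFiniteTrim_mono _ le_rfl
  have hfi : Integrable f μ := hf.integrable one_le_two
  set G : Fin n → Ω → ℝ :=
    fun i ω => ⟪EuclideanSpace.single i (1:ℝ), g ω⟫ * ⟪EuclideanSpace.single i (1:ℝ), f ω⟫
    with hG
  have hrw : (fun ω => ⟪g ω, f ω⟫) = ∑ i, G i := by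
    funext ω
    rw [Finset.sum_apply]
    exact euclid_inner_coord _ _
  have hint : ∀ i : Fin n, Integrable (G i) μ :=
    fun i => integrable_mul2 (hg.const_inner _) (hf.const_inner _)
  have h1 : μ[fun ω => ⟪g ω, f ω⟫|m] =ᵐ[μ] ∑ i, μ[G i|m] := by
    rw [hrw]
    exact condExp_finset_sum (fun i _ => hint i) m
  have h2 : ∀ i : Fin n, μ[G i|m] =ᵐ[μ]
      fun ω => ⟪EuclideanSpace.single i (1:ℝ), g ω⟫
        * ⟪EuclideanSpace.single i (1:ℝ), (μ[f|m]) ω⟫ := by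
    intro i
    have hsm : StronglyMeasurable[m] fun ω => ⟪EuclideanSpace.single i (1:ℝ), g ω⟫ :=
      stronglyMeasurable_const.inner hgm
    have hmul := condExp_mul_of_stronglyMeasurable_left hsm
      (show Integrable ((fun ω => ⟪EuclideanSpace.single i (1:ℝ), g ω⟫) *
          fun ω => ⟪EuclideanSpace.single i (1:ℝ), f ω⟫) μ from hint i)
      (hfi.const_inner _)
    refine hmul.trans ?_
    filter_upwards [condexp_const_inner hm hfi (EuclideanSpace.single i (1:ℝ))] with ω hω
    simp only [Pi.mul_apply]
    rw [hω]
  have hall : ∀ᵐ ω ∂μ, ∀ i : Fin n, (μ[G i|m]) ω =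
      ⟪EuclideanSpace.single i (1:ℝ), g ω⟫ * ⟪EuclideanSpace.single i (1:ℝ), (μ[f|m]) ω⟫ :=
    ae_all_iff.2 fun i => h2 i
  filter_upwards [h1, hall] with ω hω1 hω2
  rw [hω1, Finset.sum_apply]
  rw [euclid_inner_coord (g ω) ((μ[f|m]) ω)]
  exact Finset.sum_congr rfl fun i _ => hω2 i

end condexp

/-- The intermediate function `Q_k` of the biased variance-reduced FRBS analysis. -/
noncomputable def Qfun {p : ℕ} (η γ c₁ τ : ℝ)
    (xstar yk xkm1 ykm1 ekm1 : EuclideanSpace ℝ (Fin p)) : ℝ :=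
  ‖yk - xstar‖ ^ 2 + (1 - γ * η) * ‖yk - xkm1‖ ^ 2
    + (2 * η / (c₁ * τ)) * ‖xkm1 - ykm1‖ ^ 2
    + (2 * η * (1 - τ) / τ) * ⟪ekm1, xstar - ykm1⟫

/-- Inequality (6.9) of Lemma C.4: one-iteration property of `Q_k` for the VrFRBS recursion
with a biased variance-reduced estimator (first condition of Definition 2). -/
theorem stmt_12 {p : ℕ} {Ω : Type*} {𝔉 : MeasurableSpace Ω} (μ : Measure Ω)
    [IsProbabilityMeasure μ] (ℱ : Filtration ℕ 𝔉)
    (η L ρ γ c₁ τ : ℝ)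
    (xstar : EuclideanSpace ℝ (Fin p))
    (x y w what e : ℕ → Ω → EuclideanSpace ℝ (Fin p))
    (hη : 0 < η) (hγ : 0 < γ) (hc₁ : 0 < c₁) (hL : 0 ≤ L) (hρ : 0 ≤ ρ)
    (hτ0 : 0 < τ) (hτ1 : τ ≤ 1)
    -- measurability
    (hx_meas : ∀ k, StronglyMeasurable[ℱ k] (x k))
    (hy_meas : ∀ k, StronglyMeasurable[ℱ k] (y k))
    (hw_meas : ∀ k, StronglyMeasurable[ℱ k] (w k))
    (hwhat_meas : ∀ k, StronglyMeasurable[ℱ k] (what k))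
    (he_meas : ∀ k, StronglyMeasurable[ℱ (k + 1)] (e k))
    -- integrability
    (hx_L2 : ∀ k, MemLp (x k) 2 μ) (hy_L2 : ∀ k, MemLp (y k) 2 μ)
    (hw_L2 : ∀ k, MemLp (w k) 2 μ) (hwhat_L2 : ∀ k, MemLp (what k) 2 μ)
    (he_L2 : ∀ k, MemLp (e k) 2 μ)
    -- VrFRBS recursion (with the convention `x (−1) = x (−2) = x 0` via truncated subtraction)
    (hrec_x : ∀ k ω, x k ω = y k ω - η • what k ω)
    (hrec_y : ∀ k ω, y (k + 1) ω = y k ω - η • (w k ω + e k ω))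
    (hLip : ∀ k ω, ‖w k ω - what k ω‖ ≤ L * ‖x k ω - x (k - 1) ω‖)
    (hMinty : ∀ k ω, ⟪w k ω, x k ω - xstar⟫ ≥ -ρ * ‖w k ω‖ ^ 2)
    -- first condition of Definition 2 (with the convention `e (−1) = 0`)
    (hbias : ∀ k, μ[e k | ℱ k] =ᵐ[μ]
      fun ω => (1 - τ) • (if k = 0 then (0 : EuclideanSpace ℝ (Fin p)) else e (k - 1) ω)) :
    ∀ (k : ℕ) (c c₂ : ℝ), 0 < c → 0 < c₂ →
      ∀ᵐ ω ∂μ,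
        (μ[fun a => Qfun η γ c₁ τ xstar (y (k + 1) a) (x k a) (y k a) (e k a) | ℱ k]) ω ≤
          Qfun η γ c₁ τ xstar (y k ω) (x (k - 1) ω)
              (if k = 0 then x 0 ω else y (k - 1) ω)
              (if k = 0 then 0 else e (k - 1) ω)
            - (1 - 2 * η / (c₁ * τ) - 4 * ρ / η - 2 / c₂
                - 2 * L ^ 2 * η * (c + 4 * ρ + 1 / γ + 2 * η / c₂)) * ‖y k ω - x k ω‖ ^ 2
            - (1 - γ * η - (2 * η / (c₁ * τ)
                + 2 * L ^ 2 * η * (c + 4 * ρ + 1 / γ + 2 * η / c₂)))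
              * ‖y k ω - x (k - 1) ω‖ ^ 2
            - c * L ^ 2 * η * ‖x k ω - x (k - 1) ω‖ ^ 2
            + η * (2 * η + c₁ / τ + c₂ * η) * (μ[fun a => ‖e k a‖ ^ 2 | ℱ k]) ω := by
  intro k c c₂ hc hc₂
  have hm : ℱ k ≤ 𝔉 := ℱ.le k
  haveI : SigmaFinite (μ.trim hm) := sigmaFiniteTrim_mono _ le_rfl
  -- measurability and integrability of the `e (k-1)` term
  have hebarSM : StronglyMeasurable[ℱ k]
      (fun ω => if k = 0 then (0 : EuclideanSpace ℝ (Fin p)) else e (k - 1) ω) := by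
    by_cases hk0 : k = 0
    · simp only [if_pos hk0]; exact stronglyMeasurable_const
    · simp only [if_neg hk0]
      have h := he_meas (k - 1)
      rwa [Nat.sub_add_cancel (Nat.one_le_iff_ne_zero.mpr hk0)] at h
  have hebarL2 : MemLp
      (fun ω => if k = 0 then (0 : EuclideanSpace ℝ (Fin p)) else e (k - 1) ω) 2 μ := by
    by_cases hk0 : k = 0
    · simp only [if_pos hk0]; exact memLp_const 0
    · simp only [if_neg hk0]; exact he_L2 (k - 1)
  -- components
  set Gv : Ω → EuclideanSpace ℝ (Fin p) := fun a =>
    (-(2 * η / τ)) • (y k a - xstar) + (2 * η ^ 2) • w k a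
      + (2 * (1 - γ * η) * η ^ 2) • (w k a - what k a) with hGv
  set Ff : Ω → ℝ := fun a =>
    ‖y k a - xstar‖ ^ 2 - 2 * η * ⟪y k a - xstar, w k a⟫ + η ^ 2 * ‖w k a‖ ^ 2
      + (1 - γ * η) * (η ^ 2 * ‖w k a - what k a‖ ^ 2)
      + 2 * η / (c₁ * τ) * ‖y k a - x k a‖ ^ 2 with hFf
  set Gf : Ω → ℝ := fun a => ⟪Gv a, e k a⟫ with hGf
  set Hf : Ω → ℝ := fun a => η ^ 2 * (2 - γ * η) * ‖e k a‖ ^ 2 with hHf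
  have hyx : MemLp (fun a => y k a - xstar) 2 μ := (hy_L2 k).sub (memLp_const xstar)
  have hwwh : MemLp (fun a => w k a - what k a) 2 μ := (hw_L2 k).sub (hwhat_L2 k)
  have hyxk : MemLp (fun a => y k a - x k a) 2 μ := (hy_L2 k).sub (hx_L2 k)
  have hGvL2 : MemLp Gv 2 μ := by
    rw [hGv]
    have := ((hyx.const_smul (-(2 * η / τ))).add ((hw_L2 k).const_smul (2 * η ^ 2))).add
      (hwwh.const_smul (2 * (1 - γ * η) * η ^ 2))
    exact this
  have hGvSM : StronglyMeasurable[ℱ k] Gv := by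
    rw [hGv]
    have := ((((hy_meas k).sub (stronglyMeasurable_const (b := xstar))).const_smul
      (-(2 * η / τ))).add ((hw_meas k).const_smul (2 * η ^ 2))).add
      (((hw_meas k).sub (hwhat_meas k)).const_smul (2 * (1 - γ * η) * η ^ 2))
    exact this
  have hFfSM : StronglyMeasurable[ℱ k] Ff := by
    rw [hFf]
    have t1 : StronglyMeasurable[ℱ k] (fun a => ‖y k a - xstar‖ ^ 2) :=
      ((hy_meas k).sub stronglyMeasurable_const).norm.pow 2
    have t2 : StronglyMeasurable[ℱ k] (fun a => 2 * η * ⟪y k a - xstar, w k a⟫) :=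
      stronglyMeasurable_const.mul (((hy_meas k).sub stronglyMeasurable_const).inner (hw_meas k))
    have t3 : StronglyMeasurable[ℱ k] (fun a => η ^ 2 * ‖w k a‖ ^ 2) :=
      stronglyMeasurable_const.mul ((hw_meas k).norm.pow 2)
    have t4 : StronglyMeasurable[ℱ k]
        (fun a => (1 - γ * η) * (η ^ 2 * ‖w k a - what k a‖ ^ 2)) :=
      stronglyMeasurable_const.mul (stronglyMeasurable_const.mul
        (((hw_meas k).sub (hwhat_meas k)).norm.pow 2))
    have t5 : StronglyMeasurable[ℱ k]
        (fun a => 2 * η / (c₁ * τ) * ‖y k a - x k a‖ ^ 2) :=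
      stronglyMeasurable_const.mul (((hy_meas k).sub (hx_meas k)).norm.pow 2)
    exact (((t1.sub t2).add t3).add t4).add t5
  have hFfInt : Integrable Ff μ := by
    rw [hFf]
    have i1 := integrable_normsq hyx
    have i2 := (integrable_inner2 hyx (hw_L2 k)).const_mul (2 * η)
    have i3 := (integrable_normsq (hw_L2 k)).const_mul (η ^ 2)
    have i4 := ((integrable_normsq hwwh).const_mul (η ^ 2)).const_mul (1 - γ * η)
    have i5 := (integrable_normsq hyxk).const_mul (2 * η / (c₁ * τ))
    exact (((i1.sub i2).add i3).add i4).add i5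
  have hGfInt : Integrable Gf μ := by
    rw [hGf]
    exact integrable_inner2 hGvL2 (he_L2 k)
  have hHfInt : Integrable Hf μ := by
    rw [hHf]
    exact (integrable_normsq (he_L2 k)).const_mul (η ^ 2 * (2 - γ * η))
  -- pointwise decomposition
  have hQdecomp : (fun a => Qfun η γ c₁ τ xstar (y (k + 1) a) (x k a) (y k a) (e k a))
      = (Ff + Gf) + Hf := by
    funext a
    simp only [Pi.add_apply, hFf, hGf, hGv, hHf, Qfun]
    rw [hrec_y k a, hrec_x k a]
    exact stepA η γ c₁ τ hτ0.ne' xstar (y k a) (w k a) (what k a) (e k a)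
  -- conditional expectation computation
  have c3 : μ[Ff|ℱ k] = Ff := condExp_of_stronglyMeasurable hm hFfSM hFfInt
  have c4 : μ[Gf|ℱ k] =ᵐ[μ] fun ω => ⟪Gv ω,
      (1 - τ) • (if k = 0 then (0 : EuclideanSpace ℝ (Fin p)) else e (k - 1) ω)⟫ := by
    have cpl := condexp_inner_left hm hGvSM hGvL2 (he_L2 k)
    refine cpl.trans ?_
    filter_upwards [hbias k] with ω hb
    rw [hb]
  have c5 : μ[Hf|ℱ k] =ᵐ[μ]
      fun ω => η ^ 2 * (2 - γ * η) * (μ[fun a => ‖e k a‖ ^ 2|ℱ k]) ω := by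
    have heq : Hf = (η ^ 2 * (2 - γ * η)) • (fun a => ‖e k a‖ ^ 2) := rfl
    rw [heq]
    refine (condExp_smul (μ := μ) (m := ℱ k) (η ^ 2 * (2 - γ * η))
      (fun a => ‖e k a‖ ^ 2)).trans ?_
    filter_upwards with ω
    simp [Pi.smul_apply, smul_eq_mul]
  have hast : μ[(Ff + Gf) + Hf|ℱ k] =ᵐ[μ] fun ω => Ff ω
      + ⟪Gv ω, (1 - τ) • (if k = 0 then (0 : EuclideanSpace ℝ (Fin p)) else e (k - 1) ω)⟫
      + η ^ 2 * (2 - γ * η) * (μ[fun a => ‖e k a‖ ^ 2|ℱ k]) ω := by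
    refine (condExp_add (hFfInt.add hGfInt) hHfInt (ℱ k)).trans ?_
    have c2 := condExp_add (μ := μ) (m := ℱ k) hFfInt hGfInt
    filter_upwards [c2, c4, c5] with ω h2 h4 h5
    simp only [Pi.add_apply]
    rw [h2]
    simp only [Pi.add_apply, c3]
    rw [h4, h5]
  -- conditional Jensen
  set h0 : Ω → EuclideanSpace ℝ (Fin p) := fun ω =>
    (1 - τ) • (if k = 0 then (0 : EuclideanSpace ℝ (Fin p)) else e (k - 1) ω) with hh0
  have h0SM : StronglyMeasurable[ℱ k] h0 := by rw [hh0]; exact hebarSM.const_smul (1 - τ)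
  have h0L2 : MemLp h0 2 μ := by rw [hh0]; exact hebarL2.const_smul (1 - τ)
  have hjdecomp : (fun a => ‖e k a - h0 a‖ ^ 2)
      = ((fun a => ‖e k a‖ ^ 2)
        + ((fun a => (-2) * ⟪h0 a, e k a⟫) + (fun a => ‖h0 a‖ ^ 2))) := by
    funext a
    simp only [Pi.add_apply]
    rw [norm_sub_sq_real, real_inner_comm]
    ring
  have hjint1 := integrable_normsq (μ := μ) (he_L2 k)
  have hjint2 : Integrable (fun a => (-2) * ⟪h0 a, e k a⟫) μ :=
    (integrable_inner2 h0L2 (he_L2 k)).const_mul (-2)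
  have hjint3 := integrable_normsq (μ := μ) h0L2
  have hj0 : (0 : Ω → ℝ) ≤ᵐ[μ] μ[((fun a => ‖e k a‖ ^ 2)
      + ((fun a => (-2) * ⟪h0 a, e k a⟫) + (fun a => ‖h0 a‖ ^ 2)))|ℱ k] := by
    rw [← hjdecomp]
    exact condExp_nonneg (Eventually.of_forall fun a => sq_nonneg _)
  have hj1 := condExp_add (μ := μ) (m := ℱ k) hjint1 (hjint2.add hjint3)
  have hj2 := condExp_add (μ := μ) (m := ℱ k) hjint2 hjint3
  have hj3 : μ[fun a => (-2) * ⟪h0 a, e k a⟫|ℱ k] =ᵐ[μ]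
      fun ω => (-2) * ⟪h0 ω, h0 ω⟫ := by
    have heq : (fun a => (-2) * ⟪h0 a, e k a⟫) = (-2 : ℝ) • (fun a => ⟪h0 a, e k a⟫) := rfl
    rw [heq]
    refine (condExp_smul (μ := μ) (m := ℱ k) (-2 : ℝ) (fun a => ⟪h0 a, e k a⟫)).trans ?_
    filter_upwards [condexp_inner_left hm h0SM h0L2 (he_L2 k), hbias k] with ω hp hb
    simp only [Pi.smul_apply, smul_eq_mul]
    rw [hp, hb, hh0]
  have hj4 : μ[fun a => ‖h0 a‖ ^ 2|ℱ k] = fun a => ‖h0 a‖ ^ 2 :=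
    condExp_of_stronglyMeasurable hm (h0SM.norm.pow 2) hjint3
  have h5ae : ∀ᵐ ω ∂μ,
      ‖(1 - τ) • (if k = 0 then (0 : EuclideanSpace ℝ (Fin p)) else e (k - 1) ω)‖ ^ 2
        ≤ (μ[fun a => ‖e k a‖ ^ 2|ℱ k]) ω := by
    filter_upwards [hj0, hj1, hj2, hj3] with ω j0 j1 j2 j3
    have e0 : (0:ℝ) ≤ (μ[fun a => ‖e k a‖ ^ 2|ℱ k]) ω
        + ((-2) * ⟪h0 ω, h0 ω⟫ + ‖h0 ω‖ ^ 2) := by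
      have := j0
      rw [j1] at this
      simp only [Pi.zero_apply, Pi.add_apply] at this j2 ⊢
      rw [j2, j3, congrFun hj4 ω] at this
      exact this
    have einn : ⟪h0 ω, h0 ω⟫ = ‖h0 ω‖ ^ 2 := real_inner_self_eq_norm_sq _
    have hfin : ‖h0 ω‖ ^ 2 ≤ (μ[fun a => ‖e k a‖ ^ 2|ℱ k]) ω := by
      rw [einn] at e0; linarith
    rw [hh0] at hfin
    exact hfin
  -- final assembly
  rw [hQdecomp]
  filter_upwards [hast, h5ae] with ω hQ h5'
  rw [hQ]
  simp only [Qfun, hFf, hGv]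
  exact key_ineq_s12 η L ρ γ c₁ τ c c₂ ((μ[fun a => ‖e k a‖ ^ 2|ℱ k]) ω)
    hη hγ hc₁ hL hρ hτ0 hc hc₂ xstar (y k ω) (x k ω) (x (k - 1) ω)
    (if k = 0 then x 0 ω else y (k - 1) ω)
    (if k = 0 then 0 else e (k - 1) ω) (w k ω) (what k ω)
    (hrec_x k ω) (hLip k ω) (hMinty k ω) h5'
end

section
/- Let η > 0, γ > 0, c₁ > 0 and τ ∈ (0,1] be real numbers and let x⋆, y, x′, y′, e be vectors in ℝ^p. Define Q := ‖y − x⋆‖² + (1 − γη)‖y − x′‖² + (2η/(c₁τ))‖x′ − y′‖² + (2η(1 − τ)/τ)⟨e, x⋆ − y′⟩. Then Q ≥ (3/4)‖y − x⋆‖² + ((1 − 2γη)/2)‖y − x′‖² + (2η/(c₁τ) − 1/2)‖x′ − y′‖² − (8(1 − τ)²η²/τ²)‖e‖². (Lower bound (6.10) of Lemma C.4.) -/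
open scoped RealInnerProductSpace

/-- Lower bound (6.10) of Lemma C.4 on the intermediate function `Q`. -/
theorem stmt_13 {p : ℕ} (η γ c₁ τ : ℝ) (hη : 0 < η) (hγ : 0 < γ) (hc₁ : 0 < c₁)
    (hτ0 : 0 < τ) (hτ1 : τ ≤ 1)
    (xstar y x' y' e : EuclideanSpace ℝ (Fin p)) :
    ‖y - xstar‖ ^ 2 + (1 - γ * η) * ‖y - x'‖ ^ 2
        + (2 * η / (c₁ * τ)) * ‖x' - y'‖ ^ 2
        + (2 * η * (1 - τ) / τ) * ⟪e, xstar - y'⟫ ≥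
      (3 / 4) * ‖y - xstar‖ ^ 2 + ((1 - 2 * γ * η) / 2) * ‖y - x'‖ ^ 2
        + (2 * η / (c₁ * τ) - 1 / 2) * ‖x' - y'‖ ^ 2
        - (8 * (1 - τ) ^ 2 * η ^ 2 / τ ^ 2) * ‖e‖ ^ 2 := by
  set β : ℝ := 2 * η * (1 - τ) / τ with hβ
  have hβ0 : 0 ≤ β := by
    apply div_nonneg _ hτ0.le
    nlinarith
  have hβ2 : 8 * (1 - τ) ^ 2 * η ^ 2 / τ ^ 2 = 2 * β ^ 2 := by
    rw [hβ]
    ring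
  have hsplit : (xstar - y' : EuclideanSpace ℝ (Fin p))
      = -(y - xstar) + (y - x') + (x' - y') := by abel
  have hinner : ⟪e, xstar - y'⟫ = -⟪e, y - xstar⟫ + ⟪e, y - x'⟫ + ⟪e, x' - y'⟫ := by
    rw [hsplit, inner_add_right, inner_add_right, inner_neg_right]
  have h1 : ⟪e, y - xstar⟫ ≤ ‖e‖ * ‖y - xstar‖ :=
    (le_abs_self _).trans (abs_real_inner_le_norm e _)
  have h2 : -(‖e‖ * ‖y - x'‖) ≤ ⟪e, y - x'⟫ :=
    (neg_le_neg (abs_real_inner_le_norm e _)).trans (neg_abs_le _)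
  have h3 : -(‖e‖ * ‖x' - y'‖) ≤ ⟪e, x' - y'⟫ :=
    (neg_le_neg (abs_real_inner_le_norm e _)).trans (neg_abs_le _)
  rw [hinner, hβ2]
  nlinarith [sq_nonneg (β * ‖e‖ - ‖y - xstar‖ / 2), sq_nonneg (β * ‖e‖ - ‖y - x'‖),
    sq_nonneg (β * ‖e‖ - ‖x' - y'‖), mul_le_mul_of_nonneg_left h1 hβ0,
    mul_le_mul_of_nonneg_left h2 hβ0, mul_le_mul_of_nonneg_left h3 hβ0]
end
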